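/- arXiv:math/0211188 — 5 statements merged into one kernel-verified Lean document; each statement's English description precedes it below -/
import Mathlib

section
/- Let B be a basis of the lattice path matroid M[P,Q] with the natural order on [m+r], and let P(B) be the associated lattice path. Then the internal activity i(B) equals the number of steps at which P(B) coincides with a North step of the upper path Q, and the external activity e(B) equals the number of steps at which P(B) coincides with an East step of the lower path P. Consequently the Tutte polynomial t(M[P,Q]; x, y) = Σ_B x^{i(B)} y^{e(B)} is the joint generating function of these two lattice path statistics over all paths from (0,0) to (m,r) staying between P and Q. -/
attribute [local instance] Classical.propDecidable

/-- `B` is a transversal of the interval system `(N_j = [lo j, hi j])_{j : Fin r}`;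
for a lattice path matroid these transversals are exactly the bases. -/
def IsTransLH (r : ℕ) (lo hi : Fin r → ℕ) (B : Finset ℕ) : Prop :=
  ∃ f : Fin r ↪ ℕ, (∀ j : Fin r, lo j ≤ f j ∧ f j ≤ hi j) ∧ Finset.univ.map f = B

/-- The internal activity of the basis `B` with respect to the natural order on the
ground set `[1, N]`: the number of `b ∈ B` such that no `y ∉ B` in the ground set
with `y < b` makes `(B - b) ∪ y` a basis. -/
noncomputable def intAct (N r : ℕ) (lo hi : Fin r → ℕ) (B : Finset ℕ) : ℕ :=
  (B.filter (fun b => ¬ ∃ y ∈ Finset.Icc 1 N \ B, y < b ∧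
    IsTransLH r lo hi (insert y (B.erase b)))).card

/-- The external activity of the basis `B` with respect to the natural order on the
ground set `[1, N]`: the number of `e ∉ B` in the ground set such that no `y ∈ B`
with `y < e` makes `(B - y) ∪ e` a basis. -/
noncomputable def extAct (N r : ℕ) (lo hi : Fin r → ℕ) (B : Finset ℕ) : ℕ :=
  ((Finset.Icc 1 N \ B).filter (fun e => ¬ ∃ y ∈ B, y < e ∧
    IsTransLH r lo hi (insert e (B.erase y)))).card


set_option linter.unusedVariables false

namespace LPM
open Finset

variable {r : ℕ}


lemma card_filt_lt (j : Fin r) :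
    (Finset.univ.filter (fun t : Fin r => t < j)).card = j.val := by
  rw [show Finset.univ.filter (fun t : Fin r => t < j) = Finset.Iio j by
    ext t; simp]
  exact Fin.card_Iio j

lemma card_filt_ge (j : Fin r) :
    (Finset.univ.filter (fun t : Fin r => j ≤ t)).card = r - j.val := by
  rw [show Finset.univ.filter (fun t : Fin r => j ≤ t) = Finset.Ici j by
    ext t; simp]
  exact Fin.card_Ici j

lemma card_filt_gt (j : Fin r) :
    (Finset.univ.filter (fun t : Fin r => j < t)).card = r - 1 - j.val := by
  rw [show Finset.univ.filter (fun t : Fin r => j < t) = Finset.Ioi j by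
    ext t; simp]
  rw [Fin.card_Ioi j]

lemma card_filter_map (f : Fin r ↪ ℕ) (p : ℕ → Prop) [DecidablePred p] :
    ((Finset.univ.map f).filter p).card
      = (Finset.univ.filter (fun t => p (f t))).card := by
  classical
  rw [Finset.filter_map, Finset.card_map]
  congr 1

/-- downward closed subsets of `Fin r` are initial segments -/
lemma dc_mem_iff {D : Finset (Fin r)} (h : ∀ a b : Fin r, a ≤ b → b ∈ D → a ∈ D)
    (t : Fin r) : t ∈ D ↔ (t : ℕ) < D.card := by
  constructor
  · intro ht
    have hsub : Finset.Iic t ⊆ D := fun s hs => h s t (Finset.mem_Iic.mp hs) ht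
    have := Finset.card_le_card hsub
    rw [Fin.card_Iic] at this; omega
  · intro ht
    by_contra hnot
    have hsub : D ⊆ Finset.Iio t := by
      intro s hs
      rw [Finset.mem_Iio]
      by_contra hst
      exact hnot (h t s (le_of_not_gt hst) hs)
    have := Finset.card_le_card hsub
    rw [Fin.card_Iio] at this; omega

/-- for strictly monotone `f`, `f t < x` iff `t` is below the count of values `< x`. -/
lemma sm_lt_iff {f : Fin r → ℕ} (hf : Monotone f) (x : ℕ) (t : Fin r) :
    f t < x ↔ (t : ℕ) < (Finset.univ.filter (fun s => f s < x)).card := by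
  have := dc_mem_iff (D := Finset.univ.filter (fun s : Fin r => f s < x))
    (fun a b hab hb => by
      simp only [Finset.mem_filter, Finset.mem_univ, true_and] at *
      exact lt_of_le_of_lt (hf hab) hb) t
  simpa using this

lemma sm_gap {f : Fin r → ℕ} (hf : StrictMono f) {a b : Fin r} (h : a ≤ b) :
    f a + ((b : ℕ) - (a : ℕ)) ≤ f b := by
  obtain ⟨d, hd⟩ : ∃ d, (b:ℕ) = (a:ℕ) + d := ⟨(b:ℕ) - a, by omega⟩
  clear h
  induction d generalizing b with
  | zero => have : a = b := Fin.ext (by omega); subst this; omega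
  | succ n ih =>
      have hb1 : ((b:ℕ) - 1 : ℕ) < r := by omega
      have h1 : f a + ((⟨(b:ℕ)-1, hb1⟩ : Fin r) : ℕ) - (a:ℕ) + 0 ≤ f ⟨(b:ℕ)-1, hb1⟩ := by
        have := ih (b := ⟨(b:ℕ)-1, hb1⟩) (by simp; omega)
        simp at this ⊢
        omega
      have h2 : f ⟨(b:ℕ)-1, hb1⟩ < f b := hf (by
        rw [Fin.lt_def]; simp; omega)
      simp at h1
      omega


variable {N : ℕ} {lo hi β : Fin r → ℕ} {B : Finset ℕ}


lemma trans_card (h : IsTransLH r lo hi B) : B.card = r := by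
  obtain ⟨f, -, hfB⟩ := h
  rw [← hfB, Finset.card_map, Finset.card_univ, Fintype.card_fin]

lemma bounds_of_trans (hlo : StrictMono lo) (hhi : StrictMono hi) (hβ : StrictMono β)
    (hB : Finset.univ.map ⟨β, hβ.injective⟩ = B) (h : IsTransLH r lo hi B) :
    ∀ j, lo j ≤ β j ∧ β j ≤ hi j := by
  obtain ⟨f, hf, hfB⟩ := h
  intro j
  constructor
  · by_contra hcon
    push_neg at hcon
    have hc1 : (B.filter (fun x => x < lo j)).card ≤ j.val := by
      rw [← hfB, card_filter_map]
      calc (Finset.univ.filter (fun t => f t < lo j)).card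
          ≤ (Finset.univ.filter (fun t : Fin r => t < j)).card := by
            apply Finset.card_le_card
            intro t ht
            simp only [Finset.mem_filter, Finset.mem_univ, true_and] at *
            exact hlo.lt_iff_lt.mp (lt_of_le_of_lt (hf t).1 ht)
        _ = j.val := card_filt_lt j
    have hc2 : (j:ℕ) < (B.filter (fun x => x < lo j)).card := by
      rw [← hB, card_filter_map]
      exact (sm_lt_iff hβ.monotone (lo j) j).mp hcon
    omega
  · by_contra hcon
    push_neg at hcon
    have hc1 : (B.filter (fun x => hi j < x)).card ≤ r - 1 - j.val := by
      rw [← hfB, card_filter_map]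
      calc (Finset.univ.filter (fun t => hi j < f t)).card
          ≤ (Finset.univ.filter (fun t : Fin r => j < t)).card := by
            apply Finset.card_le_card
            intro t ht
            simp only [Finset.mem_filter, Finset.mem_univ, true_and] at *
            exact hhi.lt_iff_lt.mp (lt_of_lt_of_le ht (hf t).2)
        _ = r - 1 - j.val := card_filt_gt j
    have hc2 : r - j.val ≤ (B.filter (fun x => hi j < x)).card := by
      rw [← hB, card_filter_map]
      calc r - j.val = (Finset.univ.filter (fun t : Fin r => j ≤ t)).card :=
            (card_filt_ge j).symm
        _ ≤ _ := by
            apply Finset.card_le_card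
            intro t ht
            simp only [Finset.mem_filter, Finset.mem_univ, true_and] at *
            exact lt_of_lt_of_le hcon (hβ.monotone ht)
    have := j.isLt
    omega

lemma mem_B (hβ : StrictMono β) (hB : Finset.univ.map ⟨β, hβ.injective⟩ = B) :
    ∀ x, x ∈ B ↔ ∃ t, β t = x := by
  intro x
  rw [← hB]
  simp [Finset.mem_map]

lemma int_no_witness (hlo : StrictMono lo) (hβ : StrictMono β)
    (hB : Finset.univ.map ⟨β, hβ.injective⟩ = B) (j : Fin r) (heq : lo j = β j) :
    ¬ ∃ y ∈ Finset.Icc 1 N \ B, y < β j ∧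
      IsTransLH r lo hi (insert y (B.erase (β j))) := by
  rintro ⟨y, hy, hylt, f, hf, hfC⟩
  have hyB : y ∉ B := (Finset.mem_sdiff.mp hy).2
  have hupper : ((insert y (B.erase (β j))).filter (fun x => x < lo j)).card ≤ j.val := by
    rw [← hfC, card_filter_map]
    calc (Finset.univ.filter (fun t => f t < lo j)).card
        ≤ (Finset.univ.filter (fun t : Fin r => t < j)).card := by
          apply Finset.card_le_card
          intro t ht
          simp only [Finset.mem_filter, Finset.mem_univ, true_and] at *
          exact hlo.lt_iff_lt.mp (lt_of_le_of_lt (hf t).1 ht)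
      _ = j.val := card_filt_lt j
  have hlower : j.val + 1 ≤
      ((insert y (B.erase (β j))).filter (fun x => x < lo j)).card := by
    have hsub : insert y ((Finset.univ.filter (fun t : Fin r => t < j)).image (fun t => β t))
        ⊆ (insert y (B.erase (β j))).filter (fun x => x < lo j) := by
      intro x hx
      rcases Finset.mem_insert.mp hx with rfl | hx
      · exact Finset.mem_filter.mpr ⟨Finset.mem_insert_self _ _, heq ▸ hylt⟩
      · obtain ⟨t, ht, rfl⟩ := Finset.mem_image.mp hx
        simp only [Finset.mem_filter, Finset.mem_univ, true_and] at ht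
        refine Finset.mem_filter.mpr ⟨?_, ?_⟩
        · refine Finset.mem_insert_of_mem (Finset.mem_erase.mpr ⟨?_, ?_⟩)
          · exact fun hc => absurd (hβ.injective hc) (ne_of_lt ht)
          · exact (mem_B hβ hB _).mpr ⟨t, rfl⟩
        · rw [heq]; exact hβ ht
    have hcard : (insert y ((Finset.univ.filter (fun t : Fin r => t < j)).image
        (fun t => β t))).card = j.val + 1 := by
      rw [Finset.card_insert_of_notMem, Finset.card_image_of_injective _ hβ.injective,
        card_filt_lt]
      intro hc
      obtain ⟨t, -, ht⟩ := Finset.mem_image.mp hc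
      exact hyB ((mem_B hβ hB _).mpr ⟨t, ht⟩)
    calc j.val + 1 = _ := hcard.symm
      _ ≤ _ := Finset.card_le_card hsub
  omega

lemma int_witness (hlo : StrictMono lo) (hβ : StrictMono β)
    (hB : Finset.univ.map ⟨β, hβ.injective⟩ = B)
    (hbd : ∀ t, lo t ≤ β t ∧ β t ≤ hi t)
    (hlo1 : ∀ t, 1 ≤ lo t) (hhiN : ∀ t, hi t ≤ N)
    (j : Fin r) (hneq : lo j < β j) :
    ∃ y ∈ Finset.Icc 1 N \ B, y < β j ∧
      IsTransLH r lo hi (insert y (B.erase (β j))) := by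
  set b := β j with hbdef
  have hmemB : ∀ t, β t ∈ B := fun t => (mem_B hβ hB _).mpr ⟨t, rfl⟩
  have hB1 : ∀ x ∈ B, 1 ≤ x := by
    intro x hx
    obtain ⟨t, rfl⟩ := (mem_B hβ hB _).mp hx
    exact le_trans (hlo1 t) (hbd t).1
  -- the candidate set is nonempty
  have hne : (Finset.Ico 1 b \ B).Nonempty := by
    rw [Finset.sdiff_nonempty]
    intro hsub
    have h1 : (B.filter (fun x => x < b)).card = j.val := by
      rw [← hB, card_filter_map]
      simp only [Function.Embedding.coeFn_mk]
      have : Finset.univ.filter (fun t : Fin r => β t < b)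
          = Finset.univ.filter (fun t : Fin r => t < j) := by
        ext t; simp [hbdef, hβ.lt_iff_lt]
      rw [this, card_filt_lt]
    have h2 : b - 1 ≤ (B.filter (fun x => x < b)).card := by
      calc b - 1 = (Finset.Ico 1 b).card := by rw [Nat.card_Ico]
        _ ≤ _ := by
            apply Finset.card_le_card
            intro x hx
            have := Finset.mem_Ico.mp hx
            exact Finset.mem_filter.mpr ⟨hsub hx, this.2⟩
    have h3 : 1 + j.val ≤ lo j := by
      have h0 : (0 : ℕ) < r := j.pos
      have := sm_gap hlo (a := ⟨0, h0⟩) (b := j) (by simp [Fin.le_def])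
      have := hlo1 ⟨0, h0⟩
      simp at *
      omega
    omega
  obtain ⟨y, hymem, hmax⟩ : ∃ y, y ∈ Finset.Ico 1 b \ B ∧
      ∀ x ∈ Finset.Ico 1 b \ B, x ≤ y :=
    ⟨_, Finset.max'_mem _ hne, fun x hx => Finset.le_max' _ x hx⟩
  rw [Finset.mem_sdiff, Finset.mem_Ico] at hymem
  obtain ⟨⟨hy1, hyb⟩, hyB⟩ := hymem
  have hbB : b ∈ B := hmemB j
  have hrun : ∀ x, y < x → x < b → x ∈ B := by
    intro x hx1 hx2
    by_contra hxB
    have := hmax x (Finset.mem_sdiff.mpr ⟨Finset.mem_Ico.mpr ⟨by omega, hx2⟩, hxB⟩)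
    omega
  -- the shift map
  set g : ℕ → ℕ := fun x => if y < x ∧ x ≤ b then x - 1 else x with hgdef
  have hginj : ∀ x1 ∈ B, ∀ x2 ∈ B, g x1 = g x2 → x1 = x2 := by
    intro x1 hx1 x2 hx2 hg
    have h11 : 1 ≤ x1 := hB1 _ hx1
    have h12 : 1 ≤ x2 := hB1 _ hx2
    have hne1 : x1 ≠ y := fun h => hyB (h ▸ hx1)
    have hne2 : x2 ≠ y := fun h => hyB (h ▸ hx2)
    simp only [hgdef] at hg
    split_ifs at hg <;> omega
  have hfinj : Function.Injective (fun t => g (β t)) := by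
    intro t1 t2 h
    exact hβ.injective (hginj _ (hmemB t1) _ (hmemB t2) h)
  -- bounds
  have hbounds : ∀ t, lo t ≤ g (β t) ∧ g (β t) ≤ hi t := by
    intro t
    by_cases hc : y < β t ∧ β t ≤ b
    · have hgt : g (β t) = β t - 1 := if_pos hc
      rw [hgt]
      refine ⟨?_, le_trans (by omega) (hbd t).2⟩
      rcases eq_or_lt_of_le hc.2 with heq | hlt
      · have : t = j := hβ.injective heq
        subst this
        omega
      · -- β t < b, run argument
        have htj : t < j := hβ.lt_iff_lt.mp hlt
        have hcount : b - β t ≤ j.val - t.val := by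
          have hsub : Finset.Icc (β t) b ⊆ B.filter (fun x => β t ≤ x ∧ x ≤ b) := by
            intro x hx
            rw [Finset.mem_Icc] at hx
            refine Finset.mem_filter.mpr ⟨?_, hx⟩
            rcases eq_or_lt_of_le hx.1 with heq | hlt1
            · exact heq ▸ hmemB t
            · rcases eq_or_lt_of_le hx.2 with heq2 | hlt2
              · exact heq2 ▸ hmemB j
              · exact hrun x (by omega) hlt2
          have hA : (B.filter (fun x => β t ≤ x ∧ x ≤ b)).card = j.val + 1 - t.val := by
            rw [← hB, card_filter_map]
            simp only [Function.Embedding.coeFn_mk]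
            have : Finset.univ.filter (fun s : Fin r => β t ≤ β s ∧ β s ≤ b)
                = Finset.univ.filter (fun s : Fin r => t ≤ s ∧ s ≤ j) := by
              ext s; simp [hbdef, hβ.le_iff_le]
            rw [this, show Finset.univ.filter (fun s : Fin r => t ≤ s ∧ s ≤ j)
                = Finset.Icc t j by ext s; simp, Fin.card_Icc]
          have := Finset.card_le_card hsub
          rw [hA, Nat.card_Icc] at this
          omega
        have hgap : lo t + (j.val - t.val) ≤ lo j := sm_gap hlo htj.le
        omega
    · rw [show g (β t) = β t from if_neg hc]
      exact hbd t
  -- image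
  have himgB : Finset.univ.image (fun t : Fin r => β t) = B := by
    rw [← hB, Finset.map_eq_image]
    rfl
  have himg : Finset.univ.map ⟨fun t => g (β t), hfinj⟩ = insert y (B.erase b) := by
    rw [Finset.map_eq_image]
    simp only [Function.Embedding.coeFn_mk]
    have h1 : Finset.univ.image (fun t : Fin r => g (β t)) = B.image g := by
      rw [← himgB, Finset.image_image]
      rfl
    rw [h1]
    ext x
    simp only [Finset.mem_image, Finset.mem_insert, Finset.mem_erase]
    constructor
    · rintro ⟨z, hz, rfl⟩
      by_cases hc : y < z ∧ z ≤ b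
      · rw [show g z = z - 1 from if_pos hc]
        rcases eq_or_lt_of_le (show y + 1 ≤ z by omega) with heq | hlt
        · left; omega
        · right
          have hz1 : z - 1 < b := by omega
          have : z - 1 ∈ B := hrun (z - 1) (by omega) hz1
          exact ⟨by omega, this⟩
      · rw [show g z = z from if_neg hc]
        right
        refine ⟨fun hzb => hc ⟨hzb ▸ hyb, hzb.le⟩, hz⟩
    · rintro (rfl | ⟨hxb, hxB⟩)
      · refine ⟨x + 1, ?_, ?_⟩
        · rcases eq_or_lt_of_le (show x + 1 ≤ b by omega) with heq | hlt
          · exact heq ▸ hbB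
          · exact hrun _ (by omega) hlt
        · rw [show g (x+1) = x + 1 - 1 from if_pos ⟨by omega, by omega⟩]
          omega
      · have hxy : x ≠ y := fun h => hyB (h ▸ hxB)
        by_cases hc : y < x ∧ x < b
        · refine ⟨x + 1, ?_, ?_⟩
          · rcases eq_or_lt_of_le (show x + 1 ≤ b by omega) with heq | hlt
            · exact heq ▸ hbB
            · exact hrun _ (by omega) hlt
          · rw [show g (x+1) = x + 1 - 1 from if_pos ⟨by omega, by omega⟩]
            omega
        · refine ⟨x, hxB, if_neg ?_⟩
          rintro ⟨h1, h2⟩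
          rcases eq_or_lt_of_le h2 with heq | hlt
          · exact hxb heq
          · exact hc ⟨h1, hlt⟩
  refine ⟨y, ?_, hyb, ⟨fun t => g (β t), hfinj⟩, hbounds, himg⟩
  rw [Finset.mem_sdiff, Finset.mem_Icc]
  exact ⟨⟨hy1, le_trans (le_of_lt hyb) (le_trans (hbd j).2 (hhiN j))⟩, hyB⟩

lemma ext_witness (hlo : StrictMono lo) (hβ : StrictMono β)
    (hB : Finset.univ.map ⟨β, hβ.injective⟩ = B)
    (hbd : ∀ t, lo t ≤ β t ∧ β t ≤ hi t)
    (e : ℕ) (heB : e ∉ B)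
    (hk : 0 < (Finset.univ.filter (fun t : Fin r => β t < e)).card)
    (hkr : (Finset.univ.filter (fun t : Fin r => β t < e)).card - 1 < r)
    (hle : e ≤ hi ⟨(Finset.univ.filter (fun t : Fin r => β t < e)).card - 1, hkr⟩) :
    ∃ y ∈ B, y < e ∧ IsTransLH r lo hi (insert e (B.erase y)) := by
  set k := (Finset.univ.filter (fun t : Fin r => β t < e)).card with hkdef
  set i : Fin r := ⟨k - 1, hkr⟩ with hidef
  have hmemB : ∀ t, β t ∈ B := fun t => (mem_B hβ hB _).mpr ⟨t, rfl⟩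
  have hye : β i < e := by
    rw [sm_lt_iff hβ.monotone, ← hkdef]
    simp [hidef]; omega
  have hfinj : Function.Injective (fun t => if t = i then e else β t) := by
    intro t1 t2 h
    simp only at h
    split_ifs at h with h1 h2 h2
    · rw [h1, h2]
    · exact absurd ((mem_B hβ hB _).mpr ⟨t2, h.symm⟩) heB
    · exact absurd ((mem_B hβ hB _).mpr ⟨t1, h⟩) heB
    · exact hβ.injective h
  refine ⟨β i, hmemB i, hye, ⟨fun t => if t = i then e else β t, hfinj⟩, ?_, ?_⟩
  · intro t
    simp only [Function.Embedding.coeFn_mk]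
    by_cases h : t = i
    · rw [if_pos h, h]
      exact ⟨le_trans (hbd i).1 hye.le, hle⟩
    · rw [if_neg h]
      exact hbd t
  · rw [Finset.map_eq_image]
    simp only [Function.Embedding.coeFn_mk]
    ext x
    simp only [Finset.mem_image, Finset.mem_insert, Finset.mem_erase, Finset.mem_univ,
      true_and]
    constructor
    · rintro ⟨t, rfl⟩
      by_cases h : t = i
      · rw [if_pos h]; left; rfl
      · rw [if_neg h]
        right
        exact ⟨fun hc => h (hβ.injective hc), hmemB t⟩
    · rintro (rfl | ⟨hxy, hxB⟩)
      · exact ⟨i, if_pos rfl⟩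
      · obtain ⟨t, rfl⟩ := (mem_B hβ hB _).mp hxB
        refine ⟨t, if_neg fun h => hxy (by rw [h])⟩

lemma ext_no_witness (hhi : StrictMono hi) (hβ : StrictMono β)
    (hB : Finset.univ.map ⟨β, hβ.injective⟩ = B)
    (hbd : ∀ t, lo t ≤ β t ∧ β t ≤ hi t)
    (e : ℕ) (heB : e ∉ B)
    (hcase : (Finset.univ.filter (fun t : Fin r => β t < e)).card = 0 ∨
      ∃ hkr : (Finset.univ.filter (fun t : Fin r => β t < e)).card - 1 < r,
        hi ⟨(Finset.univ.filter (fun t : Fin r => β t < e)).card - 1, hkr⟩ < e) :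
    ¬ ∃ y ∈ B, y < e ∧ IsTransLH r lo hi (insert e (B.erase y)) := by
  rintro ⟨y, hyB, hye, f, hf, hfC⟩
  set k := (Finset.univ.filter (fun t : Fin r => β t < e)).card with hkdef
  have hmemB : ∀ t, β t ∈ B := fun t => (mem_B hβ hB _).mpr ⟨t, rfl⟩
  have hkr' : k ≤ r := by
    calc k ≤ Finset.univ.card := Finset.card_filter_le _ _
      _ = r := by simp
  rcases hcase with hk0 | ⟨hkr, hlt⟩
  · obtain ⟨t, rfl⟩ := (mem_B hβ hB _).mp hyB
    have : (t : ℕ) < k := (sm_lt_iff hβ.monotone e t).mp hye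
    omega
  · set i : Fin r := ⟨k - 1, hkr⟩ with hidef
    have hk0 : 0 < k := by
      by_contra h
      have hk00 : k = 0 := by omega
      obtain ⟨t, rfl⟩ := (mem_B hβ hB _).mp hyB
      have : (t : ℕ) < k := (sm_lt_iff hβ.monotone e t).mp hye
      omega
    have hupper : ((insert e (B.erase y)).filter (fun x => hi i < x)).card ≤ r - k := by
      rw [← hfC, card_filter_map]
      calc (Finset.univ.filter (fun t => hi i < f t)).card
          ≤ (Finset.univ.filter (fun t : Fin r => i < t)).card := by
            apply Finset.card_le_card
            intro t ht
            simp only [Finset.mem_filter, Finset.mem_univ, true_and] at *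
            exact hhi.lt_iff_lt.mp (lt_of_lt_of_le ht (hf t).2)
        _ = r - 1 - i.val := card_filt_gt i
        _ ≤ r - k := by simp [hidef]; omega
    have hlower : r - k + 1 ≤
        ((insert e (B.erase y)).filter (fun x => hi i < x)).card := by
      have hsub : insert e ((Finset.univ.filter (fun t : Fin r => ¬ β t < e)).image
          (fun t => β t)) ⊆ (insert e (B.erase y)).filter (fun x => hi i < x) := by
        intro x hx
        rcases Finset.mem_insert.mp hx with rfl | hx
        · exact Finset.mem_filter.mpr ⟨Finset.mem_insert_self _ _, hlt⟩
        · obtain ⟨t, ht, rfl⟩ := Finset.mem_image.mp hx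
          simp only [Finset.mem_filter, Finset.mem_univ, true_and, not_lt] at ht
          have hne : β t ≠ e := fun h => heB (h ▸ hmemB t)
          refine Finset.mem_filter.mpr ⟨?_, ?_⟩
          · refine Finset.mem_insert_of_mem (Finset.mem_erase.mpr ⟨?_, hmemB t⟩)
            intro hc
            rw [hc] at ht
            omega
          · omega
      have hcardim : ((Finset.univ.filter (fun t : Fin r => ¬ β t < e)).image
          (fun t => β t)).card = r - k := by
        rw [Finset.card_image_of_injective _ hβ.injective]
        have := Finset.card_filter_add_card_filter_not
          (s := (Finset.univ : Finset (Fin r))) (p := fun t : Fin r => β t < e)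
        simp only [Finset.card_univ, Fintype.card_fin] at this
        omega
      have hcard : (insert e ((Finset.univ.filter (fun t : Fin r => ¬ β t < e)).image
          (fun t => β t))).card = r - k + 1 := by
        rw [Finset.card_insert_of_notMem, hcardim]
        intro hc
        obtain ⟨t, -, ht⟩ := Finset.mem_image.mp hc
        exact heB (ht ▸ hmemB t)
      calc r - k + 1 = _ := hcard.symm
        _ ≤ _ := Finset.card_le_card hsub
    omega

lemma filt_pred_card (hβ : StrictMono β) (hB : Finset.univ.map ⟨β, hβ.injective⟩ = B)
    (e : ℕ) (he : 1 ≤ e) :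
    (B.filter (fun x => x ≤ e - 1)).card
      = (Finset.univ.filter (fun t : Fin r => β t < e)).card := by
  rw [← hB, card_filter_map]
  congr 1
  ext t
  simp only [Finset.mem_filter, Finset.mem_univ, true_and, Function.Embedding.coeFn_mk]
  omega

lemma intAct_eq (hlo : StrictMono lo) (hhi : StrictMono hi) (hβ : StrictMono β)
    (hB : Finset.univ.map ⟨β, hβ.injective⟩ = B)
    (hbd : ∀ t, lo t ≤ β t ∧ β t ≤ hi t)
    (hlo1 : ∀ t, 1 ≤ lo t) (hhiN : ∀ t, hi t ≤ N)
    {Qs : Finset ℕ} (hQs : Finset.univ.map ⟨lo, hlo.injective⟩ = Qs) :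
    intAct N r lo hi B = (B.filter (fun b => b ∈ Qs ∧
      (B.filter (· ≤ b - 1)).card = (Qs.filter (· ≤ b - 1)).card)).card := by
  unfold intAct
  apply congrArg Finset.card
  ext b
  simp only [Finset.mem_filter]
  apply and_congr_right
  intro hb
  obtain ⟨j, rfl⟩ := (mem_B hβ hB _).mp hb
  have hb1 : 1 ≤ β j := le_trans (hlo1 j) (hbd j).1
  have hBcard : (B.filter (· ≤ β j - 1)).card = j.val := by
    rw [filt_pred_card hβ hB _ hb1]
    rw [show Finset.univ.filter (fun t : Fin r => β t < β j)
        = Finset.univ.filter (fun t : Fin r => t < j) by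
      ext t; simp [hβ.lt_iff_lt]]
    exact card_filt_lt j
  have hQcard : (Qs.filter (· ≤ β j - 1)).card
      = (Finset.univ.filter (fun t : Fin r => lo t < β j)).card :=
    filt_pred_card hlo hQs _ hb1
  constructor
  · intro hnw
    have heq : lo j = β j := by
      by_contra hne
      exact hnw (int_witness hlo hβ hB hbd hlo1 hhiN j
        (lt_of_le_of_ne (hbd j).1 hne))
    refine ⟨?_, ?_⟩
    · rw [← hQs]
      simp only [Finset.mem_map, Finset.mem_univ, Function.Embedding.coeFn_mk, true_and]
      exact ⟨j, heq⟩
    · rw [hBcard, hQcard]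
      rw [show Finset.univ.filter (fun t : Fin r => lo t < β j)
          = Finset.univ.filter (fun t : Fin r => t < j) by
        ext t; rw [← heq]; simp [hlo.lt_iff_lt]]
      exact (card_filt_lt j).symm
  · rintro ⟨hmem, hcard⟩
    rw [hBcard, hQcard] at hcard
    have hnotlt : ¬ lo j < β j := by
      intro hlt
      have := (sm_lt_iff hlo.monotone (β j) j).mp hlt
      omega
    exact int_no_witness hlo hβ hB j (le_antisymm (hbd j).1 (not_lt.mp hnotlt))

lemma extAct_eq (hlo : StrictMono lo) (hhi : StrictMono hi) (hβ : StrictMono β)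
    (hB : Finset.univ.map ⟨β, hβ.injective⟩ = B)
    (hbd : ∀ t, lo t ≤ β t ∧ β t ≤ hi t)
    (hlo1 : ∀ t, 1 ≤ lo t) (hhiN : ∀ t, hi t ≤ N)
    {Ps : Finset ℕ} (hPs : Finset.univ.map ⟨hi, hhi.injective⟩ = Ps) :
    extAct N r lo hi B = ((Finset.Icc 1 N \ B).filter (fun e => e ∉ Ps ∧
      (B.filter (· ≤ e - 1)).card = (Ps.filter (· ≤ e - 1)).card)).card := by
  unfold extAct
  apply congrArg Finset.card
  ext e
  simp only [Finset.mem_filter]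
  apply and_congr_right
  intro he
  rw [Finset.mem_sdiff, Finset.mem_Icc] at he
  obtain ⟨⟨he1, heN⟩, heB⟩ := he
  set k := (Finset.univ.filter (fun t : Fin r => β t < e)).card with hkdef
  set s := (Finset.univ.filter (fun t : Fin r => hi t < e)).card with hsdef
  have hkr : k ≤ r := by
    calc k ≤ Finset.univ.card := Finset.card_filter_le _ _
      _ = r := by simp
  have hsr : s ≤ r := by
    calc s ≤ Finset.univ.card := Finset.card_filter_le _ _
      _ = r := by simp
  have hkiff : ∀ t : Fin r, β t < e ↔ (t : ℕ) < k := fun t => sm_lt_iff hβ.monotone e t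
  have hsiff : ∀ t : Fin r, hi t < e ↔ (t : ℕ) < s := fun t => sm_lt_iff hhi.monotone e t
  have hBcard : (B.filter (· ≤ e - 1)).card = k := filt_pred_card hβ hB _ he1
  have hPcard : (Ps.filter (· ≤ e - 1)).card = s := filt_pred_card hhi hPs _ he1
  have hmemPs : ∀ x, x ∈ Ps ↔ ∃ t, hi t = x := mem_B hhi hPs
  have hcond : (e ∉ Ps ∧ (B.filter (· ≤ e - 1)).card = (Ps.filter (· ≤ e - 1)).card)
      ↔ (k = 0 ∨ ∃ hkr1 : k - 1 < r, hi ⟨k - 1, hkr1⟩ < e) := by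
    rw [hBcard, hPcard]
    constructor
    · rintro ⟨hnP, hks⟩
      rcases Nat.eq_zero_or_pos k with hk0 | hk0
      · exact Or.inl hk0
      · refine Or.inr ⟨by omega, ?_⟩
        rw [hsiff]
        simp
        omega
    · rintro (hk0 | ⟨hkr1, hlt⟩)
      · have hs0 : s = 0 := by
          by_contra hs0
          have hr0 : 0 < r := by omega
          have h1 : hi ⟨0, hr0⟩ < e := by rw [hsiff]; simp; omega
          have h2 : β ⟨0, hr0⟩ < e := lt_of_le_of_lt (hbd _).2 h1
          rw [hkiff] at h2
          omega
        refine ⟨?_, by omega⟩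
        rw [hmemPs]
        rintro ⟨t, ht⟩
        have : β t < e := by
          rcases lt_or_eq_of_le (hbd t).2 with h | h
          · omega
          · rw [h, ht]
            rcases lt_or_eq_of_le (le_of_not_gt (fun hc => by
              rw [hkiff] at hc; omega) : e ≤ β t) with h2 | h2
            · omega
            · exact absurd (h2 ▸ (mem_B hβ hB (β t)).mpr ⟨t, rfl⟩) (h2 ▸ heB)
        rw [hkiff] at this
        omega
      · have hik : ((⟨k - 1, hkr1⟩ : Fin r) : ℕ) < s := by rw [← hsiff]; exact hlt
        simp only at hik
        have hks : k ≤ s := by omega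
        have hsk : s ≤ k := by
          by_contra hc
          push_neg at hc
          have hkr2 : k < r := by omega
          have h1 : hi ⟨k, hkr2⟩ < e := by rw [hsiff]; simp; omega
          have h2 : β ⟨k, hkr2⟩ < e := lt_of_le_of_lt (hbd _).2 h1
          rw [hkiff] at h2
          simp at h2
        refine ⟨?_, by omega⟩
        rw [hmemPs]
        rintro ⟨t, ht⟩
        have hts : ¬ (t : ℕ) < s := by rw [← hsiff]; omega
        have htk : ¬ β t < e := by rw [hkiff]; omega
        have : β t = e := le_antisymm (ht ▸ (hbd t).2) (le_of_not_gt htk)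
        exact heB (this ▸ (mem_B hβ hB (β t)).mpr ⟨t, rfl⟩)
  rw [hcond]
  constructor
  · intro hnw
    by_contra hc
    push_neg at hc
    have hk0 : 0 < k := by
      rcases Nat.eq_zero_or_pos k with h | h
      · exact absurd h (fun h0 => by
          obtain ⟨h1, -⟩ := hc
          exact absurd h0 h1)
      · exact h
    obtain ⟨-, h2⟩ := hc
    have hkr1 : k - 1 < r := by omega
    have hle : e ≤ hi ⟨k - 1, hkr1⟩ := h2 hkr1
    exact hnw (ext_witness hlo hβ hB hbd e heB hk0 hkr1 hle)
  · intro hcase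
    exact ext_no_witness hhi hβ hB hbd e heB hcase

lemma oio_strictMono {r : ℕ} (S : Finset ℕ) (h : S.card = r) :
    StrictMono (fun t : Fin r => (S.orderIsoOfFin h t : ℕ)) := by
  intro a b hab
  simp only [Finset.coe_orderIsoOfFin_apply]
  exact (S.orderEmbOfFin h).strictMono hab

lemma oio_map {r : ℕ} (S : Finset ℕ) (h : S.card = r) :
    Finset.univ.map ⟨fun t : Fin r => (S.orderIsoOfFin h t : ℕ),
      (oio_strictMono S h).injective⟩ = S := by
  ext x
  simp only [Finset.mem_map, Finset.mem_univ, Function.Embedding.coeFn_mk, true_and]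
  constructor
  · rintro ⟨t, rfl⟩
    simpa [Finset.coe_orderIsoOfFin_apply] using S.orderEmbOfFin_mem h t
  · intro hx
    have : x ∈ Set.range (S.orderEmbOfFin h) := by
      rw [Finset.range_orderEmbOfFin]
      exact hx
    obtain ⟨t, ht⟩ := this
    exact ⟨t, by simp [Finset.coe_orderIsoOfFin_apply, ht]⟩

end LPM

/-- **Basis activities and the Tutte polynomial of a lattice path matroid.**
Let `M[P,Q]` be the lattice path matroid with lower path `P` and upper path `Q`
(North-step position sets in `[1, m+r]`), whose bases are the transversals of the
interval system `N_j = [l_j, u_j]`.  For every basis `B`, the internal activity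
`i(B)` equals the number of North steps the path `P(B)` shares with `Q` (positions
`b ∈ B ∩ Q` where both paths are at the same height just before `b`), and the
external activity `e(B)` equals the number of East steps `P(B)` shares with `P`.
Consequently, the Tutte polynomial `t(M[P,Q];x,y) = Σ_B x^{i(B)} y^{e(B)}` is the
joint generating function of these two lattice path statistics. -/

theorem stmt14 (m r : ℕ) (P Q : Finset ℕ)
    (hPs : P ⊆ Finset.Icc 1 (m + r)) (hQs : Q ⊆ Finset.Icc 1 (m + r))
    (hP : P.card = r) (hQ : Q.card = r)
    (hPQ : ∀ p ≤ m + r, (P.filter (· ≤ p)).card ≤ (Q.filter (· ≤ p)).card) :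
    (∀ B : Finset ℕ,
      IsTransLH r (fun j => (Q.orderIsoOfFin hQ j : ℕ)) (fun j => (P.orderIsoOfFin hP j : ℕ)) B →
        intAct (m + r) r (fun j => (Q.orderIsoOfFin hQ j : ℕ))
            (fun j => (P.orderIsoOfFin hP j : ℕ)) B
          = (B.filter (fun b => b ∈ Q ∧
              (B.filter (· ≤ b - 1)).card = (Q.filter (· ≤ b - 1)).card)).card ∧
        extAct (m + r) r (fun j => (Q.orderIsoOfFin hQ j : ℕ))
            (fun j => (P.orderIsoOfFin hP j : ℕ)) B
          = ((Finset.Icc 1 (m + r) \ B).filter (fun e => e ∉ P ∧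
              (B.filter (· ≤ e - 1)).card = (P.filter (· ≤ e - 1)).card)).card)
    ∧ ∀ x y : ℤ,
        (∑ B ∈ (Finset.Icc 1 (m + r)).powerset.filter
            (IsTransLH r (fun j => (Q.orderIsoOfFin hQ j : ℕ))
              (fun j => (P.orderIsoOfFin hP j : ℕ))),
          x ^ intAct (m + r) r (fun j => (Q.orderIsoOfFin hQ j : ℕ))
              (fun j => (P.orderIsoOfFin hP j : ℕ)) B *
          y ^ extAct (m + r) r (fun j => (Q.orderIsoOfFin hQ j : ℕ))
              (fun j => (P.orderIsoOfFin hP j : ℕ)) B)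
        = ∑ B ∈ (Finset.Icc 1 (m + r)).powerset.filter
            (IsTransLH r (fun j => (Q.orderIsoOfFin hQ j : ℕ))
              (fun j => (P.orderIsoOfFin hP j : ℕ))),
          x ^ (B.filter (fun b => b ∈ Q ∧
              (B.filter (· ≤ b - 1)).card = (Q.filter (· ≤ b - 1)).card)).card *
          y ^ ((Finset.Icc 1 (m + r) \ B).filter (fun e => e ∉ P ∧
              (B.filter (· ≤ e - 1)).card = (P.filter (· ≤ e - 1)).card)).card := by
  have hlo : StrictMono (fun j : Fin r => (Q.orderIsoOfFin hQ j : ℕ)) :=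
    LPM.oio_strictMono Q hQ
  have hhi : StrictMono (fun j : Fin r => (P.orderIsoOfFin hP j : ℕ)) :=
    LPM.oio_strictMono P hP
  have hQmap := LPM.oio_map Q hQ
  have hPmap := LPM.oio_map P hP
  have hlo1 : ∀ t : Fin r, 1 ≤ (Q.orderIsoOfFin hQ t : ℕ) := by
    intro t
    have hmem : ((Q.orderIsoOfFin hQ t : ℕ)) ∈ Q := (Q.orderIsoOfFin hQ t).2
    exact (Finset.mem_Icc.mp (hQs hmem)).1
  have hhiN : ∀ t : Fin r, (P.orderIsoOfFin hP t : ℕ) ≤ m + r := by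
    intro t
    have hmem : ((P.orderIsoOfFin hP t : ℕ)) ∈ P := (P.orderIsoOfFin hP t).2
    exact (Finset.mem_Icc.mp (hPs hmem)).2
  have key : ∀ B : Finset ℕ,
      IsTransLH r (fun j => (Q.orderIsoOfFin hQ j : ℕ))
        (fun j => (P.orderIsoOfFin hP j : ℕ)) B →
      intAct (m + r) r (fun j => (Q.orderIsoOfFin hQ j : ℕ))
            (fun j => (P.orderIsoOfFin hP j : ℕ)) B
          = (B.filter (fun b => b ∈ Q ∧
              (B.filter (· ≤ b - 1)).card = (Q.filter (· ≤ b - 1)).card)).card ∧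
        extAct (m + r) r (fun j => (Q.orderIsoOfFin hQ j : ℕ))
            (fun j => (P.orderIsoOfFin hP j : ℕ)) B
          = ((Finset.Icc 1 (m + r) \ B).filter (fun e => e ∉ P ∧
              (B.filter (· ≤ e - 1)).card = (P.filter (· ≤ e - 1)).card)).card := by
    intro B hBt
    have hcard : B.card = r := LPM.trans_card hBt
    have hβ : StrictMono (fun t : Fin r => (B.orderIsoOfFin hcard t : ℕ)) :=
      LPM.oio_strictMono B hcard
    have hBmap := LPM.oio_map B hcard
    have hbd := LPM.bounds_of_trans hlo hhi hβ hBmap hBt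
    exact ⟨LPM.intAct_eq hlo hhi hβ hBmap hbd hlo1 hhiN hQmap,
      LPM.extAct_eq hlo hhi hβ hBmap hbd hlo1 hhiN hPmap⟩
  refine ⟨key, ?_⟩
  intro x y
  apply Finset.sum_congr rfl
  intro B hB
  rw [Finset.mem_filter] at hB
  obtain ⟨-, hBt⟩ := hB
  rw [(key B hBt).1, (key B hBt).2]
end

section
/- For n > 1, the Tutte polynomial of the Catalan matroid M_n is t(M_n; x, y) = Σ_{i,j>0} ((i+j−2)/(n−1)) * binomial(2n−i−j−1, n−i−j+1) * x^i y^j. In particular, the coefficient of x^i y^j depends only on n and on the sum i + j, and t(M_n; x, y) is symmetric in x and y. -/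
attribute [local instance] Classical.propDecidable

/-- The Tutte polynomial `t(M_n; x, y) = Σ_B x^{i(B)} y^{e(B)}` of the Catalan
matroid `M_n`, as a polynomial in `X 0 = x` and `X 1 = y`. -/
noncomputable def tutteCatalan (n : ℕ) : MvPolynomial (Fin 2) ℚ :=
  ∑ B ∈ (Finset.Icc 1 (2 * n)).powerset.filter
      (IsTransLH n (fun j => 2 * ((j : ℕ) + 1)) (fun j => n + (j : ℕ) + 1)),
    MvPolynomial.X 0 ^ intAct (2 * n) n (fun j => 2 * ((j : ℕ) + 1))
        (fun j => n + (j : ℕ) + 1) B *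
      MvPolynomial.X 1 ^ extAct (2 * n) n (fun j => 2 * ((j : ℕ) + 1))
        (fun j => n + (j : ℕ) + 1) B

/-!
Read a basis `B ⊆ [1, 2n]` as the lattice path whose `m`-th step is north iff `m ∈ B`. The bases
are the paths weakly below the diagonal, the internal activity of `B` is its number of returns
to the diagonal, and its external activity is its number of initial east steps (exchanging an
element for the nearest admissible one shows which elements are active).

Contracting the first north step and deleting the first east step is a bijection from the paths
of `M_{n+1}` with `i + [j = 0]` returns and exactly `j + 1` initial east steps onto the paths of
`M_n` with `i` returns and at least `j` initial east steps. So the number of bases with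
activities `i, j` satisfies a recurrence that, by Pascal's rule, is also satisfied by the
Catalan triangle number `C(2n-s-1, n-2) - C(2n-s-1, n-1)`, `s = i + j`, which equals
`(s-2)/(n-1) * C(2n-s-1, n+1-s)`.
-/

namespace CatalanMatroid

open Finset

def countLE (B : Finset ℕ) (m : ℕ) : ℕ := #{x ∈ B | x ≤ m}

lemma countLE_le_card (B : Finset ℕ) (m : ℕ) : countLE B m ≤ #B :=
  card_filter_le _ _

lemma one_le_countLE {B : Finset ℕ} {b m : ℕ} (hb : b ∈ B) (h : b ≤ m) :
    1 ≤ countLE B m :=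
  card_pos.2 ⟨b, mem_filter.2 ⟨hb, h⟩⟩

lemma countLE_eq_zero {B : Finset ℕ} {m : ℕ} (h : ∀ x ∈ B, m < x) : countLE B m = 0 := by
  rw [countLE, card_eq_zero, filter_eq_empty_iff]
  exact fun x hx => (h x hx).not_ge

lemma countLE_insert {B : Finset ℕ} {y : ℕ} (h : y ∉ B) (m : ℕ) :
    countLE (insert y B) m = countLE B m + if y ≤ m then 1 else 0 := by
  unfold countLE
  rw [filter_insert]
  split_ifs
  · exact card_insert_of_notMem fun hy => h (mem_filter.1 hy).1
  · rfl

lemma countLE_erase {B : Finset ℕ} {b : ℕ} (h : b ∈ B) (m : ℕ) :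
    countLE (B.erase b) m + (if b ≤ m then 1 else 0) = countLE B m := by
  conv_rhs => rw [← insert_erase h]
  rw [countLE_insert (notMem_erase b B)]

lemma countLE_succ_of_notMem {B : Finset ℕ} {m : ℕ} (h : m + 1 ∉ B) :
    countLE B (m + 1) = countLE B m := by
  unfold countLE
  congr 1
  refine filter_congr fun x hx => ?_
  have := ne_of_mem_of_not_mem hx h
  omega

lemma countLE_succ (B : Finset ℕ) (m : ℕ) :
    countLE B (m + 1) = countLE B m + if m + 1 ∈ B then 1 else 0 := by
  split_ifs with h
  · rw [← countLE_erase h, ← countLE_erase h m, countLE_succ_of_notMem (notMem_erase _ _),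
      if_pos le_rfl, if_neg (by omega)]
  · rw [countLE_succ_of_notMem h, add_zero]

lemma countLE_swap {B : Finset ℕ} {y b : ℕ} (hy : y ∉ B) (hb : b ∈ B) (m : ℕ) :
    countLE (insert y (B.erase b)) m + (if b ≤ m then 1 else 0)
      = countLE B m + (if y ≤ m then 1 else 0) := by
  rw [countLE_insert (fun h => hy (mem_of_mem_erase h)), ← countLE_erase hb m]
  ring

/-- Paths with `n` north steps that stay weakly below the diagonal and take at most `n` east
steps; by `isTransLH_iff` these are the bases of `M_n`. -/
def IsBasis (n : ℕ) (B : Finset ℕ) : Prop :=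
  #B = n ∧ (∀ m, 2 * countLE B m ≤ m) ∧ ∀ m ≤ 2 * n, m ≤ n + countLE B m

lemma card_filter_val_lt (r t : ℕ) : #{j : Fin r | (j : ℕ) < t} = min r t := by
  rw [← card_range (min r t), ← card_map Fin.valEmbedding]
  congr 1
  ext x
  simp only [mem_map, mem_filter, mem_univ, true_and, Fin.valEmbedding_apply, mem_range]
  constructor
  · rintro ⟨j, hj, rfl⟩
    exact lt_min j.2 hj
  · intro hx
    exact ⟨⟨x, (lt_min_iff.1 hx).1⟩, (lt_min_iff.1 hx).2, rfl⟩

namespace IsBasis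

variable {n : ℕ} {B : Finset ℕ}

lemma two_le (hB : IsBasis n B) {x : ℕ} (hx : x ∈ B) : 2 ≤ x := by
  have := one_le_countLE hx le_rfl
  have := hB.2.1 x
  omega

lemma le_two_mul (hB : IsBasis n B) {x : ℕ} (hx : x ∈ B) : x ≤ 2 * n := by
  by_contra! h
  have hlt : countLE B (2 * n) < #B :=
    card_lt_card (filter_ssubset.2 ⟨x, hx, h.not_ge⟩)
  have := hB.1
  have := hB.2.2 (2 * n) le_rfl
  omega

end IsBasis

lemma isTransLH_iff {n : ℕ} (B : Finset ℕ) :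
    IsTransLH n (fun j => 2 * ((j : ℕ) + 1)) (fun j => n + (j : ℕ) + 1) B ↔ IsBasis n B := by
  constructor
  · rintro ⟨f, hf, rfl⟩
    have hcount : ∀ m, countLE (univ.map f) m = #{j | f j ≤ m} := fun m => by
      rw [countLE, filter_map, card_map]
      rfl
    refine ⟨by simp, fun m => ?_, fun m hm => ?_⟩
    · have hle : #{j | f j ≤ m} ≤ #{j : Fin n | (j : ℕ) < m / 2} :=
          card_le_card fun j hj => by
        have : 2 * (j + 1) ≤ m := (hf j).1.trans (mem_filter.1 hj).2
        exact mem_filter.2 ⟨mem_univ j, by omega⟩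
      rw [card_filter_val_lt] at hle
      rw [hcount]
      omega
    · have hle : #{j : Fin n | (j : ℕ) < m - n} ≤ #{j | f j ≤ m} :=
          card_le_card fun j hj => by
        have : f j ≤ n + j + 1 := (hf j).2
        have := (mem_filter.1 hj).2
        exact mem_filter.2 ⟨mem_univ j, by omega⟩
      rw [card_filter_val_lt] at hle
      rw [hcount]
      omega
  · intro hB
    set b := B.orderEmbOfFin hB.1
    have hmem : ∀ k, b k ∈ B := B.orderEmbOfFin_mem hB.1
    have hrange : ∀ x ∈ B, ∃ k, b k = x := fun x hx => by
      rwa [← Set.mem_range, B.range_orderEmbOfFin hB.1]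
    have hcount : ∀ k, countLE B (b k) = k + 1 := fun k => by
      have : ({x ∈ B | x ≤ b k} : Finset ℕ) = (Iic k).map b.toEmbedding := by
        ext x
        simp only [mem_filter, mem_map, mem_Iic, RelEmbedding.coe_toEmbedding]
        constructor
        · rintro ⟨hx, hxk⟩
          obtain ⟨j, rfl⟩ := hrange x hx
          exact ⟨j, b.le_iff_le.1 hxk, rfl⟩
        · rintro ⟨j, hj, rfl⟩
          exact ⟨hmem j, b.le_iff_le.2 hj⟩
      rw [countLE, this, card_map, Fin.card_Iic]
    refine ⟨b.toEmbedding, fun k => ⟨?_, ?_⟩, ?_⟩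
    · have := hB.2.1 (b k)
      rw [hcount] at this
      simpa using this
    · have := hB.2.2 (b k) (hB.le_two_mul (hmem k))
      rw [hcount] at this
      simp only [RelEmbedding.coe_toEmbedding]
      omega
    · ext x
      simp only [mem_map, mem_univ, true_and, RelEmbedding.coe_toEmbedding]
      exact ⟨fun ⟨j, hj⟩ => hj ▸ hmem j, hrange x⟩

/-- For a basis, `least B - 1` is the number of initial east steps (junk value `0` for `∅`). -/
noncomputable def least (B : Finset ℕ) : ℕ := sInf (B : Set ℕ)

def returns (B : Finset ℕ) : ℕ := #{b ∈ B | 2 * countLE B b = b}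

section least

variable {B : Finset ℕ}

lemma least_mem (h : B.Nonempty) : least B ∈ B := Nat.sInf_mem (coe_nonempty.2 h)

lemma least_le {x : ℕ} (h : x ∈ B) : least B ≤ x := Nat.sInf_le h

lemma le_least_iff (h : B.Nonempty) {k : ℕ} : k ≤ least B ↔ ∀ x ∈ B, k ≤ x :=
  ⟨fun hk _ hx => hk.trans (least_le hx), fun H => H _ (least_mem h)⟩

lemma least_eq {a : ℕ} (ha : a ∈ B) (h : ∀ x ∈ B, a ≤ x) : least B = a :=
  (least_le ha).antisymm (h _ (least_mem ⟨a, ha⟩))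

end least

lemma countLE_add_of_Ioc_subset {B : Finset ℕ} {m : ℕ} :
    ∀ d, Ioc m (m + d) ⊆ B → countLE B (m + d) = countLE B m + d
  | 0, _ => rfl
  | d + 1, h => by
    have hd := countLE_add_of_Ioc_subset d fun x hx =>
      h (Ioc_subset_Ioc_right (by omega) hx)
    rw [← add_assoc, countLE_succ, hd, if_pos (h (by simp))]
    ring

namespace IsBasis

variable {n : ℕ} {B : Finset ℕ} (hB : IsBasis n B)
include hB

lemma nonempty (hn : 1 ≤ n) : B.Nonempty := by
  rw [← card_pos, hB.1]
  omega

lemma two_le_least (hn : 1 ≤ n) : 2 ≤ least B :=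
  hB.two_le (least_mem (hB.nonempty hn))

lemma least_le_succ (hn : 1 ≤ n) : least B ≤ n + 1 := by
  have h2 := hB.two_le_least hn
  have := hB.2.2 (least B - 1) (by have := hB.le_two_mul (least_mem (hB.nonempty hn)); omega)
  rw [countLE_eq_zero fun x hx => by have := least_le hx; omega] at this
  omega

lemma countLE_two_mul : countLE B (2 * n) = n := by
  have := countLE_le_card B (2 * n)
  have := hB.2.2 (2 * n) le_rfl
  have := hB.1
  omega

lemma two_mul_mem (hn : 1 ≤ n) : 2 * n ∈ B := by
  have h := countLE_succ B (2 * n - 1)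
  rw [show 2 * n - 1 + 1 = 2 * n by omega, hB.countLE_two_mul] at h
  have := hB.2.1 (2 * n - 1)
  by_contra hc
  rw [if_neg hc] at h
  omega

lemma one_le_returns (hn : 1 ≤ n) : 1 ≤ returns B :=
  card_pos.2 ⟨2 * n, mem_filter.2 ⟨hB.two_mul_mem hn, by rw [hB.countLE_two_mul]⟩⟩

lemma returns_le : returns B ≤ n := hB.1 ▸ card_filter_le _ _

lemma exists_swap_down {e : ℕ} (he : e ∉ B) (he2 : e ≤ 2 * n) (h : ∃ y ∈ B, y < e) :
    ∃ y ∈ B, y < e ∧ IsBasis n (insert e (B.erase y)) := by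
  obtain ⟨y₀, hy₀, hy₀e⟩ := h
  obtain ⟨y, hy, hmax⟩ :=
    exists_max_image {x ∈ B | x < e} id ⟨y₀, mem_filter.2 ⟨hy₀, hy₀e⟩⟩
  obtain ⟨hyB, hye⟩ := mem_filter.1 hy
  refine ⟨y, hyB, hye, ?_, fun m => ?_, fun m hm => ?_⟩
  · rw [card_insert_of_notMem (fun h => he (mem_of_mem_erase h)), card_erase_add_one hyB, hB.1]
  · have := countLE_swap he hyB m
    have := hB.2.1 m
    split_ifs at * <;> omega
  · have h1 := countLE_swap he hyB m
    have := hB.2.2 m hm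
    by_cases hm' : y ≤ m ∧ m < e
    · -- on `[y, e)` the new path has one north step less, and `m + 1` is an east step of `B`
      have hnext : m + 1 ∉ B := fun h => by
        rcases (show m + 1 < e ∨ m + 1 = e by omega) with hlt | rfl
        · have := hmax _ (mem_filter.2 ⟨h, hlt⟩)
          simp only [id] at this
          omega
        · exact he h
      have := hB.2.2 (m + 1) (by omega)
      rw [countLE_succ_of_notMem hnext] at this
      split_ifs at h1 <;> omega
    · split_ifs at h1 <;> omega

lemma exists_swap_up {b : ℕ} (hb : b ∈ B) (hnr : 2 * countLE B b ≠ b) :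
    ∃ y ∈ Icc 1 (2 * n) \ B, y < b ∧ IsBasis n (insert y (B.erase b)) := by
  have hb2 := hB.two_le hb
  have hne : ({x ∈ Ico 1 b | x ∉ B}).Nonempty :=
    ⟨1, mem_filter.2 ⟨mem_Ico.2 ⟨le_rfl, by omega⟩, fun h => by
      have := hB.two_le h
      omega⟩⟩
  obtain ⟨y, hy, hmax⟩ := exists_max_image _ id hne
  obtain ⟨hy1b, hyB⟩ := mem_filter.1 hy
  rw [mem_Ico] at hy1b
  have hfill : Ioc y b ⊆ B := fun z hz => by
    rw [mem_Ioc] at hz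
    by_contra hzB
    rcases (show z < b ∨ z = b by omega) with hzb | rfl
    · have := hmax z (mem_filter.2 ⟨mem_Ico.2 ⟨by omega, hzb⟩, hzB⟩)
      simp only [id] at this
      omega
    · exact hzB hb
  have hstep : ∀ m, y ≤ m → m < b → countLE B b = countLE B m + (b - m) :=
      fun m hym hmb => by
    have := countLE_add_of_Ioc_subset (b - m) fun z hz =>
      hfill (Ioc_subset_Ioc_left hym (by rwa [Nat.add_sub_cancel' hmb.le] at hz))
    rwa [Nat.add_sub_cancel' hmb.le] at this
  have hy2n : y ≤ 2 * n := by
    have := hB.le_two_mul hb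
    omega
  refine ⟨y, mem_sdiff.2 ⟨mem_Icc.2 ⟨hy1b.1, hy2n⟩, hyB⟩, hy1b.2, ?_, fun m => ?_,
    fun m hm => ?_⟩
  · rw [card_insert_of_notMem (fun h => hyB (mem_of_mem_erase h)), card_erase_add_one hb, hB.1]
  · have h1 := countLE_swap hyB hb m
    have := hB.2.1 m
    have := hB.2.1 b
    by_cases hm' : y ≤ m ∧ m < b
    · -- on `[y, b)` the new path has one north step more; `(m, b]` consists of north steps and
      -- `b` is not a return, so `B` is at least two steps below the diagonal at `m`
      have := hstep m hm'.1 hm'.2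
      split_ifs at h1 <;> omega
    · split_ifs at h1 <;> omega
  · have := countLE_swap hyB hb m
    have := hB.2.2 m hm
    split_ifs at * <;> omega

end IsBasis

lemma not_isBasis_swap_of_return {n : ℕ} {B : Finset ℕ} {b y : ℕ} (hb : b ∈ B)
    (hr : 2 * countLE B b = b) (hy : y ∉ B) (hyb : y < b) :
    ¬ IsBasis n (insert y (B.erase b)) := by
  intro hC
  have h1 := countLE_swap hy hb (b - 1)
  have h2 := countLE_succ B (b - 1)
  rw [Nat.sub_add_cancel (by omega), if_pos hb] at h2
  have := hC.2.1 (b - 1)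
  rw [if_neg (by omega), if_pos (by omega)] at h1
  omega

section activities

variable {n : ℕ} {B : Finset ℕ}

lemma extAct_eq (hB : IsBasis n B) (hn : 1 ≤ n) :
    extAct (2 * n) n (fun j => 2 * ((j : ℕ) + 1)) (fun j => n + (j : ℕ) + 1) B =
      least B - 1 := by
  have hleast := least_mem (hB.nonempty hn)
  rw [extAct, ← Nat.card_Ico]
  congr 1
  ext e
  simp only [mem_filter, mem_sdiff, mem_Icc, mem_Ico, isTransLH_iff, not_exists, not_and]
  constructor
  · rintro ⟨⟨⟨he1, he2⟩, heB⟩, hna⟩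
    refine ⟨he1, lt_of_not_ge fun hle => ?_⟩
    have hlt : least B < e := lt_of_le_of_ne hle fun h => heB (h ▸ hleast)
    obtain ⟨y, hyB, hye, hC⟩ := hB.exists_swap_down heB he2 ⟨_, hleast, hlt⟩
    exact hna y hyB hye hC
  · rintro ⟨he1, he⟩
    have := hB.least_le_succ hn
    refine ⟨⟨⟨he1, by omega⟩, fun h => (least_le h).not_gt he⟩, fun y hy hye _ => ?_⟩
    exact (least_le hy).not_gt (hye.trans he)

lemma intAct_eq (hB : IsBasis n B) :
    intAct (2 * n) n (fun j => 2 * ((j : ℕ) + 1)) (fun j => n + (j : ℕ) + 1) B =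
      returns B := by
  rw [intAct, returns]
  congr 1
  ext b
  simp only [mem_filter, isTransLH_iff, not_exists, not_and]
  refine and_congr_right fun hb => ⟨fun hna => ?_, fun hr y hy hyb => ?_⟩
  · by_contra hnr
    obtain ⟨y, hy, hyb, hC⟩ := hB.exists_swap_up hb hnr
    exact hna y hy hyb hC
  · exact not_isBasis_swap_of_return hb hr (mem_sdiff.1 hy).2 hyb

end activities

/-- When the first `j` steps of the path `C` are east (`∀ x ∈ C, j < x`), `insertEN j C` is the
path obtained by inserting an east step and a north step after them. -/
def insertEN (j : ℕ) (C : Finset ℕ) : Finset ℕ := insert (j + 2) (C.image (· + 2))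

def removeEN (j : ℕ) (B : Finset ℕ) : Finset ℕ := (B.erase (j + 2)).image (· - 2)

lemma countLE_image_add_two (C : Finset ℕ) (m : ℕ) :
    countLE (C.image (· + 2)) (m + 2) = countLE C m := by
  rw [countLE, filter_image, card_image_of_injective _ (add_left_injective 2), countLE]
  simp only [add_le_add_iff_right]

section insertEN

variable {j : ℕ} {C : Finset ℕ} (hC : ∀ x ∈ C, j < x)
include hC

lemma notMem_image_add_two : j + 2 ∉ C.image (· + 2) := by
  simp only [mem_image, not_exists, not_and]
  intro x hx
  have := hC x hx
  omega

lemma lt_of_mem_insertEN : ∀ x ∈ insertEN j C, j + 1 < x := by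
  simp only [insertEN, mem_insert, mem_image]
  rintro x (rfl | ⟨y, hy, rfl⟩)
  · omega
  · have := hC y hy
    omega

lemma countLE_insertEN (m : ℕ) :
    countLE (insertEN j C) (m + 2) = countLE C m + if j ≤ m then 1 else 0 := by
  rw [insertEN, countLE_insert (notMem_image_add_two hC), countLE_image_add_two]
  simp only [add_le_add_iff_right]

lemma removeEN_insertEN : removeEN j (insertEN j C) = C := by
  rw [removeEN, insertEN, erase_insert (notMem_image_add_two hC), image_image]
  simp only [Function.comp_def, Nat.add_sub_cancel, image_id']

lemma least_insertEN : least (insertEN j C) = j + 2 :=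
  least_eq (mem_insert_self _ _) fun x hx => lt_of_mem_insertEN hC x hx

lemma returns_insertEN : returns (insertEN j C) = returns C + if j = 0 then 1 else 0 := by
  have hret : 2 * countLE (insertEN j C) (j + 2) = j + 2 ↔ j = 0 := by
    rw [countLE_insertEN hC, if_pos le_rfl, countLE_eq_zero fun x hx => hC x hx]
    omega
  rw [returns, insertEN, filter_insert, ← insertEN]
  have hrest : #{y ∈ C.image (· + 2) | 2 * countLE (insertEN j C) y = y} = returns C := by
    rw [filter_image, card_image_of_injective _ (add_left_injective 2), returns]
    congr 1
    refine filter_congr fun x hx => ?_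
    simp only [countLE_insertEN hC, if_pos (hC x hx).le]
    omega
  by_cases h : j = 0
  · rw [if_pos (hret.2 h),
      card_insert_of_notMem fun h' => notMem_image_add_two hC (mem_filter.1 h').1, hrest, if_pos h]
  · rw [if_neg (mt hret.1 h), hrest, if_neg h, add_zero]

lemma isBasis_insertEN_iff {n : ℕ} (hj : j ≤ n) :
    IsBasis (n + 1) (insertEN j C) ↔ IsBasis n C := by
  have hcard : #(insertEN j C) = #C + 1 := by
    rw [insertEN, card_insert_of_notMem (notMem_image_add_two hC),
      card_image_of_injective _ (add_left_injective 2)]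
  have hlow : ∀ m ≤ j + 1, countLE (insertEN j C) m = 0 := fun m hm =>
    countLE_eq_zero fun x hx => by have := lt_of_mem_insertEN hC x hx; omega
  have hCzero : ∀ m < j, countLE C m = 0 := fun m hm =>
    countLE_eq_zero fun x hx => by have := hC x hx; omega
  constructor
  · rintro ⟨h1, h2, h3⟩
    refine ⟨by omega, fun m => ?_, fun m hm => ?_⟩
    · have := h2 (m + 2)
      have := countLE_insertEN hC m
      have := hCzero m
      split_ifs at * <;> omega
    · have := h3 (m + 2) (by omega)
      have := countLE_insertEN hC m
      split_ifs at * <;> omega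
  · rintro ⟨h1, h2, h3⟩
    refine ⟨by omega, fun m => ?_, fun m hm => ?_⟩ <;> by_cases hm2 : m < 2
    · rw [hlow m (by omega)]
      omega
    · obtain ⟨m, rfl⟩ : ∃ k, m = k + 2 := ⟨m - 2, by omega⟩
      have := h2 m
      have := countLE_insertEN hC m
      split_ifs at * <;> omega
    · omega
    · obtain ⟨m, rfl⟩ : ∃ k, m = k + 2 := ⟨m - 2, by omega⟩
      rw [countLE_insertEN hC]
      by_cases hjm : j ≤ m
      · have := h3 m (by omega)
        rw [if_pos hjm]
        omega
      · rw [if_neg hjm, hCzero m (by omega)]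
        omega

end insertEN

lemma insertEN_removeEN {j : ℕ} {B : Finset ℕ} (hB : ∀ x ∈ B, j + 1 < x)
    (hj : j + 2 ∈ B) : insertEN j (removeEN j B) = B := by
  rw [insertEN, removeEN, image_image]
  conv_rhs => rw [← insert_erase hj]
  congr 1
  conv_rhs => rw [← image_id (s := B.erase (j + 2))]
  refine image_congr fun x hx => ?_
  have := hB x (mem_of_mem_erase hx)
  simp only [Function.comp_apply, id]
  omega

lemma lt_of_mem_removeEN {j : ℕ} {B : Finset ℕ} (hB : ∀ x ∈ B, j + 1 < x) :
    ∀ x ∈ removeEN j B, j < x := by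
  simp only [removeEN, mem_image, mem_erase]
  rintro _ ⟨y, ⟨hyj, hy⟩, rfl⟩
  have := hB y hy
  omega

noncomputable def bases (n : ℕ) : Finset (Finset ℕ) :=
  {B ∈ (Icc 1 (2 * n)).powerset | IsBasis n B}

lemma mem_bases {n : ℕ} {B : Finset ℕ} : B ∈ bases n ↔ IsBasis n B := by
  rw [bases, mem_filter, mem_powerset]
  exact ⟨And.right, fun hB => ⟨fun x hx => mem_Icc.2 ⟨by have := hB.two_le hx; omega,
    hB.le_two_mul hx⟩, hB⟩⟩

lemma bases_one : bases 1 = {{2}} := by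
  ext B
  rw [mem_bases, mem_singleton]
  constructor
  · intro hB
    obtain ⟨b, rfl⟩ := card_eq_one.1 hB.1
    have := hB.two_le (mem_singleton_self b)
    have := hB.le_two_mul (mem_singleton_self b)
    rw [show b = 2 by omega]
  · rintro rfl
    have hcount : ∀ m, countLE {2} m = if 2 ≤ m then 1 else 0 := fun m => by
      rw [countLE, filter_singleton]
      split_ifs <;> rfl
    refine ⟨rfl, fun m => ?_, fun m hm => ?_⟩ <;> rw [hcount] <;> split_ifs <;> omega

/-- By `intAct_eq` and `extAct_eq`, the number of bases of `M_n` with internal activity `i` and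
external activity `j`. -/
noncomputable def activityCount (n i j : ℕ) : ℕ :=
  #{B ∈ bases n | returns B = i ∧ least B = j + 1}

/-- The same count with external activity at least `j`. -/
noncomputable def activityCountGE (n i j : ℕ) : ℕ :=
  #{B ∈ bases n | returns B = i ∧ ∀ x ∈ B, j < x}

/-- Contracting the first north step and deleting the first east step. -/
lemma activityCount_succ {n i j : ℕ} (hj : j ≤ n) :
    activityCount (n + 1) (i + if j = 0 then 1 else 0) (j + 1) = activityCountGE n i j := by
  symm
  apply card_nbij' (insertEN j) (removeEN j)
  · intro C hC
    simp only [mem_coe, mem_filter, mem_bases] at hC ⊢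
    obtain ⟨hCb, hCi, hCj⟩ := hC
    exact ⟨(isBasis_insertEN_iff hCj hj).2 hCb, by rw [returns_insertEN hCj, hCi],
      least_insertEN hCj⟩
  · intro B hB
    simp only [mem_coe, mem_filter, mem_bases] at hB ⊢
    obtain ⟨hBb, hBi, hBj⟩ := hB
    have hlt : ∀ x ∈ B, j + 1 < x := fun x hx => by have := least_le hx; omega
    have hmem : j + 2 ∈ B := hBj ▸ least_mem (hBb.nonempty (by omega))
    have hC := lt_of_mem_removeEN hlt
    rw [← insertEN_removeEN hlt hmem, returns_insertEN hC] at hBi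
    rw [← insertEN_removeEN hlt hmem, isBasis_insertEN_iff hC hj] at hBb
    exact ⟨hBb, by omega, hC⟩
  · intro C hC
    exact removeEN_insertEN (mem_filter.1 hC).2.2
  · intro B hB
    obtain ⟨hBb, -, hBj⟩ := mem_filter.1 hB
    exact insertEN_removeEN (fun x hx => by have := least_le hx; omega)
      (hBj ▸ least_mem ((mem_bases.1 hBb).nonempty (by omega)))

lemma activityCountGE_eq_add {n : ℕ} (hn : 1 ≤ n) (i j : ℕ) :
    activityCountGE n i j = activityCount n i j + activityCountGE n i (j + 1) := by
  rw [activityCountGE, activityCountGE, activityCount,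
    ← card_filter_add_card_filter_not (p := fun B => least B = j + 1), filter_filter,
    filter_filter]
  have hleast : ∀ B ∈ bases n, ∀ k, (∀ x ∈ B, k < x) ↔ k + 1 ≤ least B :=
    fun B hB k => (le_least_iff ((mem_bases.1 hB).nonempty hn)).symm
  congr 2 <;> refine filter_congr fun B hB => ?_ <;> simp only [hleast B hB] <;> omega

lemma activityCountGE_eq_zero {n i j : ℕ} (hn : 1 ≤ n) (hj : n + 1 ≤ j) :
    activityCountGE n i j = 0 := by
  rw [activityCountGE, card_eq_zero, filter_eq_empty_iff]
  rintro B hB ⟨-, hlt⟩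
  have hB := mem_bases.1 hB
  have := hlt _ (least_mem (hB.nonempty hn))
  have := hB.least_le_succ hn
  omega

lemma activityCountGE_zero_left {n : ℕ} (hn : 1 ≤ n) (j : ℕ) : activityCountGE n 0 j = 0 := by
  rw [activityCountGE, card_eq_zero, filter_eq_empty_iff]
  rintro B hB ⟨h0, -⟩
  have := (mem_bases.1 hB).one_le_returns hn
  omega

lemma activityCountGE_zero_right (n i : ℕ) : activityCountGE n i 0 = activityCountGE n i 1 := by
  rw [activityCountGE, activityCountGE]
  congr 1
  refine filter_congr fun B hB => and_congr_right fun _ => forall₂_congr fun x hx => ?_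
  have := (mem_bases.1 hB).two_le hx
  omega

lemma returns_singleton_two : returns {2} = 1 := by decide

/-- A Catalan triangle number; in this difference form Pascal's rule gives `ballot_succ`. -/
noncomputable def ballot (n s : ℕ) : ℚ :=
  if 2 ≤ s ∧ s ≤ n + 1 then
    ((2 * n - s - 1).choose (n - 2) : ℚ) - ((2 * n - s - 1).choose (n - 1) : ℚ)
  else 0

lemma ballot_of_lt {n s : ℕ} (h : n + 1 < s) : ballot n s = 0 := if_neg (by omega)

lemma ballot_self {n : ℕ} (hn : 2 ≤ n) : ballot n (n + 1) = 1 := by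
  rw [ballot, if_pos (by omega), show 2 * n - (n + 1) - 1 = n - 2 by omega, Nat.choose_self,
    Nat.choose_eq_zero_of_lt (by omega)]
  norm_num

lemma ballot_two {n : ℕ} (hn : 2 ≤ n) : ballot n 2 = 0 := by
  rw [ballot, if_pos (by omega),
    ← Nat.choose_symm_of_eq_add (show 2 * n - 2 - 1 = n - 2 + (n - 1) by omega)]
  ring

lemma ballot_succ {n s : ℕ} (hn : 2 ≤ n) (hs : 3 ≤ s) :
    ballot (n + 1) s = ballot (n + 1) (s + 1) + ballot n (s - 1) := by
  rcases lt_trichotomy s (n + 2) with hlt | rfl | hgt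
  · rw [ballot, ballot, ballot, if_pos (by omega), if_pos (by omega), if_pos (by omega),
      show 2 * (n + 1) - s - 1 = (2 * n - s) + 1 by omega, show n + 1 - 2 = (n - 2) + 1 by omega,
      show n + 1 - 1 = (n - 2) + 1 + 1 by omega,
      show 2 * (n + 1) - (s + 1) - 1 = 2 * n - s by omega,
      show 2 * n - (s - 1) - 1 = 2 * n - s by omega, show n - 1 = (n - 2) + 1 by omega,
      Nat.choose_succ_succ, Nat.choose_succ_succ (2 * n - s) (n - 2 + 1)]
    push_cast
    ring
  · rw [ballot_self (by omega), ballot_of_lt (by omega), show n + 2 - 1 = n + 1 from rfl,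
      ballot_self hn, zero_add]
  · rw [ballot_of_lt (by omega), ballot_of_lt (by omega), ballot_of_lt (by omega), add_zero]

lemma ballot_eq {n s : ℕ} (hn : 2 ≤ n) (hs2 : 2 ≤ s) (hsn : s ≤ n + 1) :
    ballot n s =
      ((s - 2 : ℕ) : ℚ) / ((n : ℚ) - 1) * ((2 * n - s - 1).choose (n + 1 - s) : ℚ) := by
  obtain ⟨k, rfl⟩ : ∃ k, n = k + 2 := ⟨n - 2, by omega⟩
  obtain ⟨r, hr⟩ : ∃ r, s + r = k + 3 := ⟨k + 3 - s, by omega⟩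
  rw [ballot, if_pos ⟨hs2, hsn⟩, show 2 * (k + 2) - s - 1 = k + r by omega,
    show k + 2 - 2 = k by omega, show k + 2 - 1 = k + 1 by omega, show k + 2 + 1 - s = r by omega,
    ← Nat.choose_symm_add, Nat.cast_sub hs2,
    show ((k + 2 : ℕ) : ℚ) - 1 = k + 1 by push_cast; ring]
  have key := Nat.choose_succ_right_eq (k + r) k
  rw [Nat.add_sub_cancel_left] at key
  have hrQ : (s : ℚ) + r = k + 3 := by exact_mod_cast hr
  have keyQ : ((k + r).choose (k + 1) : ℚ) * (k + 1) = (k + r).choose k * r := by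
    exact_mod_cast key
  push_cast
  field_simp
  linear_combination -keyQ - ((k + r).choose k : ℚ) * hrQ

section counting

variable {n : ℕ} (hn : 1 ≤ n)
  (IH : ∀ i j, 1 ≤ i → 1 ≤ j → (activityCountGE n i j : ℚ) = ballot (n + 1) (i + j + 1))
include hn IH

lemma activityCount_succ_eq_ballot {i j : ℕ} (hi : 1 ≤ i) (hj : 1 ≤ j) (hjn : j ≤ n + 1) :
    (activityCount (n + 1) i j : ℚ) = ballot (n + 1) (i + j) := by
  obtain ⟨j, rfl⟩ : ∃ k, j = k + 1 := ⟨j - 1, by omega⟩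
  rcases Nat.eq_zero_or_pos j with rfl | hj0
  · obtain ⟨i, rfl⟩ : ∃ k, i = k + 1 := ⟨i - 1, by omega⟩
    have h := activityCount_succ (n := n) (i := i) (Nat.zero_le _)
    rw [if_pos rfl] at h
    rw [h, activityCountGE_zero_right]
    rcases Nat.eq_zero_or_pos i with rfl | hi0
    · rw [activityCountGE_zero_left hn, Nat.cast_zero, ballot_two (by omega)]
    · rw [IH i 1 hi0 le_rfl]
  · have h := activityCount_succ (n := n) (i := i) (j := j) (by omega)
    rw [if_neg (by omega), add_zero] at h
    rw [h, IH i j hi hj0, add_assoc]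

lemma activityCountGE_succ_eq_ballot {i : ℕ} (hi : 1 ≤ i) (d : ℕ) :
    ∀ j, 1 ≤ j → n + 2 ≤ j + d →
      (activityCountGE (n + 1) i j : ℚ) = ballot (n + 2) (i + j + 1) := by
  have hlarge : ∀ j, n + 2 ≤ j →
      (activityCountGE (n + 1) i j : ℚ) = ballot (n + 2) (i + j + 1) := fun j hj => by
    rw [activityCountGE_eq_zero (by omega) hj, ballot_of_lt (by omega), Nat.cast_zero]
  induction d with
  | zero => exact fun j _ hd => hlarge j hd
  | succ d ihd =>
    intro j hj hd
    rcases le_or_gt (n + 2) j with hbig | hsmall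
    · exact hlarge j hbig
    · rw [activityCountGE_eq_add (by omega), Nat.cast_add,
        activityCount_succ_eq_ballot hn IH hi hj (by omega), ihd (j + 1) (by omega) (by omega),
        ballot_succ (n := n + 1) (by omega) (show 3 ≤ i + j + 1 by omega), Nat.add_sub_cancel,
        add_comm]
      rfl

end counting

lemma activityCountGE_eq_ballot {n : ℕ} (hn : 1 ≤ n) :
    ∀ i j, 1 ≤ i → 1 ≤ j →
      (activityCountGE n i j : ℚ) = ballot (n + 1) (i + j + 1) := by
  induction n, hn using Nat.le_induction with
  | base =>
    intro i j hi hj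
    rw [activityCountGE, bases_one, filter_singleton, returns_singleton_two]
    by_cases h : i = 1 ∧ j = 1
    · obtain ⟨rfl, rfl⟩ := h
      rw [if_pos (by simp), ballot_self le_rfl, card_singleton, Nat.cast_one]
    · rw [if_neg (by simp; omega), ballot_of_lt (by omega), card_empty, Nat.cast_zero]
  | succ n hn IH =>
    intro i j hi hj
    exact activityCountGE_succ_eq_ballot hn IH hi (n + 2) j hj (by omega)

lemma activityCount_eq_ballot {n i j : ℕ} (hn : 2 ≤ n) (hi : 1 ≤ i) (hj : 1 ≤ j)
    (hjn : j ≤ n) :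
    (activityCount n i j : ℚ) = ballot n (i + j) := by
  obtain ⟨n, rfl⟩ : ∃ k, n = k + 1 := ⟨n - 1, by omega⟩
  exact activityCount_succ_eq_ballot (by omega) (activityCountGE_eq_ballot (by omega)) hi hj hjn

open MvPolynomial in
lemma tutteCatalan_eq_sum_activityCount {n : ℕ} (hn : 1 ≤ n) :
    tutteCatalan n = ∑ p ∈ Icc 1 n ×ˢ Icc 1 n,
      C (activityCount n p.1 p.2 : ℚ) * X 0 ^ p.1 * X 1 ^ p.2 := by
  have hbases : {B ∈ (Icc 1 (2 * n)).powerset |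
      IsTransLH n (fun j => 2 * ((j : ℕ) + 1)) (fun j => n + (j : ℕ) + 1) B} = bases n := by
    ext B
    simp only [bases, mem_filter, isTransLH_iff]
  have hmaps : ∀ B ∈ bases n, (returns B, least B - 1) ∈ Icc 1 n ×ˢ Icc 1 n :=
      fun B hB => by
    have hB := mem_bases.1 hB
    have := hB.one_le_returns hn
    have := hB.returns_le
    have := hB.two_le_least hn
    have := hB.least_le_succ hn
    simp only [mem_product, mem_Icc]
    omega
  rw [tutteCatalan, hbases, ← sum_fiberwise_of_maps_to hmaps]
  refine sum_congr rfl fun p _ => ?_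
  have hfiber : {B ∈ bases n | (returns B, least B - 1) = p} =
      {B ∈ bases n | returns B = p.1 ∧ least B = p.2 + 1} := by
    ext B
    simp only [mem_filter, Prod.ext_iff]
    refine and_congr_right fun hB => ?_
    have := (mem_bases.1 hB).two_le_least hn
    omega
  rw [activityCount, ← hfiber, map_natCast, mul_assoc, ← nsmul_eq_mul, ← sum_const]
  refine sum_congr rfl fun B hB => ?_
  obtain ⟨hBb, rfl⟩ := mem_filter.1 hB
  rw [intAct_eq (mem_bases.1 hBb), extAct_eq (mem_bases.1 hBb) hn]

end CatalanMatroid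

open CatalanMatroid Finset

/-- **Tutte polynomial of the Catalan matroid.**  For `n > 1`,
`t(M_n; x, y) = Σ_{i,j>0} ((i+j-2)/(n-1)) * (2n-i-j-1 choose n-i-j+1) x^i y^j`
(the sum is over the pairs `i, j ≥ 1` with `i + j ≤ n + 1`; all other coefficients
vanish).  In particular each coefficient depends only on `n` and `i + j`, so the
polynomial is symmetric in `x` and `y`. -/
theorem stmt16 (n : ℕ) (hn : 1 < n) :
    tutteCatalan n
      = ∑ p ∈ (Finset.Icc 1 n ×ˢ Finset.Icc 1 n).filter (fun p => p.1 + p.2 ≤ n + 1),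
          MvPolynomial.C (((p.1 + p.2 - 2 : ℕ) : ℚ) / ((n : ℚ) - 1) *
              (Nat.choose (2 * n - (p.1 + p.2) - 1) (n + 1 - (p.1 + p.2)) : ℚ)) *
            MvPolynomial.X 0 ^ p.1 * MvPolynomial.X 1 ^ p.2 := by
  have hcount : ∀ p ∈ Icc 1 n ×ˢ Icc 1 n,
      (activityCount n p.1 p.2 : ℚ) = ballot n (p.1 + p.2) := fun p hp => by
    simp only [mem_product, mem_Icc] at hp
    exact activityCount_eq_ballot hn hp.1.1 hp.2.1 hp.2.2
  rw [tutteCatalan_eq_sum_activityCount (by omega),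
    ← sum_subset (filter_subset (fun p : ℕ × ℕ => p.1 + p.2 ≤ n + 1) _)]
  · refine sum_congr rfl fun p hp => ?_
    obtain ⟨hp, hsum⟩ := mem_filter.1 hp
    have := mem_product.1 hp
    simp only [mem_Icc] at this
    rw [hcount p hp, ballot_eq hn (by omega) hsum]
  · intro p hp hsum
    rw [hcount p hp, ballot_of_lt (by simpa [hp] using hsum), map_zero, zero_mul, zero_mul]
end

section
/- Let M[P,Q] be a lattice path matroid with no loops, with elements ordered naturally. Then the broken circuit complex of M[P,Q] equals the independence complex of the lattice path matroid M[P',Q], where P' is the lattice path determined by the equation N·P = P'·N (as words in {E,N}). In particular, the nbc-bases of M[P,Q] are exactly the bases of M[P',Q]. -/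
/-- `X` is a partial transversal of the interval system `(N_j = [lo j, hi j])_{j : Fin r}`;
for a lattice path matroid these are exactly the independent sets. -/
def IsPT (r : ℕ) (lo hi : Fin r → ℕ) (X : Finset ℕ) : Prop :=
  ∃ f : X → Fin r, Function.Injective f ∧ ∀ x : X, lo (f x) ≤ (x : ℕ) ∧ (x : ℕ) ≤ hi (f x)

/-- `C` is a circuit (minimal dependent set) of the matroid on `[1, N]` with
independence predicate `Ind`. -/
def IsCircuitOf (N : ℕ) (Ind : Finset ℕ → Prop) (C : Finset ℕ) : Prop :=
  C ⊆ Finset.Icc 1 N ∧ ¬ Ind C ∧ ∀ x ∈ C, Ind (C.erase x)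

/-- `X` is an nbc-set (contains no broken circuit, under the natural order): there is
no circuit `C` with least element `x` such that `C - x ⊆ X`. -/
def NoBrokenCircuit (N : ℕ) (Ind : Finset ℕ → Prop) (X : Finset ℕ) : Prop :=
  ¬ ∃ C x, IsCircuitOf N Ind C ∧ x ∈ C ∧ (∀ y ∈ C, x ≤ y) ∧ C.erase x ⊆ X

open Finset

lemma iso_count {r : ℕ} (S : Finset ℕ) (hS : S.card = r) (p : ℕ → Prop) [DecidablePred p]
    (hp : ∀ a b, a ≤ b → p b → p a) (i : Fin r) :
    p ((S.orderIsoOfFin hS i : ℕ)) ↔ (i : ℕ) < (S.filter p).card := by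
  have hinj : Function.Injective (fun j : Fin r => ((S.orderIsoOfFin hS j : ℕ))) := by
    intro a b hab
    exact (S.orderIsoOfFin hS).injective (Subtype.ext hab)
  constructor
  · intro h
    have hsub : (Finset.Iic i).image (fun j : Fin r => ((S.orderIsoOfFin hS j : ℕ)))
        ⊆ S.filter p := by
      intro z hz
      obtain ⟨j, hj, rfl⟩ := Finset.mem_image.1 hz
      refine Finset.mem_filter.2 ⟨(S.orderIsoOfFin hS j).2, hp _ _ ?_ h⟩
      exact_mod_cast (S.orderIsoOfFin hS).monotone (Finset.mem_Iic.1 hj)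
    calc (i:ℕ) < (Finset.Iic i).card := by rw [Fin.card_Iic]; omega
    _ = _ := (Finset.card_image_of_injective _ hinj).symm
    _ ≤ _ := Finset.card_le_card hsub
  · intro h
    by_contra hnp
    have hsub : S.filter p ⊆ (Finset.Iio i).image (fun j : Fin r => ((S.orderIsoOfFin hS j : ℕ))) := by
      intro z hz
      obtain ⟨hzS, hpz⟩ := Finset.mem_filter.1 hz
      set j := (S.orderIsoOfFin hS).symm ⟨z, hzS⟩ with hjdef
      have hz' : ((S.orderIsoOfFin hS j : ℕ)) = z := by simp [hjdef]
      refine Finset.mem_image.2 ⟨j, Finset.mem_Iio.2 ?_, hz'⟩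
      by_contra hij
      push_neg at hij
      refine hnp (hp _ _ ?_ hpz)
      rw [← hz']
      exact_mod_cast (S.orderIsoOfFin hS).monotone hij
    have h2 := Finset.card_le_card hsub
    rw [Finset.card_image_of_injective _ hinj, Fin.card_Iio] at h2
    omega

lemma card_iso_filter {r : ℕ} (S : Finset ℕ) (hS : S.card = r) (p : ℕ → Prop) [DecidablePred p] :
    (Finset.univ.filter (fun j : Fin r => p ((S.orderIsoOfFin hS j : ℕ)))).card
      = (S.filter p).card := by
  apply Finset.card_bij (fun j _ => ((S.orderIsoOfFin hS j : ℕ)))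
  · intro j hj
    exact Finset.mem_filter.2 ⟨(S.orderIsoOfFin hS j).2, (Finset.mem_filter.1 hj).2⟩
  · intro a ha b hb hab
    exact (S.orderIsoOfFin hS).injective (Subtype.ext hab)
  · intro z hz
    obtain ⟨hzS, hpz⟩ := Finset.mem_filter.1 hz
    refine ⟨(S.orderIsoOfFin hS).symm ⟨z, hzS⟩, ?_, by simp⟩
    refine Finset.mem_filter.2 ⟨Finset.mem_univ _, ?_⟩
    simpa using hpz

lemma pt_mono {r : ℕ} {lo hi : Fin r → ℕ} {X Y : Finset ℕ} (hXY : X ⊆ Y) :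
    IsPT r lo hi Y → IsPT r lo hi X := by
  rintro ⟨f, hinj, hf⟩
  refine ⟨fun x => f ⟨x.1, hXY x.2⟩, ?_, fun x => hf _⟩
  intro a b hab
  have h2 := congrArg Subtype.val (hinj hab)
  exact Subtype.ext h2

lemma exists_circuit (N : ℕ) (Ind : Finset ℕ → Prop) :
    ∀ X : Finset ℕ, X ⊆ Finset.Icc 1 N → ¬ Ind X → ∃ C, C ⊆ X ∧ IsCircuitOf N Ind C := by
  intro X
  induction X using Finset.strongInduction with
  | _ X ih =>
    intro hXs hdep
    by_cases h : ∀ x ∈ X, Ind (X.erase x)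
    · exact ⟨X, subset_rfl, hXs, hdep, h⟩
    · push_neg at h
      obtain ⟨x, hx, hnd⟩ := h
      obtain ⟨C, hCs, hC⟩ := ih (X.erase x) (Finset.erase_ssubset hx)
        ((Finset.erase_subset _ _).trans hXs) hnd
      exact ⟨C, hCs.trans (Finset.erase_subset _ _), hC⟩

lemma easyPT {r : ℕ} {lo hi : Fin r → ℕ} (hlh : ∀ j, lo j ≤ hi j) {X : Finset ℕ}
    (hind : IsPT r lo hi X) {x y : ℕ} (hxy : x ≤ y) :
    (X.filter (fun z => x ≤ z ∧ z ≤ y)).card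
      + (Finset.univ.filter (fun j : Fin r => hi j < x)).card
      ≤ (Finset.univ.filter (fun j : Fin r => lo j ≤ y)).card := by
  obtain ⟨f, hinj, hf⟩ := hind
  classical
  set Z := X.filter (fun z => x ≤ z ∧ z ≤ y) with hZ
  set A := Finset.univ.filter (fun j : Fin r => lo j ≤ y ∧ x ≤ hi j) with hA
  set H := Finset.univ.filter (fun j : Fin r => hi j < x) with hH
  set B := Finset.univ.filter (fun j : Fin r => lo j ≤ y) with hB
  have hmemX : ∀ z : {z // z ∈ Z}, z.1 ∈ X := fun z => (Finset.mem_filter.1 z.2).1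
  have hmemA : ∀ z : {z // z ∈ Z}, (f ⟨z.1, hmemX z⟩) ∈ A := by
    rintro ⟨z, hz⟩
    have h1 := (Finset.mem_filter.1 hz).2
    obtain ⟨hlo, hhi⟩ := hf ⟨z, (Finset.mem_filter.1 hz).1⟩
    exact Finset.mem_filter.2 ⟨Finset.mem_univ _, le_trans hlo h1.2, le_trans h1.1 hhi⟩
  have hZA : Z.card ≤ A.card := by
    rw [← Fintype.card_coe, ← Fintype.card_coe]
    refine Fintype.card_le_of_injective (fun z => ⟨f ⟨z.1, hmemX z⟩, hmemA z⟩) ?_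
    intro a b hab
    have h2 : f ⟨a.1, hmemX a⟩ = f ⟨b.1, hmemX b⟩ := congrArg Subtype.val hab
    have h3 := congrArg Subtype.val (hinj h2)
    exact Subtype.ext h3
  have hdisj : Disjoint A H := by
    rw [Finset.disjoint_left]
    intro j hjA hjH
    have h1 := (Finset.mem_filter.1 hjA).2.2
    have h2 := (Finset.mem_filter.1 hjH).2
    omega
  have hsub : A ∪ H ⊆ B := by
    intro j hj
    rcases Finset.mem_union.1 hj with h | h
    · exact Finset.mem_filter.2 ⟨Finset.mem_univ _, (Finset.mem_filter.1 h).2.1⟩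
    · have h2 := (Finset.mem_filter.1 h).2
      have := hlh j
      exact Finset.mem_filter.2 ⟨Finset.mem_univ _, by omega⟩
  calc Z.card + H.card ≤ A.card + H.card := by omega
  _ = (A ∪ H).card := (Finset.card_union_of_disjoint hdisj).symm
  _ ≤ B.card := Finset.card_le_card hsub

lemma easyPQ {r : ℕ} (P Q : Finset ℕ) (hP : P.card = r) (hQ : Q.card = r)
    (hlh : ∀ j : Fin r, (Q.orderIsoOfFin hQ j : ℕ) ≤ (P.orderIsoOfFin hP j : ℕ))
    {X : Finset ℕ}
    (hind : IsPT r (fun j => (Q.orderIsoOfFin hQ j : ℕ))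
      (fun j => (P.orderIsoOfFin hP j : ℕ)) X)
    {x y : ℕ} (hxy : x ≤ y) :
    (X.filter (fun z => x ≤ z ∧ z ≤ y)).card + (P.filter (· < x)).card
      ≤ (Q.filter (· ≤ y)).card := by
  have h := easyPT hlh hind hxy
  rwa [card_iso_filter P hP (· < x), card_iso_filter Q hQ (· ≤ y)] at h

lemma hardPT {r : ℕ} (P Q : Finset ℕ) (hP : P.card = r) (hQ : Q.card = r) (X : Finset ℕ)
    (hhall : ∀ x ∈ X, ∀ y ∈ X, x ≤ y →
      (X.filter (fun z => x ≤ z ∧ z ≤ y)).card + (P.filter (· < x)).card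
        ≤ (Q.filter (· ≤ y)).card) :
    IsPT r (fun j => (Q.orderIsoOfFin hQ j : ℕ)) (fun j => (P.orderIsoOfFin hP j : ℕ)) X := by
  classical
  have hne : ∀ x ∈ X, (X.filter (fun y => x ≤ y)).Nonempty :=
    fun x hx => ⟨x, Finset.mem_filter.2 ⟨hx, le_refl x⟩⟩
  set c : ℕ → ℕ := fun x => if h : (X.filter (fun y => x ≤ y)).Nonempty
      then ((X.filter (fun y => x ≤ y)).image
        (fun y => (Q.filter (· ≤ y)).card - (X.filter (fun z => x ≤ z ∧ z ≤ y)).card)).min'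
        (h.image _)
      else 0 with hc
  have c_le : ∀ x ∈ X, ∀ y ∈ X, x ≤ y →
      c x ≤ (Q.filter (· ≤ y)).card - (X.filter (fun z => x ≤ z ∧ z ≤ y)).card := by
    intro x hx y hy hxy
    rw [hc]
    simp only [dif_pos (hne x hx)]
    exact Finset.min'_le _ _ (Finset.mem_image_of_mem _ (Finset.mem_filter.2 ⟨hy, hxy⟩))
  have c_spec : ∀ x ∈ X, ∃ y, y ∈ X ∧ x ≤ y ∧
      c x = (Q.filter (· ≤ y)).card - (X.filter (fun z => x ≤ z ∧ z ≤ y)).card := by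
    intro x hx
    have h := Finset.min'_mem ((X.filter (fun y => x ≤ y)).image
        (fun y => (Q.filter (· ≤ y)).card - (X.filter (fun z => x ≤ z ∧ z ≤ y)).card))
        ((hne x hx).image _)
    rw [Finset.mem_image] at h
    obtain ⟨y, hy, hval⟩ := h
    refine ⟨y, (Finset.mem_filter.1 hy).1, (Finset.mem_filter.1 hy).2, ?_⟩
    rw [hc]
    simp only [dif_pos (hne x hx)]
    exact hval.symm
  have cnt_self : ∀ x ∈ X, (X.filter (fun z => x ≤ z ∧ z ≤ x)).card = 1 := by
    intro x hx
    have h : X.filter (fun z => x ≤ z ∧ z ≤ x) = {x} := by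
      ext z
      simp only [Finset.mem_filter, Finset.mem_singleton]
      constructor
      · rintro ⟨hz, h1, h2⟩; omega
      · rintro rfl; exact ⟨hx, le_refl _, le_refl _⟩
    rw [h, Finset.card_singleton]
  have cntP_le : ∀ x ∈ X, (P.filter (· < x)).card ≤ c x := by
    intro x hx
    obtain ⟨y, hy, hxy, hcx⟩ := c_spec x hx
    have h := hhall x hx y hy hxy
    omega
  have c_lt_β : ∀ x ∈ X, c x < (Q.filter (· ≤ x)).card := by
    intro x hx
    have h1 := c_le x hx x hx le_rfl
    have h2 := cnt_self x hx
    have h3 := hhall x hx x hx le_rfl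
    omega
  have c_lt_r : ∀ x ∈ X, c x < r := by
    intro x hx
    have h1 := c_lt_β x hx
    have h2 : (Q.filter (· ≤ x)).card ≤ r := by
      rw [← hQ]; exact Finset.card_filter_le Q (· ≤ x)
    omega
  have c_strict : ∀ x ∈ X, ∀ y ∈ X, x < y → c x < c y := by
    intro x hx y hy hlt
    obtain ⟨y₀, hy₀, hyy₀, hcy⟩ := c_spec y hy
    have hxy₀ : x ≤ y₀ := le_of_lt (lt_of_lt_of_le hlt hyy₀)
    have hcntlt : (X.filter (fun z => y ≤ z ∧ z ≤ y₀)).card + 1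
        ≤ (X.filter (fun z => x ≤ z ∧ z ≤ y₀)).card := by
      have hsub : insert x (X.filter (fun z => y ≤ z ∧ z ≤ y₀))
          ⊆ X.filter (fun z => x ≤ z ∧ z ≤ y₀) := by
        intro z hz
        rcases Finset.mem_insert.1 hz with rfl | hz
        · exact Finset.mem_filter.2 ⟨hx, le_refl z, hxy₀⟩
        · obtain ⟨hzX, h1, h2⟩ := Finset.mem_filter.1 hz
          exact Finset.mem_filter.2 ⟨hzX, le_trans (le_of_lt hlt) h1, h2⟩
      have hx0 : x ∉ X.filter (fun z => y ≤ z ∧ z ≤ y₀) := by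
        intro hmem
        obtain ⟨_, h1, _⟩ := Finset.mem_filter.1 hmem
        omega
      have := Finset.card_le_card hsub
      rwa [Finset.card_insert_of_notMem hx0] at this
    have hcle := c_le x hx y₀ hy₀ hxy₀
    have hble := hhall x hx y₀ hy₀ hxy₀
    omega
  refine ⟨fun x => ⟨c x.1, c_lt_r x.1 x.2⟩, ?_, ?_⟩
  · intro a b hab
    have hvals : c a.1 = c b.1 := congrArg Fin.val hab
    rcases lt_trichotomy (a.1 : ℕ) b.1 with h | h | h
    · exact absurd hvals (ne_of_lt (c_strict _ a.2 _ b.2 h))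
    · exact Subtype.ext h
    · exact absurd hvals.symm (ne_of_lt (c_strict _ b.2 _ a.2 h))
  · intro x
    constructor
    · exact (iso_count Q hQ (· ≤ (x:ℕ)) (fun a b hab h => le_trans hab h)
        ⟨c x.1, c_lt_r x.1 x.2⟩).2 (c_lt_β x.1 x.2)
    · by_contra hcon
      push_neg at hcon
      have h1 := (iso_count P hP (· < (x:ℕ)) (fun a b hab h => lt_of_le_of_lt hab h)
        ⟨c x.1, c_lt_r x.1 x.2⟩).1 hcon
      have h2 := cntP_le x.1 x.2
      simp only at h1
      omega

lemma pt_empty {r : ℕ} {lo hi : Fin r → ℕ} : IsPT r lo hi (∅ : Finset ℕ) :=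
  ⟨fun x => (Finset.notMem_empty _ x.2).elim,
   fun a => (Finset.notMem_empty _ a.2).elim,
   fun a => (Finset.notMem_empty _ a.2).elim⟩

lemma pt_singleton {r : ℕ} {lo hi : Fin r → ℕ} {a : ℕ} (j : Fin r)
    (h1 : lo j ≤ a) (h2 : a ≤ hi j) : IsPT r lo hi {a} := by
  refine ⟨fun _ => j, ?_, ?_⟩
  · intro u v _
    have hu := Finset.mem_singleton.1 u.2
    have hv := Finset.mem_singleton.1 v.2
    exact Subtype.ext (hu.trans hv.symm)
  · intro z
    have hz := Finset.mem_singleton.1 z.2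
    rw [hz]
    exact ⟨h1, h2⟩

lemma P'count {m r : ℕ} {P P' : Finset ℕ} (hPs : P ⊆ Finset.Icc 1 (m + r))
    (hP's : P' ⊆ Finset.Icc 1 (m + r))
    (hshift : ∀ p ∈ Finset.Icc 1 (m + r), (p ∈ P' ↔ (p = 1 ∨ p - 1 ∈ P)))
    (v : ℕ) (hv2 : 2 ≤ v) (hvm : v ≤ m + r + 1) :
    (P'.filter (· < v)).card = (P.filter (· ≤ v - 2)).card + 1 := by
  classical
  have hset : P'.filter (· < v) = insert 1 ((P.filter (· ≤ v - 2)).image (· + 1)) := by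
    ext z
    simp only [Finset.mem_filter, Finset.mem_insert, Finset.mem_image]
    constructor
    · rintro ⟨hzP', hzv⟩
      by_cases h1 : z = 1
      · exact Or.inl h1
      · right
        have hzI := Finset.mem_Icc.1 (hP's hzP')
        rcases (hshift z (hP's hzP')).1 hzP' with h | h
        · omega
        · exact ⟨z - 1, ⟨h, by omega⟩, by omega⟩
    · rintro (rfl | ⟨p, hp, rfl⟩)
      · have h1m : (1:ℕ) ∈ Finset.Icc 1 (m + r) := Finset.mem_Icc.2 ⟨le_rfl, by omega⟩
        exact ⟨(hshift 1 h1m).2 (Or.inl rfl), by omega⟩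
      · obtain ⟨hpP, hple⟩ := hp
        have hpI := Finset.mem_Icc.1 (hPs hpP)
        have hmem : p + 1 ∈ Finset.Icc 1 (m + r) := Finset.mem_Icc.2 ⟨by omega, by omega⟩
        exact ⟨(hshift (p + 1) hmem).2 (Or.inr (by simpa using hpP)), by omega⟩
  rw [hset, Finset.card_insert_of_notMem, Finset.card_image_of_injective _ (add_left_injective 1)]
  intro hmem
  obtain ⟨p, hp, hpe⟩ := Finset.mem_image.1 hmem
  have := Finset.mem_Icc.1 (hPs (Finset.mem_filter.1 hp).1)
  omega

example (a : ℕ) (ha : 1 ≤ a) (P : Finset ℕ) : P.filter (· ≤ a - 1) = P.filter (· < a) :=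
  Finset.filter_congr (fun z _ => by omega)

example (P : Finset ℕ) (p : ℕ → Prop) [DecidablePred p] (h : ∀ z ∈ P, p z) :
    P.filter p = P := Finset.filter_eq_self.2 h

example (D C : Finset ℕ) (h : D ⊆ C) (hne : D ≠ C) : ∃ z ∈ C, z ∉ D :=
  Finset.exists_of_ssubset (lt_of_le_of_ne h hne)

/-- **The broken circuit complex of a lattice path matroid.**  Let `M[P,Q]` be a
lattice path matroid without loops (every ground element lies in some interval of
the presentation), with elements ordered naturally, and let `P'` be the lattice path
determined by `N·P = P'·N` (so the `p`-th letter of `P'` is `N` iff `p = 1` or the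
`(p-1)`-st letter of `P` is `N`).  Then the broken circuit complex of `M[P,Q]`
equals the independence complex of `M[P',Q]`: a set `X ⊆ [1, m+r]` contains no
broken circuit of `M[P,Q]` iff `X` is independent (a partial transversal) in
`M[P',Q]`.  In particular the nbc-bases of `M[P,Q]` are exactly the bases of
`M[P',Q]`. -/
theorem stmt17 (m r : ℕ) (P Q P' : Finset ℕ)
    (hPs : P ⊆ Finset.Icc 1 (m + r)) (hQs : Q ⊆ Finset.Icc 1 (m + r))
    (hP : P.card = r) (hQ : Q.card = r)
    (hPQ : ∀ p ≤ m + r, (P.filter (· ≤ p)).card ≤ (Q.filter (· ≤ p)).card)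
    (hNoLoops : ∀ x ∈ Finset.Icc 1 (m + r), ∃ j : Fin r,
      (Q.orderIsoOfFin hQ j : ℕ) ≤ x ∧ x ≤ (P.orderIsoOfFin hP j : ℕ))
    (hP's : P' ⊆ Finset.Icc 1 (m + r)) (hP' : P'.card = r)
    (hshift : ∀ p ∈ Finset.Icc 1 (m + r), (p ∈ P' ↔ (p = 1 ∨ p - 1 ∈ P))) :
    ∀ X ⊆ Finset.Icc 1 (m + r),
      (NoBrokenCircuit (m + r)
          (IsPT r (fun j => (Q.orderIsoOfFin hQ j : ℕ)) (fun j => (P.orderIsoOfFin hP j : ℕ))) X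
        ↔ IsPT r (fun j => (Q.orderIsoOfFin hQ j : ℕ))
            (fun j => (P'.orderIsoOfFin hP' j : ℕ)) X) := by
  classical
  intro X hX
  have hQP : ∀ j : Fin r, (Q.orderIsoOfFin hQ j : ℕ) ≤ (P.orderIsoOfFin hP j : ℕ) := by
    intro j
    set a := (P.orderIsoOfFin hP j : ℕ) with ha
    have haP : a ∈ P := (P.orderIsoOfFin hP j).2
    have haI := Finset.mem_Icc.1 (hPs haP)
    have h1 : (j:ℕ) < (P.filter (· ≤ a)).card :=
      (iso_count P hP (· ≤ a) (fun u v huv h => le_trans huv h) j).1 le_rfl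
    have h2 := hPQ a haI.2
    exact (iso_count Q hQ (· ≤ a) (fun u v huv h => le_trans huv h) j).2 (by omega)
  have hQP' : ∀ j : Fin r, (Q.orderIsoOfFin hQ j : ℕ) ≤ (P'.orderIsoOfFin hP' j : ℕ) := by
    intro j
    set a := (P'.orderIsoOfFin hP' j : ℕ) with ha
    have haP : a ∈ P' := (P'.orderIsoOfFin hP' j).2
    have haI := Finset.mem_Icc.1 (hP's haP)
    have h1 : (j:ℕ) < (P'.filter (· ≤ a)).card :=
      (iso_count P' hP' (· ≤ a) (fun u v huv h => le_trans huv h) j).1 le_rfl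
    have heq : P'.filter (· ≤ a) = P'.filter (· < a + 1) :=
      Finset.filter_congr (fun z _ => by omega)
    have hcnt := P'count hPs hP's hshift (a + 1) (by omega) (by omega)
    have heq2 : P.filter (· ≤ a + 1 - 2) = P.filter (· < a) :=
      Finset.filter_congr (fun z _ => by omega)
    obtain ⟨i, hqi, hpi⟩ := hNoLoops a (Finset.mem_Icc.2 haI)
    have h4 : (P.filter (· < a)).card ≤ (i:ℕ) := by
      by_contra hcon
      push_neg at hcon
      have := (iso_count P hP (· < a) (fun u v huv h => lt_of_le_of_lt huv h) i).2 hcon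
      omega
    have h5 : (i:ℕ) < (Q.filter (· ≤ a)).card :=
      (iso_count Q hQ (· ≤ a) (fun u v huv h => le_trans huv h) i).1 hqi
    rw [heq, hcnt, heq2] at h1
    exact (iso_count Q hQ (· ≤ a) (fun u v huv h => le_trans huv h) j).2 (by omega)
  constructor
  · -- NBC → Ind'
    intro hnbc
    apply hardPT P' Q hP' hQ X
    intro x hx y hy hxy
    by_contra hvio
    push_neg at hvio
    set D := X.filter (fun z => x ≤ z ∧ z ≤ y) with hDdef
    have hxD : x ∈ D := Finset.mem_filter.2 ⟨hx, le_rfl, hxy⟩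
    have hDX : D ⊆ X := Finset.filter_subset _ _
    have hDIcc : D ⊆ Finset.Icc 1 (m + r) := hDX.trans hX
    have hxIcc := Finset.mem_Icc.1 (hX hx)
    have hyIcc := Finset.mem_Icc.1 (hX hy)
    rcases eq_or_lt_of_le hxIcc.1 with h1 | h2
    · -- x = 1
      have hP'0 : (P'.filter (· < x)).card = 0 := by
        rw [Finset.card_eq_zero, Finset.filter_eq_empty_iff]
        intro z hz
        have := Finset.mem_Icc.1 (hP's hz)
        omega
      have hdep : ¬ IsPT r (fun j => (Q.orderIsoOfFin hQ j : ℕ))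
          (fun j => (P.orderIsoOfFin hP j : ℕ)) D := by
        intro hind
        have h := easyPQ P Q hP hQ hQP hind hxy
        have hDf : D.filter (fun z => x ≤ z ∧ z ≤ y) = D :=
          Finset.filter_eq_self.2 (fun z hz => (Finset.mem_filter.1 hz).2)
        have hP0 : (P.filter (· < x)).card = 0 := by
          rw [Finset.card_eq_zero, Finset.filter_eq_empty_iff]
          intro z hz
          have := Finset.mem_Icc.1 (hPs hz)
          omega
        rw [hDf, hP0] at h
        omega
      obtain ⟨C, hCD, hCIcc, hCdep, hCmin⟩ := exists_circuit (m + r) _ D hDIcc hdep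
      have hCne : C.Nonempty := by
        rcases Finset.eq_empty_or_nonempty C with rfl | h
        · exact absurd pt_empty hCdep
        · exact h
      exact hnbc ⟨C, C.min' hCne, ⟨hCIcc, hCdep, hCmin⟩, Finset.min'_mem _ _,
        fun z hz => Finset.min'_le _ _ hz, (Finset.erase_subset _ _).trans (hCD.trans hDX)⟩
    · -- 1 < x
      set w := x - 1 with hw
      have hcard : (P'.filter (· < x)).card = (P.filter (· ≤ x - 2)).card + 1 :=
        P'count hPs hP's hshift x (by omega) (by omega)
      have hwD : w ∉ D := fun hmem => by
        have := (Finset.mem_filter.1 hmem).2.1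
        omega
      have hdep : ¬ IsPT r (fun j => (Q.orderIsoOfFin hQ j : ℕ))
          (fun j => (P.orderIsoOfFin hP j : ℕ)) (insert w D) := by
        intro hind
        have h := easyPQ P Q hP hQ hQP hind (show w ≤ y by omega)
        have hDf : (insert w D).filter (fun z => w ≤ z ∧ z ≤ y) = insert w D := by
          apply Finset.filter_eq_self.2
          intro z hz
          rcases Finset.mem_insert.1 hz with hzw | hzD
          · omega
          · have := (Finset.mem_filter.1 hzD).2
            omega
        have hPw : P.filter (· < w) = P.filter (· ≤ x - 2) :=
          Finset.filter_congr (fun z _ => by omega)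
        rw [hDf, Finset.card_insert_of_notMem hwD, hPw] at h
        omega
      have hIcc : insert w D ⊆ Finset.Icc 1 (m + r) :=
        Finset.insert_subset (Finset.mem_Icc.2 ⟨by omega, by omega⟩) hDIcc
      obtain ⟨C, hCD, hCIcc, hCdep, hCmin⟩ := exists_circuit (m + r) _ (insert w D) hIcc hdep
      have hCne : C.Nonempty := by
        rcases Finset.eq_empty_or_nonempty C with rfl | h
        · exact absurd pt_empty hCdep
        · exact h
      have herase : C.erase (C.min' hCne) ⊆ X := by
        intro z hz
        have hzC := Finset.mem_of_mem_erase hz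
        have hzne := Finset.ne_of_mem_erase hz
        rcases Finset.mem_insert.1 (hCD hzC) with hzw | hzD
        · exfalso
          apply hzne
          have hm1 : C.min' hCne ≤ z := Finset.min'_le _ _ hzC
          rcases Finset.mem_insert.1 (hCD (Finset.min'_mem C hCne)) with he | hmD
          · omega
          · have hxm : x ≤ C.min' hCne := (Finset.mem_filter.1 hmD).2.1
            omega
        · exact hDX hzD
      exact hnbc ⟨C, C.min' hCne, ⟨hCIcc, hCdep, hCmin⟩, Finset.min'_mem _ _,
        fun z hz => Finset.min'_le _ _ hz, herase⟩
  · -- Ind' → NBC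
    intro hind'
    rintro ⟨C, x₀, ⟨hCs, hCdep, hCmin⟩, hx₀C, hx₀min, hBX⟩
    have hhallC : ¬ (∀ x ∈ C, ∀ y ∈ C, x ≤ y →
        (C.filter (fun z => x ≤ z ∧ z ≤ y)).card + (P.filter (· < x)).card
          ≤ (Q.filter (· ≤ y)).card) :=
      fun hh => hCdep (hardPT P Q hP hQ C hh)
    push_neg at hhallC
    obtain ⟨x, hxC, y, hyC, hxy, hvio⟩ := hhallC
    set D := C.filter (fun z => x ≤ z ∧ z ≤ y) with hDdef
    have hDC : D ⊆ C := Finset.filter_subset _ _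
    have hDdep : ¬ IsPT r (fun j => (Q.orderIsoOfFin hQ j : ℕ))
        (fun j => (P.orderIsoOfFin hP j : ℕ)) D := by
      intro hind
      have h := easyPQ P Q hP hQ hQP hind hxy
      have hDf : D.filter (fun z => x ≤ z ∧ z ≤ y) = D :=
        Finset.filter_eq_self.2 (fun z hz => (Finset.mem_filter.1 hz).2)
      rw [hDf] at h
      omega
    have hDeq : D = C := by
      by_contra hne
      obtain ⟨z, hzC, hzD⟩ := Finset.exists_of_ssubset (lt_of_le_of_ne hDC hne)
      have hsub : D ⊆ C.erase z := fun w hw =>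
        Finset.mem_erase.2 ⟨fun he => hzD (he ▸ hw), hDC hw⟩
      exact hDdep (pt_mono hsub (hCmin z hzC))
    have hCxy : ∀ z ∈ C, x ≤ z ∧ z ≤ y := by
      intro z hz
      have hzD : z ∈ D := by rw [hDeq]; exact hz
      exact (Finset.mem_filter.1 hzD).2
    have hxx₀ : x = x₀ := le_antisymm (hCxy x₀ hx₀C).1 (hx₀min x hxC)
    have hyne : y ≠ x₀ := by
      intro he
      have hCsing : C = {x₀} := by
        apply Finset.eq_singleton_iff_unique_mem.2
        refine ⟨hx₀C, ?_⟩
        intro z hz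
        have := hCxy z hz
        omega
      obtain ⟨j, hj1, hj2⟩ := hNoLoops x₀ (hCs hx₀C)
      exact hCdep (hCsing ▸ pt_singleton j hj1 hj2)
    have hyB : y ∈ C.erase x₀ := Finset.mem_erase.2 ⟨hyne, hyC⟩
    have hBne : (C.erase x₀).Nonempty := ⟨y, hyB⟩
    have hindB : IsPT r (fun j => (Q.orderIsoOfFin hQ j : ℕ))
        (fun j => (P'.orderIsoOfFin hP' j : ℕ)) (C.erase x₀) := pt_mono hBX hind'
    set b₁ := (C.erase x₀).min' hBne with hb₁
    have hb₁mem : b₁ ∈ C.erase x₀ := Finset.min'_mem _ _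
    have hb₁C : b₁ ∈ C := Finset.mem_of_mem_erase hb₁mem
    have hb₁x₀ : x₀ < b₁ :=
      lt_of_le_of_ne (hx₀min b₁ hb₁C) (Ne.symm (Finset.ne_of_mem_erase hb₁mem))
    have hb₁y : b₁ ≤ y := Finset.min'_le _ _ hyB
    have h := easyPQ P' Q hP' hQ hQP' hindB hb₁y
    have hBf : (C.erase x₀).filter (fun z => b₁ ≤ z ∧ z ≤ y) = C.erase x₀ :=
      Finset.filter_eq_self.2 (fun z hz =>
        ⟨Finset.min'_le _ _ hz, (hCxy z (Finset.mem_of_mem_erase hz)).2⟩)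
    have hBcard : (C.erase x₀).card = C.card - 1 := Finset.card_erase_of_mem hx₀C
    have hx₀Icc := Finset.mem_Icc.1 (hCs hx₀C)
    have hb₁Icc := Finset.mem_Icc.1 (hCs hb₁C)
    have hcard := P'count hPs hP's hshift b₁ (by omega) (by omega)
    have hmono2 : (P.filter (· < x₀)).card ≤ (P.filter (· ≤ b₁ - 2)).card := by
      apply Finset.card_le_card
      intro z hz
      obtain ⟨hzP, hzlt⟩ := Finset.mem_filter.1 hz
      exact Finset.mem_filter.2 ⟨hzP, by omega⟩
    have hCpos : 1 ≤ C.card := Finset.card_pos.2 ⟨x₀, hx₀C⟩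
    rw [hDeq] at hvio
    rw [hxx₀] at hvio
    rw [hBf] at h
    omega
end

section
/- Let the loopless k-Catalan matroid be M̂^k_n = M[(N E^k)^{n−1} N], the generalized Catalan matroid with upper path (N E^k)^{n−1} N. Then the absolute value of the coefficient of λ^{n−i} in the characteristic polynomial χ(M̂^k_n; λ) equals: 1 if i = 0; (((k+1)(n−i−1)+2)/((k+1)(n−1)+2)) * binomial((k+1)(n−1)+2, i) if 1 ≤ i ≤ n−1; and the k-Catalan number C^k_{n−1} if i = n. In particular, |μ(M̂^k_n)| = C^k_{n−1}. -/
/-- The number of `i`-element nbc-sets of the loopless `k`-Catalan matroid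
`M̂^k_n = M[(N E^k)^{n-1} N]`, the generalized Catalan matroid on
`[1, (n-1)(k+1)+1]` of rank `n` presented by the intervals
`N_j = [(j-1)(k+1)+1, (n-1)k + j]` for `j ∈ [n]`.  Up to sign these are the
coefficients of its characteristic polynomial:
`χ(M̂^k_n; λ) = Σ_{i=0}^{n} (-1)^i nbc(M̂^k_n; i) λ^{n-i}`. -/
noncomputable def nbcCount (k n i : ℕ) : ℕ :=
  Nat.card {X : Finset ℕ // X ⊆ Finset.Icc 1 ((n - 1) * (k + 1) + 1) ∧ X.card = i ∧
    NoBrokenCircuit ((n - 1) * (k + 1) + 1)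
      (IsPT n (fun j => (j : ℕ) * (k + 1) + 1) (fun j => (n - 1) * k + (j : ℕ) + 1)) X}

namespace CatAux

/-- the "shifted" nbc condition -/
def Ok (k : ℕ) (X : Finset ℕ) : Prop := ∀ y ∈ X, (X.filter (· ≤ y)).card * (k+1) < y

instance (k : ℕ) (X : Finset ℕ) : Decidable (Ok k X) := by unfold Ok; infer_instance

/-- number of `Ok` subsets of `[1,M]` of size `a` -/
def cnt (k M a : ℕ) : ℕ :=
  ((Finset.Icc 1 M).powerset.filter (fun X => X.card = a ∧ Ok k X)).card

lemma cnt_zero (k M : ℕ) : cnt k M 0 = 1 := by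
  unfold cnt
  rw [Finset.card_eq_one]
  refine ⟨∅, ?_⟩
  ext X
  simp only [Finset.mem_filter, Finset.mem_powerset, Finset.card_eq_zero,
    Finset.mem_singleton]
  constructor
  · rintro ⟨-, h, -⟩; exact h
  · rintro rfl; exact ⟨Finset.empty_subset _, rfl, by intro y hy; simp at hy⟩

lemma Ok.mono {k : ℕ} {X Y : Finset ℕ} (hXY : X ⊆ Y) (hY : Ok k Y) : Ok k X := by
  intro y hy
  have := hY y (hXY hy)
  refine lt_of_le_of_lt ?_ this
  exact Nat.mul_le_mul_right _ (Finset.card_le_card (Finset.filter_subset_filter _ hXY))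

lemma Ok.max_lt {k : ℕ} {X : Finset ℕ} (hX : Ok k X) (hne : X.Nonempty) :
    X.card * (k+1) < X.max' hne := by
  have h := hX (X.max' hne) (X.max'_mem hne)
  have : X.filter (· ≤ X.max' hne) = X := by
    apply Finset.filter_true_of_mem
    intro x hx; exact Finset.le_max' X x hx
  rwa [this] at h

lemma cnt_eq_zero {k M a : ℕ} (ha : 1 ≤ a) (hM : M ≤ a * (k+1)) : cnt k M a = 0 := by
  unfold cnt
  rw [Finset.card_eq_zero]
  rw [Finset.filter_eq_empty_iff]
  rintro X hX ⟨hcard, hok⟩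
  have hne : X.Nonempty := by rw [← Finset.card_pos, hcard]; omega
  have h := hok.max_lt hne
  have hmem := Finset.mem_powerset.mp hX (X.max'_mem hne)
  rw [Finset.mem_Icc] at hmem
  rw [hcard] at h
  omega

lemma cnt_succ {k M a : ℕ} (ha : 1 ≤ a) (hM : a * (k+1) < M + 1) :
    cnt k (M+1) a = cnt k M a + cnt k M (a-1) := by
  unfold cnt
  rw [← Finset.card_filter_add_card_filter_not (s := (Finset.Icc 1 (M+1)).powerset.filter
      (fun X => X.card = a ∧ Ok k X)) (p := fun X => (M+1) ∉ X)]
  rw [Finset.filter_filter, Finset.filter_filter]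
  congr 1
  · -- not containing M+1
    congr 1
    ext X
    simp only [Finset.mem_filter, Finset.mem_powerset]
    constructor
    · rintro ⟨hsub, h, hnm⟩
      refine ⟨fun z hz => ?_, h⟩
      have h1 := hsub hz
      rw [Finset.mem_Icc] at h1 ⊢
      have h2 : z ≠ M + 1 := fun e => hnm (e ▸ hz)
      omega
    · rintro ⟨hsub, h⟩
      have hnm : (M+1) ∉ X := fun hm => by
        have := hsub hm; rw [Finset.mem_Icc] at this; omega
      refine ⟨fun z hz => ?_, h, hnm⟩
      have := hsub hz; rw [Finset.mem_Icc] at this ⊢; omega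
  · -- containing M+1 : biject with cnt k M (a-1) via erase
    rw [Finset.card_bij (fun X _ => X.erase (M+1))]
    · rintro X hX
      simp only [Finset.mem_filter, Finset.mem_powerset, not_not] at hX ⊢
      obtain ⟨hsub, ⟨hcard, hok⟩, hmem⟩ := hX
      refine ⟨fun z hz => ?_, ?_, hok.mono (Finset.erase_subset _ _)⟩
      · rw [Finset.mem_erase] at hz
        have := hsub hz.2; rw [Finset.mem_Icc] at this ⊢
        have := hz.1; omega
      · rw [Finset.card_erase_of_mem hmem, hcard]
    · rintro X hX Y hY h
      simp only [Finset.mem_filter, not_not] at hX hY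
      rw [← Finset.insert_erase hX.2.2, ← Finset.insert_erase hY.2.2, h]
    · rintro Y hY
      simp only [Finset.mem_filter, Finset.mem_powerset] at hY
      obtain ⟨hsub, hcard, hok⟩ := hY
      have hnm : (M+1) ∉ Y := fun hm => by
        have := hsub hm; rw [Finset.mem_Icc] at this; omega
      refine ⟨insert (M+1) Y, ?_, by rw [Finset.erase_insert hnm]⟩
      simp only [Finset.mem_filter, Finset.mem_powerset, not_not]
      refine ⟨?_, ⟨?_, ?_⟩, Finset.mem_insert_self _ _⟩
      · intro z hz
        rw [Finset.mem_insert] at hz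
        rcases hz with rfl | hz
        · rw [Finset.mem_Icc]; omega
        · have := hsub hz; rw [Finset.mem_Icc] at this ⊢; omega
      · rw [Finset.card_insert_of_notMem hnm, hcard]; omega
      · intro y hy
        rw [Finset.mem_insert] at hy
        rcases hy with rfl | hy
        · have : (insert (M+1) Y).filter (· ≤ M+1) = insert (M+1) Y := by
            apply Finset.filter_true_of_mem
            intro x hx
            rcases Finset.mem_insert.mp hx with rfl | hx
            · exact le_refl _
            · have := hsub hx; rw [Finset.mem_Icc] at this; omega
          rw [this, Finset.card_insert_of_notMem hnm, hcard]
          have hae : a - 1 + 1 = a := by omega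
          rw [hae]; exact hM
        · have hyM : y ≤ M := by
            have := hsub hy; rw [Finset.mem_Icc] at this; omega
          have : (insert (M+1) Y).filter (· ≤ y) = Y.filter (· ≤ y) := by
            rw [Finset.filter_insert, if_neg (by omega)]
          rw [this]
          exact hok y hy

/-- the key binomial-identity step -/
lemma cnt_step {k M a : ℕ} (ha : 1 ≤ a) (hM : a * (k+1) ≤ M)
    (IH1 : cnt k M a * M = (M - a * (k+1)) * Nat.choose M a)
    (IH2 : cnt k M (a-1) * M = (M - (a-1) * (k+1)) * Nat.choose M (a-1)) :
    (cnt k M a + cnt k M (a-1)) * (M + 1) = (M + 1 - a * (k+1)) * Nat.choose (M+1) a := by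
  obtain ⟨b, rfl⟩ : ∃ b, a = b + 1 := ⟨a - 1, by omega⟩
  simp only [Nat.add_sub_cancel] at IH2 ⊢
  have hMpos : 0 < M := lt_of_lt_of_le (by positivity) hM
  apply Nat.eq_of_mul_eq_mul_right hMpos
  rw [Nat.choose_succ_succ]
  have hrel := Nat.choose_succ_right_eq M b
  have hs1 : b * (k+1) ≤ M :=
    le_trans (Nat.mul_le_mul_right _ (by omega : b ≤ b + 1)) hM
  have hs2 : b ≤ M := le_trans (Nat.le_mul_of_pos_right _ (by omega)) hs1
  have hs3 : (b+1) * (k+1) ≤ M + 1 := by omega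
  zify [hM, hs1, hs2, hs3] at IH1 IH2 hrel ⊢
  linear_combination (↑M+1) * IH1 + (↑M+1) * IH2 - ((k:ℤ)+1) * hrel

lemma cnt_formula (k : ℕ) : ∀ M a, cnt k M a * M = (M - a * (k+1)) * Nat.choose M a := by
  intro M
  induction M with
  | zero => intro a; simp
  | succ M IH =>
    intro a
    rcases Nat.eq_zero_or_pos a with rfl | ha
    · rw [cnt_zero]; simp
    rcases le_or_gt (M+1) (a * (k+1)) with hM | hM
    · rw [cnt_eq_zero ha hM, Nat.sub_eq_zero_of_le hM]; simp
    · rw [cnt_succ ha hM]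
      exact cnt_step ha (by omega) (IH a) (IH (a-1))



/-! ### Independence characterization -/

variable {k n : ℕ}

/-- rank thresholds condition: the `t`-th smallest element is at least `(t-1)(k+1)+1`. -/
def IndCond (k : ℕ) (X : Finset ℕ) : Prop :=
  ∀ y ∈ X, ((X.filter (· ≤ y)).card - 1) * (k+1) < y

lemma isPT_card_le {X : Finset ℕ}
    (h : IsPT n (fun j => (j : ℕ) * (k + 1) + 1) (fun j => (n - 1) * k + (j : ℕ) + 1) X) :
    X.card ≤ n := by
  obtain ⟨f, hf, -⟩ := h
  have := Fintype.card_le_of_injective f hf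
  simpa [Fintype.card_coe] using this

lemma isPT_indCond {X : Finset ℕ}
    (h : IsPT n (fun j => (j : ℕ) * (k + 1) + 1) (fun j => (n - 1) * k + (j : ℕ) + 1) X) :
    IndCond k X := by
  obtain ⟨f, hf, hbd⟩ := h
  intro y hy
  set Z := X.filter (· ≤ y) with hZ
  have hZsub : Z ⊆ X := Finset.filter_subset _ _
  -- image of Z under f
  set g : {z // z ∈ Z} → Fin n := fun z => f ⟨z.1, hZsub z.2⟩ with hg
  have hginj : Function.Injective g := by
    intro z1 z2 hz
    exact Subtype.ext (congrArg (fun (w : {x // x ∈ X}) => w.1) (hf hz))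
  set T : Finset (Fin n) := Z.attach.image g with hT
  have hTcard : T.card = Z.card := by
    rw [hT, Finset.card_image_of_injective _ hginj, Finset.card_attach]
  have hyZ : y ∈ Z := Finset.mem_filter.mpr ⟨hy, le_refl y⟩
  have hTne : T.Nonempty := ⟨g ⟨y, hyZ⟩, Finset.mem_image.mpr ⟨⟨y, hyZ⟩, Finset.mem_attach _ _, rfl⟩⟩
  set j := T.max' hTne with hj
  have hjT : j ∈ T := T.max'_mem hTne
  have hbound : T.card ≤ (j : ℕ) + 1 := by
    have hsub : T.image (Fin.val) ⊆ Finset.range ((j : ℕ) + 1) := by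
      intro i hi
      obtain ⟨i', hi', rfl⟩ := Finset.mem_image.mp hi
      rw [Finset.mem_range]
      exact Nat.lt_succ_of_le (Fin.le_iff_val_le_val.mp (T.le_max' i' hi'))
    calc T.card = (T.image Fin.val).card :=
          (Finset.card_image_of_injective _ Fin.val_injective).symm
      _ ≤ ((j : ℕ) + 1) := le_trans (Finset.card_le_card hsub) (by rw [Finset.card_range])
  obtain ⟨z, -, hzj⟩ := Finset.mem_image.mp hjT
  have hzy : (z : ℕ) ≤ y := (Finset.mem_filter.mp z.2).2
  have hlo : (j : ℕ) * (k+1) + 1 ≤ (z : ℕ) := by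
    rw [← hzj]; exact (hbd ⟨z.1, hZsub z.2⟩).1
  have hmul : (Z.card - 1) * (k+1) ≤ (j : ℕ) * (k+1) :=
    Nat.mul_le_mul_right _ (by omega)
  omega

lemma indCond_card_le {X : Finset ℕ} (hn : 0 < n)
    (hX : X ⊆ Finset.Icc 1 ((n - 1) * (k + 1) + 1)) (h : IndCond k X) : X.card ≤ n := by
  rcases X.eq_empty_or_nonempty with rfl | hne
  · simp
  have hmax := h (X.max' hne) (X.max'_mem hne)
  have hfull : X.filter (· ≤ X.max' hne) = X :=
    Finset.filter_true_of_mem (fun x hx => X.le_max' x hx)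
  rw [hfull] at hmax
  have hmem := hX (X.max'_mem hne)
  rw [Finset.mem_Icc] at hmem
  have h1 : (X.card - 1) * (k+1) ≤ (n-1) * (k+1) := by omega
  have h2 : X.card - 1 ≤ n - 1 := Nat.le_of_mul_le_mul_right h1 (by omega)
  have hcpos : 0 < X.card := Finset.card_pos.mpr hne
  omega

lemma indCond_isPT {X : Finset ℕ} (hn : 0 < n)
    (hX : X ⊆ Finset.Icc 1 ((n - 1) * (k + 1) + 1)) (h : IndCond k X) :
    IsPT n (fun j => (j : ℕ) * (k + 1) + 1) (fun j => (n - 1) * k + (j : ℕ) + 1) X := by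
  classical
  set c := (n - 1) * k with hc
  have hNc : (n - 1) * (k + 1) + 1 = c + n := by
    rw [hc, Nat.mul_add, Nat.mul_one]; omega
  set rank : ℕ → ℕ := fun x => (X.filter (· ≤ x)).card with hrank
  have hcard : X.card ≤ n := indCond_card_le hn hX h
  have hrank_le : ∀ x, rank x ≤ X.card := fun x => Finset.card_le_card (Finset.filter_subset _ _)
  have hrank_pos : ∀ x ∈ X, 1 ≤ rank x := by
    intro x hx
    exact Finset.card_pos.mpr ⟨x, Finset.mem_filter.mpr ⟨hx, le_refl x⟩⟩
  have hrank_mono : ∀ x ∈ X, ∀ y ∈ X, x < y → rank x < rank y := by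
    intro x hx y hy hxy
    apply Finset.card_lt_card
    constructor
    · intro z hz
      rw [Finset.mem_filter] at hz ⊢
      exact ⟨hz.1, by omega⟩
    · intro hsub
      have : y ∈ X.filter (· ≤ x) := hsub (Finset.mem_filter.mpr ⟨hy, le_refl y⟩)
      rw [Finset.mem_filter] at this
      omega
  have hbdN : ∀ x ∈ X, 1 ≤ x ∧ x ≤ c + n := by
    intro x hx
    have := hX hx; rw [Finset.mem_Icc, hNc] at this; exact this
  refine ⟨fun x => ⟨max (rank x.1) (x.1 - c) - 1, ?_⟩, ?_, ?_⟩
  · -- bound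
    have h1 := hrank_le x.1
    have h2 := (hbdN x.1 x.2).2
    have h3 := hrank_pos x.1 x.2
    omega
  · -- injective
    intro x y hxy
    have h1 : max (rank x.1) (x.1 - c) - 1 = max (rank y.1) (y.1 - c) - 1 :=
      congrArg Fin.val hxy
    by_contra hne
    have hne' : x.1 ≠ y.1 := fun e => hne (Subtype.ext e)
    rcases Nat.lt_or_ge x.1 y.1 with hlt | hge
    · have := hrank_mono x.1 x.2 y.1 y.2 hlt
      have := hrank_pos x.1 x.2
      have := hrank_pos y.1 y.2
      omega
    · have hlt : y.1 < x.1 := by omega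
      have := hrank_mono y.1 y.2 x.1 x.2 hlt
      have := hrank_pos x.1 x.2
      have := hrank_pos y.1 y.2
      omega
  · -- bounds lo and hi
    rintro ⟨x, hx⟩
    simp only
    have hxr := hrank_pos x hx
    have hxb := hbdN x hx
    constructor
    · -- lo
      rcases le_or_gt (x - c) (rank x) with hcase | hcase
      · rw [Nat.max_eq_left hcase]
        have hth : (rank x - 1) * (k + 1) < x := h x hx
        omega
      · rw [Nat.max_eq_right (le_of_lt hcase)]
        have e1 : (x - c - 1) * (k + 1) = (x - c - 1) * k + (x - c - 1) := by ring
        have e2 : (x - c - 1) * k ≤ (n - 1) * k :=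
          Nat.mul_le_mul_right _ (by omega)
        rw [← hc] at e2
        omega
    · -- hi
      have h1 : x - c ≤ max (rank x) (x - c) := le_max_right _ _
      have h2 : 1 ≤ max (rank x) (x - c) := le_trans hxr (le_max_left _ _)
      omega



/-! ### Structural theorem: nbc sets are exactly those with `Ok (X.erase 1)` -/

lemma nbc_iff_ok (hn : 0 < n) {X : Finset ℕ}
    (hX : X ⊆ Finset.Icc 1 ((n - 1) * (k + 1) + 1)) :
    NoBrokenCircuit ((n - 1) * (k + 1) + 1)
      (IsPT n (fun j => (j : ℕ) * (k + 1) + 1) (fun j => (n - 1) * k + (j : ℕ) + 1)) X ↔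
    Ok k (X.erase 1) := by
  classical
  set N := (n - 1) * (k + 1) + 1 with hN
  have hN1 : 1 ≤ N := by omega
  constructor
  · -- nbc → Ok, by contraposition
    intro hnbc
    by_contra hnok
    apply hnbc
    unfold Ok at hnok
    push_neg at hnok
    set X' := X.erase 1 with hX'
    have hX'sub : X' ⊆ Finset.Icc 2 N := by
      intro z hz
      rw [hX', Finset.mem_erase] at hz
      have := hX hz.2
      rw [Finset.mem_Icc] at this ⊢
      have := hz.1
      omega
    -- minimal violating element y
    set V := X'.filter (fun y => y ≤ (X'.filter (· ≤ y)).card * (k+1)) with hV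
    have hVne : V.Nonempty := by
      obtain ⟨y, hy, hyv⟩ := hnok
      exact ⟨y, Finset.mem_filter.mpr ⟨hy, hyv⟩⟩
    set y := V.min' hVne with hy
    have hyV := V.min'_mem hVne
    rw [Finset.mem_filter] at hyV
    obtain ⟨hyX', hyviol⟩ := hyV
    have hminimal : ∀ z ∈ X', z < y → (X'.filter (· ≤ z)).card * (k+1) < z := by
      intro z hz hzy
      by_contra hc
      push_neg at hc
      have : z ∈ V := Finset.mem_filter.mpr ⟨hz, hc⟩
      have := V.min'_le z this
      omega
    set Z := X'.filter (· ≤ y) with hZ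
    have hZsub : Z ⊆ X' := Finset.filter_subset _ _
    have hyZ : y ∈ Z := Finset.mem_filter.mpr ⟨hyX', le_refl y⟩
    have hZmax : ∀ w ∈ Z, w ≤ y := fun w hw => (Finset.mem_filter.mp hw).2
    have helts : ∀ w ∈ Z, 2 ≤ w ∧ w ≤ N := by
      intro w hw
      have := hX'sub (hZsub hw)
      rwa [Finset.mem_Icc] at this
    have h1Z : (1:ℕ) ∉ Z := fun h => by have := (helts 1 h).1; omega
    have hspos : 1 ≤ Z.card := Finset.card_pos.mpr ⟨y, hyZ⟩
    have h2 : ∀ w ∈ Z, w < y → (Z.filter (· ≤ w)).card * (k+1) < w := by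
      intro w hw hwy
      have he : Z.filter (· ≤ w) = X'.filter (· ≤ w) := by
        rw [hZ, Finset.filter_filter]
        apply Finset.filter_congr
        intro z hz
        omega
      rw [he]
      exact hminimal w (hZsub hw) hwy
    -- key bound on the second largest
    have hkey : (Z.card - 1) * (k+1) < y := by
      rcases Nat.eq_or_lt_of_le hspos with h1 | h2s
      · have : Z.card - 1 = 0 := by omega
        rw [this]
        have := (helts y hyZ).1
        omega
      · -- s ≥ 2
        have hWne : (Z.erase y).Nonempty := by
          rw [← Finset.card_pos, Finset.card_erase_of_mem hyZ]
          omega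
        set w := (Z.erase y).max' hWne with hw
        have hwZ : w ∈ Z.erase y := (Z.erase y).max'_mem hWne
        rw [Finset.mem_erase] at hwZ
        have hwy : w < y := lt_of_le_of_ne (hZmax w hwZ.2) hwZ.1
        have hfe : Z.filter (· ≤ w) = Z.erase y := by
          apply Finset.Subset.antisymm
          · intro z hz
            rw [Finset.mem_filter] at hz
            rw [Finset.mem_erase]
            exact ⟨by omega, hz.1⟩
          · intro z hz
            rw [Finset.mem_filter]
            exact ⟨(Finset.mem_erase.mp hz).2, (Z.erase y).le_max' z hz⟩
        have := h2 w hwZ.2 hwy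
        rw [hfe, Finset.card_erase_of_mem hyZ] at this
        omega
    -- build the circuit
    refine ⟨insert 1 Z, 1, ⟨?_, ?_, ?_⟩, Finset.mem_insert_self _ _, ?_, ?_⟩
    · -- subset of Icc 1 N
      intro z hz
      rcases Finset.mem_insert.mp hz with rfl | hz
      · rw [Finset.mem_Icc]; omega
      · have := helts z hz; rw [Finset.mem_Icc]; omega
    · -- dependent
      intro hInd
      have hic := isPT_indCond hInd y (Finset.mem_insert_of_mem hyZ)
      have hfe : (insert 1 Z).filter (· ≤ y) = insert 1 Z := by
        apply Finset.filter_true_of_mem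
        intro z hz
        rcases Finset.mem_insert.mp hz with rfl | hz
        · have := (helts y hyZ).1; omega
        · exact hZmax z hz
      rw [hfe, Finset.card_insert_of_notMem h1Z] at hic
      simp only [Nat.add_sub_cancel] at hic
      omega
    · -- every erasure is independent
      intro x hxC
      apply indCond_isPT hn
      · intro z hz
        have hz' := Finset.mem_of_mem_erase hz
        rcases Finset.mem_insert.mp hz' with rfl | hz'
        · rw [Finset.mem_Icc]; omega
        · have := helts z hz'; rw [Finset.mem_Icc]; omega
      · intro w hw
        set D := (insert 1 Z).erase x with hD
        have hwC := Finset.mem_of_mem_erase hw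
        have hDsub : D ⊆ insert 1 Z := Finset.erase_subset _ _
        rcases eq_or_ne w y with rfl | hwy
        · -- w = y : use hkey
          have hfil : D.filter (· ≤ y) = D := by
            apply Finset.filter_true_of_mem
            intro z hz
            rcases Finset.mem_insert.mp (hDsub hz) with rfl | hz'
            · have := (helts y hyZ).1; omega
            · exact hZmax z hz'
          rw [hfil, Finset.card_erase_of_mem hxC, Finset.card_insert_of_notMem h1Z]
          have he : Z.card + 1 - 1 - 1 = Z.card - 1 := by omega
          rw [he]
          exact hkey
        · rcases Finset.mem_insert.mp hwC with rfl | hwZ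
          · -- w = 1
            have hcard1 : (D.filter (· ≤ 1)).card ≤ 1 := by
              have hsub1 : D.filter (· ≤ 1) ⊆ {1} := by
                intro z hz
                rw [Finset.mem_filter] at hz
                rcases Finset.mem_insert.mp (hDsub hz.1) with rfl | hz'
                · exact Finset.mem_singleton_self 1
                · have := (helts z hz').1; omega
              calc (D.filter (· ≤ 1)).card ≤ ({1} : Finset ℕ).card :=
                    Finset.card_le_card hsub1
                _ = 1 := Finset.card_singleton 1
            have : (D.filter (· ≤ 1)).card - 1 = 0 := by omega
            rw [this]; omega
          · -- w ∈ Z, w < y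
            have hwlt : w < y := lt_of_le_of_ne (hZmax w hwZ) hwy
            have hsubq : D.filter (· ≤ w) ⊆ insert 1 (Z.filter (· ≤ w)) := by
              intro z hz
              rw [Finset.mem_filter] at hz
              rcases Finset.mem_insert.mp (hDsub hz.1) with rfl | hz'
              · exact Finset.mem_insert_self _ _
              · exact Finset.mem_insert_of_mem (Finset.mem_filter.mpr ⟨hz', hz.2⟩)
            have h1nf : (1:ℕ) ∉ Z.filter (· ≤ w) := fun h => h1Z (Finset.mem_of_mem_filter _ h)
            have hcle : (D.filter (· ≤ w)).card ≤ (Z.filter (· ≤ w)).card + 1 := by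
              calc (D.filter (· ≤ w)).card ≤ (insert 1 (Z.filter (· ≤ w))).card :=
                    Finset.card_le_card hsubq
                _ = (Z.filter (· ≤ w)).card + 1 := Finset.card_insert_of_notMem h1nf
            have hq := h2 w hwZ hwlt
            have hmul : ((D.filter (· ≤ w)).card - 1) * (k+1) ≤ (Z.filter (· ≤ w)).card * (k+1) :=
              Nat.mul_le_mul_right _ (by omega)
            omega
    · -- 1 is the minimum
      intro z hz
      rcases Finset.mem_insert.mp hz with rfl | hz'
      · exact le_refl 1
      · have := (helts z hz').1; omega
    · -- broken circuit inside X
      rw [Finset.erase_insert h1Z]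
      exact subset_trans hZsub (X.erase_subset 1)
  · -- Ok → nbc
    rintro hOk ⟨C, x₀, ⟨hCsub, hCdep, hCind⟩, hx₀, hmin, hbc⟩
    have hCne : C.Nonempty := ⟨x₀, hx₀⟩
    -- C is dependent, so IndCond fails
    have hnic : ¬ IndCond k C := fun h => hCdep (indCond_isPT hn hCsub h)
    unfold IndCond at hnic
    push_neg at hnic
    obtain ⟨w, hwC, hwviol⟩ := hnic
    set y := C.max' hCne with hy
    have hyC := C.max'_mem hCne
    have hymax : ∀ z ∈ C, z ≤ y := fun z hz => C.le_max' z hz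
    -- the violation must be at the maximum
    have hwy : w = y := by
      by_contra hne
      have hwlt : w < y := lt_of_le_of_ne (hymax w hwC) hne
      have hind := isPT_indCond (hCind y hyC) w (Finset.mem_erase.mpr ⟨by omega, hwC⟩)
      have hfe : (C.erase y).filter (· ≤ w) = C.filter (· ≤ w) := by
        rw [Finset.filter_erase]
        apply Finset.erase_eq_of_notMem
        intro h
        have := (Finset.mem_filter.mp h).2
        omega
      rw [hfe] at hind
      omega
    subst hwy
    have hfull : C.filter (· ≤ y) = C := Finset.filter_true_of_mem (fun z hz => hymax z hz)
    rw [hfull] at hwviol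
    have hw1 : 1 ≤ y := by
      have := hCsub hyC; rw [Finset.mem_Icc] at this; exact this.1
    have hm2 : 2 ≤ C.card := by
      by_contra hc
      push_neg at hc
      have : C.card - 1 = 0 := by omega
      rw [this] at hwviol
      omega
    have hx0w : x₀ ≠ y := by
      intro he
      have hEne : (C.erase y).Nonempty := by
        rw [← Finset.card_pos, Finset.card_erase_of_mem hyC]
        omega
      obtain ⟨z, hz⟩ := hEne
      rw [Finset.mem_erase] at hz
      have h1 := hymax z hz.2
      have h2 := hmin z hz.2
      omega
    have hx01 : 1 ≤ x₀ := by
      have := hCsub hx₀; rw [Finset.mem_Icc] at this; exact this.1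
    have hDsub : C.erase x₀ ⊆ (X.erase 1).filter (· ≤ y) := by
      intro z hz
      rw [Finset.mem_erase] at hz
      rw [Finset.mem_filter, Finset.mem_erase]
      have h2 := hmin z hz.2
      refine ⟨⟨by omega, hbc (Finset.mem_erase.mpr hz)⟩, hymax z hz.2⟩
    have hwX : y ∈ X.erase 1 := by
      have := hDsub (Finset.mem_erase.mpr ⟨Ne.symm hx0w, hyC⟩)
      exact Finset.mem_of_mem_filter _ this
    have hok := hOk y hwX
    have hcge : C.card - 1 ≤ ((X.erase 1).filter (· ≤ y)).card := by
      calc C.card - 1 = (C.erase x₀).card := (Finset.card_erase_of_mem hx₀).symm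
        _ ≤ _ := Finset.card_le_card hDsub
    have hmul : (C.card - 1) * (k+1) ≤ ((X.erase 1).filter (· ≤ y)).card * (k+1) :=
      Nat.mul_le_mul_right _ hcge
    omega



/-! ### Counting nbc sets -/

lemma nbcCount_eq (hn : 0 < n) (i : ℕ) :
    nbcCount k n i = ((Finset.Icc 1 ((n - 1) * (k + 1) + 1)).powerset.filter
      (fun X => X.card = i ∧ Ok k (X.erase 1))).card := by
  classical
  rw [nbcCount, Nat.card_congr (Equiv.subtypeEquivRight (q := fun X =>
    X ∈ (Finset.Icc 1 ((n - 1) * (k + 1) + 1)).powerset.filter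
      (fun X => X.card = i ∧ Ok k (X.erase 1))) ?_)]
  · rw [Nat.card_eq_fintype_card, Fintype.card_coe]
  · intro X
    simp only [Finset.mem_filter, Finset.mem_powerset]
    constructor
    · rintro ⟨h1, h2, h3⟩; exact ⟨h1, h2, (nbc_iff_ok hn h1).mp h3⟩
    · rintro ⟨h1, h2, h3⟩; exact ⟨h1, h2, (nbc_iff_ok hn h1).mpr h3⟩

lemma Ok.one_notMem {X : Finset ℕ} (h : Ok k X) : 1 ∉ X := by
  intro h1
  have hv := h 1 h1
  have hc : 1 ≤ (X.filter (· ≤ 1)).card :=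
    Finset.card_pos.mpr ⟨1, Finset.mem_filter.mpr ⟨h1, le_refl 1⟩⟩
  have := Nat.mul_le_mul_right (k+1) hc
  omega

lemma nbcCount_zero (hn : 0 < n) : nbcCount k n 0 = 1 := by
  rw [nbcCount_eq hn, Finset.card_eq_one]
  refine ⟨∅, ?_⟩
  ext X
  simp only [Finset.mem_filter, Finset.mem_powerset, Finset.card_eq_zero, Finset.mem_singleton]
  constructor
  · rintro ⟨-, h, -⟩; exact h
  · rintro rfl
    exact ⟨Finset.empty_subset _, rfl, by intro y hy; simp at hy⟩

lemma nbcCount_succ (hn : 0 < n) {i : ℕ} (hi : 1 ≤ i) :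
    nbcCount k n i = cnt k ((n - 1) * (k + 1) + 1) i + cnt k ((n - 1) * (k + 1) + 1) (i - 1) := by
  classical
  rw [nbcCount_eq hn]
  rw [← Finset.card_filter_add_card_filter_not
    (s := (Finset.Icc 1 ((n - 1) * (k + 1) + 1)).powerset.filter
      (fun X => X.card = i ∧ Ok k (X.erase 1))) (p := fun X => (1:ℕ) ∉ X)]
  rw [Finset.filter_filter, Finset.filter_filter]
  congr 1
  · -- sets not containing 1
    unfold cnt
    congr 1
    ext X
    simp only [Finset.mem_filter, Finset.mem_powerset]
    constructor
    · rintro ⟨hsub, ⟨hcard, hok⟩, h1⟩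
      exact ⟨hsub, hcard, by rwa [Finset.erase_eq_of_notMem h1] at hok⟩
    · rintro ⟨hsub, hcard, hok⟩
      have h1 := hok.one_notMem
      exact ⟨hsub, ⟨hcard, by rwa [Finset.erase_eq_of_notMem h1]⟩, h1⟩
  · -- sets containing 1, biject via erase 1
    unfold cnt
    rw [Finset.card_bij (fun X _ => X.erase 1)]
    · rintro X hX
      simp only [Finset.mem_filter, Finset.mem_powerset, not_not] at hX ⊢
      obtain ⟨hsub, ⟨hcard, hok⟩, hmem⟩ := hX
      refine ⟨subset_trans (Finset.erase_subset _ _) hsub, ?_, hok⟩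
      rw [Finset.card_erase_of_mem hmem, hcard]
    · rintro X hX Y hY h
      simp only [Finset.mem_filter, not_not] at hX hY
      rw [← Finset.insert_erase hX.2.2, ← Finset.insert_erase hY.2.2, h]
    · rintro Y hY
      simp only [Finset.mem_filter, Finset.mem_powerset] at hY
      obtain ⟨hsub, hcard, hok⟩ := hY
      have h1Y : (1:ℕ) ∉ Y := hok.one_notMem
      refine ⟨insert 1 Y, ?_, by rw [Finset.erase_insert h1Y]⟩
      simp only [Finset.mem_filter, Finset.mem_powerset, not_not]
      refine ⟨?_, ⟨?_, ?_⟩, Finset.mem_insert_self _ _⟩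
      · intro z hz
        rcases Finset.mem_insert.mp hz with rfl | hz
        · rw [Finset.mem_Icc]; omega
        · exact hsub hz
      · rw [Finset.card_insert_of_notMem h1Y, hcard]; omega
      · rw [Finset.erase_insert h1Y]; exact hok

end CatAux

/-- **Coefficients of the characteristic polynomial of the loopless k-Catalan
matroid.**  The absolute value of the coefficient of `λ^{n-i}` in
`χ(M̂^k_n; λ)`, i.e. `nbc(M̂^k_n; i)`, equals: `1` if `i = 0`;
`(((k+1)(n-i-1)+2)/((k+1)(n-1)+2)) * ((k+1)(n-1)+2 choose i)` if `1 ≤ i ≤ n-1`;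
and the `k`-Catalan number `C^k_{n-1}` if `i = n`.  (In particular
`|μ(M̂^k_n)| = C^k_{n-1}`.) -/
theorem stmt18 (k n i : ℕ) (hk : 0 < k) (hn : 0 < n) (hi : i ≤ n) :
    (i = 0 → nbcCount k n i = 1) ∧
    (1 ≤ i → i ≤ n - 1 →
      nbcCount k n i * ((k + 1) * (n - 1) + 2)
        = ((k + 1) * (n - i - 1) + 2) * Nat.choose ((k + 1) * (n - 1) + 2) i) ∧
    (i = n → nbcCount k n i * (k * (n - 1) + 1)
        = Nat.choose ((k + 1) * (n - 1)) (n - 1)) := by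
  refine ⟨?_, ?_, ?_⟩
  · rintro rfl
    exact CatAux.nbcCount_zero hn
  · intro h1 h2
    rw [CatAux.nbcCount_succ hn h1]
    have hle : i * (k+1) ≤ (n-1) * (k+1) := Nat.mul_le_mul_right _ h2
    have hM : i * (k+1) ≤ (n-1) * (k+1) + 1 := by omega
    have hstep := CatAux.cnt_step (k := k) (M := (n-1)*(k+1)+1) (a := i) h1 hM
      (CatAux.cnt_formula k _ i) (CatAux.cnt_formula k _ (i-1))
    have e1 : (k + 1) * (n - 1) + 2 = (n-1)*(k+1)+1 + 1 := by
      rw [Nat.mul_comm]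
    have h3 : n - i - 1 = n - 1 - i := by omega
    have e2 : (k + 1) * (n - i - 1) + 2 = (n-1)*(k+1)+1 + 1 - i * (k+1) := by
      rw [h3, Nat.mul_comm (k+1) (n-1-i), Nat.sub_mul]
      omega
    rw [e1, e2]
    exact hstep
  · rintro rfl
    rw [CatAux.nbcCount_succ hn (by omega)]
    have hma : (i-1)*(k+1) + (k+1) = i * (k+1) := by
      have := Nat.sub_mul i 1 (k+1)
      have h1 : 1 * (k+1) ≤ i * (k+1) := Nat.mul_le_mul_right _ hn
      omega
    have hz : CatAux.cnt k ((i-1)*(k+1)+1) i = 0 :=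
      CatAux.cnt_eq_zero hn (by omega)
    rw [hz, Nat.zero_add]
    have hNpos : 0 < (i-1)*(k+1)+1 := by omega
    apply Nat.eq_of_mul_eq_mul_right hNpos
    have e3 : (k+1) * (i-1) = (i-1) * (k+1) := Nat.mul_comm _ _
    rw [e3]
    have hf := CatAux.cnt_formula k ((i-1)*(k+1)+1) (i-1)
    rw [show (i-1)*(k+1)+1 - (i-1)*(k+1) = 1 from by omega, Nat.one_mul] at hf
    have e5 : (i-1)*(k+1)+1 - (i-1) = k*(i-1)+1 := by
      have ha : (i-1)*(k+1) = (i-1)*k + (i-1) := by rw [Nat.mul_add, Nat.mul_one]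
      have hb : (i-1)*k = k*(i-1) := Nat.mul_comm _ _
      omega
    have hmse := Nat.choose_mul_succ_eq ((i-1)*(k+1)) (i-1)
    rw [e5] at hmse
    calc CatAux.cnt k ((i-1)*(k+1)+1) (i - 1) * (k*(i-1)+1) * ((i-1)*(k+1)+1)
        = CatAux.cnt k ((i-1)*(k+1)+1) (i - 1) * ((i-1)*(k+1)+1) * (k*(i-1)+1) := by ring
      _ = Nat.choose ((i-1)*(k+1)+1) (i-1) * (k*(i-1)+1) := by rw [hf]
      _ = Nat.choose ((i-1)*(k+1)) (i-1) * ((i-1)*(k+1)+1) := hmse.symm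
end

section
/- For positive integers k and n, the number of lattice paths that go from (0,0) to (2(nk−1), 0), use steps U = (1,1) and D = (1,-1), and never go below the path D^{k−1}(U^k D^k)^{n−1} U^{k−1} equals k times the Catalan number C_{nk−1}. -/
open Finset

/-- The number of Up steps among the first `p` steps of the bounding path
`D^{k-1} (U^k D^k)^{n-1} U^{k-1}` (of length `2(nk-1)`): its Up steps are at the
positions `q` with `k - 1 < q ≤ k - 1 + 2k(n-1)` and `(q - k) mod 2k < k`
(the `U^k` blocks), together with the last `k - 1` positions
`q > k - 1 + 2k(n-1)`. -/
def boundCnt (k n p : ℕ) : ℕ :=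
  ((Finset.Icc 1 p).filter (fun q =>
    (k - 1 < q ∧ q ≤ k - 1 + 2 * k * (n - 1) ∧ (q - k) % (2 * k) < k) ∨
      k - 1 + 2 * k * (n - 1) < q)).card

attribute [local instance] Classical.propDecidable

/-- number of `y < x` with `y % L ∈ S` -/
def cntIn (S : Finset ℕ) (L x : ℕ) : ℕ :=
  ((Finset.range x).filter (fun y => y % L ∈ S)).card

lemma cntIn_succ (S : Finset ℕ) (L x : ℕ) :
    cntIn S L (x + 1) = cntIn S L x + (if x % L ∈ S then 1 else 0) := by
  unfold cntIn
  rw [Finset.range_add_one, Finset.filter_insert]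
  split
  · rw [Finset.card_insert_of_notMem (by simp)]
  · simp

lemma card_Ico_filter_mod (S : Finset ℕ) (L : ℕ) (hL : 0 < L) (hS : S ⊆ Finset.range L)
    (x : ℕ) : ((Finset.Ico x (x + L)).filter (fun y => y % L ∈ S)).card = S.card := by
  apply Finset.card_bij (fun y _ => y % L)
  · intro y hy
    exact (Finset.mem_filter.1 hy).2
  · intro y1 h1 y2 h2 he
    have hy1 := Finset.mem_Ico.1 (Finset.mem_filter.1 h1).1
    have hy2 := Finset.mem_Ico.1 (Finset.mem_filter.1 h2).1
    have e1 := Nat.div_add_mod y1 L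
    have e2 := Nat.div_add_mod y2 L
    rcases lt_trichotomy (y1 / L) (y2 / L) with h | h | h
    · have h3 : L * (y1 / L + 1) ≤ L * (y2 / L) := Nat.mul_le_mul_left L h
      have h4 : L * (y1 / L + 1) = L * (y1 / L) + L := by ring
      omega
    · rw [h] at e1; omega
    · have h3 : L * (y2 / L + 1) ≤ L * (y1 / L) := Nat.mul_le_mul_left L h
      have h4 : L * (y2 / L + 1) = L * (y2 / L) + L := by ring
      omega
  · intro s hs
    have hsL : s < L := Finset.mem_range.1 (hS hs)
    have hxm : x % L < L := Nat.mod_lt _ hL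
    refine ⟨x + (s + L - x % L) % L, ?_, ?_⟩
    · have h1 : (x + (s + L - x % L) % L) % L = (x + (s + L - x % L)) % L :=
        Nat.add_mod_mod _ _ _
      have h2 : x + (s + L - x % L) = L * (x / L) + (s + L) := by
        have := Nat.div_add_mod x L
        omega
      have h3 : (x + (s + L - x % L)) % L = s := by
        rw [h2, Nat.mul_add_mod, Nat.add_mod_right, Nat.mod_eq_of_lt hsL]
      refine Finset.mem_filter.2 ⟨Finset.mem_Ico.2 ⟨Nat.le_add_right _ _, ?_⟩, ?_⟩
      · have : (s + L - x % L) % L < L := Nat.mod_lt _ hL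
        omega
      · rw [h1, h3]; exact hs
    · have h1 : (x + (s + L - x % L) % L) % L = (x + (s + L - x % L)) % L :=
        Nat.add_mod_mod _ _ _
      have h2 : x + (s + L - x % L) = L * (x / L) + (s + L) := by
        have := Nat.div_add_mod x L
        omega
      rw [h1, h2, Nat.mul_add_mod, Nat.add_mod_right, Nat.mod_eq_of_lt hsL]

lemma cntIn_add_L (S : Finset ℕ) (L : ℕ) (hL : 0 < L) (hS : S ⊆ Finset.range L) (x : ℕ) :
    cntIn S L (x + L) = cntIn S L x + S.card := by
  unfold cntIn
  rw [Finset.range_eq_Ico, ← Finset.Ico_union_Ico_eq_Ico (Nat.zero_le x) (Nat.le_add_right x L),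
    Finset.filter_union, Finset.card_union_of_disjoint, ← Finset.range_eq_Ico,
    card_Ico_filter_mod S L hL hS]
  exact Finset.disjoint_filter_filter (Finset.Ico_disjoint_Ico_consecutive 0 x (x + L))

lemma cntIn_add_mul_L (S : Finset ℕ) (L : ℕ) (hL : 0 < L) (hS : S ⊆ Finset.range L)
    (x c : ℕ) : cntIn S L (x + c * L) = cntIn S L x + c * S.card := by
  induction c with
  | zero => simp
  | succ c ih =>
    have : x + (c + 1) * L = (x + c * L) + L := by ring
    rw [this, cntIn_add_L S L hL hS, ih]
    ring

/-- the (half-)height function in `t`-coordinates -/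
def fS (S : Finset ℕ) (L k : ℕ) (t : ℕ) : ℤ :=
  (cntIn S L (2 * k * t) : ℤ) - (k : ℤ) * t

section core

variable {S : Finset ℕ} {L k n : ℕ}
variable (hk : 0 < k) (hn : 0 < n) (hL : L + 1 = 2 * k * n)
variable (hS : S ⊆ Finset.range L) (hSc : S.card = k * n)

include hk hn hL in
lemma Lpos : 0 < L := by nlinarith

lemma fS_zero : fS S L k 0 = 0 := by simp [fS, cntIn]

include hk hn hL hS hSc in
lemma fS_step (t : ℕ) :
    fS S L k (t + n) = fS S L k t + (if (2 * k * t) % L ∈ S then 1 else 0) := by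
  have h1 : 2 * k * (t + n) = (2 * k * t + 1) + L := by
    have : 2 * k * (t + n) = 2 * k * t + 2 * k * n := by ring
    omega
  have h2 : cntIn S L (2 * k * (t + n)) =
      cntIn S L (2 * k * t) + (if (2 * k * t) % L ∈ S then 1 else 0) + k * n := by
    rw [h1, cntIn_add_L S L (Lpos hk hn hL) hS, cntIn_succ, hSc]
  unfold fS
  rw [h2]
  push_cast
  split <;> push_cast <;> ring

include hk hn hL hS hSc in
lemma fS_le_step (t : ℕ) : fS S L k t ≤ fS S L k (t + n) := by
  rw [fS_step hk hn hL hS hSc t]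
  split <;> omega

include hk hn hL hS hSc in
lemma fS_step_le (t : ℕ) : fS S L k (t + n) ≤ fS S L k t + 1 := by
  rw [fS_step hk hn hL hS hSc t]
  split <;> omega

include hk hn hL hS hSc in
lemma fS_le_add_mul (t q : ℕ) : fS S L k t ≤ fS S L k (t + q * n) := by
  induction q with
  | zero => simp
  | succ q ih =>
    have h : t + (q + 1) * n = (t + q * n) + n := by ring
    rw [h]
    exact le_trans ih (fS_le_step hk hn hL hS hSc _)

include hk hn hL hS hSc in
lemma fS_period (t : ℕ) : fS S L k (t + L) = fS S L k t + k := by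
  have h1 : 2 * k * (t + L) = 2 * k * t + (2 * k) * L := by ring
  have h2 : cntIn S L (2 * k * (t + L)) = cntIn S L (2 * k * t) + (2 * k) * (k * n) := by
    rw [h1, cntIn_add_mul_L S L (Lpos hk hn hL) hS, hSc]
  have h3 : (2 * k) * (k * n) = k * L + k := by
    have e : (2 * k) * (k * n) = k * (2 * k * n) := by ring
    rw [e, ← hL, Nat.mul_add, Nat.mul_one]
  unfold fS
  rw [h2, h3]
  push_cast
  ring

/-- dominance condition in a window of length `n` starting at `t` -/
def validW (S : Finset ℕ) (L k n t : ℕ) : Prop :=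
  ∀ i, 1 ≤ i → i ≤ n → fS S L k t + 1 ≤ fS S L k (t + i)

include hk hn hL hS hSc in
lemma validW_iff_fwd (t : ℕ) :
    validW S L k n t ↔ ∀ y, t < y → y ≤ t + L → fS S L k t + 1 ≤ fS S L k y := by
  constructor
  · intro hv y hty _
    obtain ⟨d, rfl⟩ : ∃ d, y = t + d := ⟨y - t, by omega⟩
    have hd : 1 ≤ d := by omega
    have hmc : ((d - 1) / n) * n = n * ((d - 1) / n) := Nat.mul_comm _ _
    have h1dm := Nat.div_add_mod (d - 1) n
    have hdec : (t + ((d - 1) % n + 1)) + ((d - 1) / n) * n = t + d := by omega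
    have h2 : fS S L k t + 1 ≤ fS S L k (t + ((d - 1) % n + 1)) :=
      hv _ (by omega) (by have := Nat.mod_lt (d - 1) hn; omega)
    calc fS S L k t + 1 ≤ fS S L k (t + ((d - 1) % n + 1)) := h2
      _ ≤ fS S L k ((t + ((d - 1) % n + 1)) + ((d - 1) / n) * n) :=
          fS_le_add_mul hk hn hL hS hSc _ _
      _ = fS S L k (t + d) := by rw [hdec]
  · intro hf i h1 h2
    have hnL : n ≤ L := by nlinarith
    exact hf (t + i) (by omega) (by omega)

/-- running minimum over the window `[t, t+L]` -/
noncomputable def nuF (S : Finset ℕ) (L k t : ℕ) : ℤ :=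
  ((Finset.Icc t (t + L)).image (fS S L k)).min'
    (Finset.Nonempty.image ⟨t, Finset.mem_Icc.2 ⟨le_refl t, Nat.le_add_right t L⟩⟩ _)

lemma nuF_le {t y : ℕ} (h1 : t ≤ y) (h2 : y ≤ t + L) : nuF S L k t ≤ fS S L k y :=
  Finset.min'_le _ _ (Finset.mem_image.2 ⟨y, Finset.mem_Icc.2 ⟨h1, h2⟩, rfl⟩)

lemma nuF_exists (t : ℕ) : ∃ y, t ≤ y ∧ y ≤ t + L ∧ fS S L k y = nuF S L k t := by
  have := Finset.min'_mem ((Finset.Icc t (t + L)).image (fS S L k))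
    (Finset.Nonempty.image ⟨t, Finset.mem_Icc.2 ⟨le_refl t, Nat.le_add_right t L⟩⟩ _)
  obtain ⟨y, hy, he⟩ := Finset.mem_image.1 this
  exact ⟨y, (Finset.mem_Icc.1 hy).1, (Finset.mem_Icc.1 hy).2, he⟩

lemma le_nuF {t : ℕ} {c : ℤ} (h : ∀ y, t ≤ y → y ≤ t + L → c ≤ fS S L k y) :
    c ≤ nuF S L k t := by
  apply Finset.le_min'
  intro z hz
  obtain ⟨y, hy, rfl⟩ := Finset.mem_image.1 hz
  exact h y (Finset.mem_Icc.1 hy).1 (Finset.mem_Icc.1 hy).2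

include hk hn hL hS hSc in
lemma nuF_mono (t : ℕ) : nuF S L k t ≤ nuF S L k (t + 1) := by
  have hL0 : 0 < L := Lpos hk hn hL
  apply le_nuF
  intro y h1 h2
  rcases Nat.lt_or_ge y (t + L + 1) with h | h
  · exact nuF_le (by omega) (by omega)
  · have hy : y = t + L + 1 := by omega
    have : fS S L k (t + 1 + L) = fS S L k (t + 1) + k := fS_period hk hn hL hS hSc _
    have h4 : nuF S L k t ≤ fS S L k (t + 1) := nuF_le (by omega) (by omega)
    have hy' : y = t + 1 + L := by omega
    rw [hy', this]
    have : (0 : ℤ) ≤ k := by positivity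
    omega

include hk hn hL hS hSc in
lemma nuF_succ_le (t : ℕ) : nuF S L k (t + 1) ≤ nuF S L k t + 1 := by
  have hL0 : 0 < L := Lpos hk hn hL
  obtain ⟨y, h1, h2, he⟩ := nuF_exists (S := S) (L := L) (k := k) t
  rcases Nat.eq_or_lt_of_le h1 with h | h
  · have hnL : n ≤ L := by nlinarith
    have h3 : nuF S L k (t + 1) ≤ fS S L k (t + n) := nuF_le (by omega) (by omega)
    have h4 : fS S L k (t + n) ≤ fS S L k t + 1 := fS_step_le hk hn hL hS hSc t
    have e2 : fS S L k t = nuF S L k t := by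
      conv_lhs => rw [h]
      exact he
    omega
  · have h3 : nuF S L k (t + 1) ≤ fS S L k y := nuF_le (by omega) (by omega)
    omega

include hk hn hL hS hSc in
lemma nuF_jump_iff (t : ℕ) :
    validW S L k n t ↔ nuF S L k t + 1 ≤ nuF S L k (t + 1) := by
  have hL0 : 0 < L := Lpos hk hn hL
  rw [validW_iff_fwd hk hn hL hS hSc]
  constructor
  · intro hv
    have h1 : nuF S L k t ≤ fS S L k t := nuF_le (le_refl t) (by omega)
    have h2 : fS S L k t + 1 ≤ nuF S L k (t + 1) := by
      apply le_nuF
      intro y hy1 hy2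
      rcases Nat.lt_or_ge y (t + L + 1) with h | h
      · exact hv y (by omega) (by omega)
      · have hy' : y = t + 1 + L := by omega
        rw [hy', fS_period hk hn hL hS hSc]
        have h3 : fS S L k t + 1 ≤ fS S L k (t + 1) := hv (t + 1) (by omega) (by omega)
        have : (0 : ℤ) ≤ k := by positivity
        omega
    omega
  · intro hj
    by_contra hc
    push_neg at hc
    obtain ⟨y, hy1, hy2, hy3⟩ := hc
    have h1 : nuF S L k (t + 1) ≤ fS S L k y := nuF_le (by omega) (by omega)
    have h2 : fS S L k t ≤ fS S L k t := le_refl _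
    have h3 : nuF S L k t ≤ fS S L k t := nuF_le (le_refl t) (by omega)
    -- also every element of [t, t+L] is ≥ min; we need nuF t ≥ nuF (t+1) - contradiction
    have h4 : nuF S L k (t + 1) ≤ nuF S L k t := by
      apply le_nuF
      intro z hz1 hz2
      rcases Nat.eq_or_lt_of_le hz1 with h | h
      · calc nuF S L k (t+1) ≤ fS S L k y := h1
          _ ≤ fS S L k t := by omega
          _ = fS S L k z := by rw [← h]
      · exact nuF_le (by omega) (by omega)
    omega

include hk hn hL hS hSc in
lemma nuF_period0 : nuF S L k L = nuF S L k 0 + k := by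
  have key : ∀ y, fS S L k (y + L) = fS S L k y + k := fS_period hk hn hL hS hSc
  apply le_antisymm
  · obtain ⟨y, h1, h2, he⟩ := nuF_exists (S := S) (L := L) (k := k) 0
    have : nuF S L k L ≤ fS S L k (y + L) := nuF_le (by omega) (by omega)
    rw [key y, he] at this
    exact this
  · apply le_nuF
    intro y h1 h2
    obtain ⟨z, rfl⟩ : ∃ z, y = z + L := ⟨y - L, by omega⟩
    rw [key z]
    have : nuF S L k 0 ≤ fS S L k z := nuF_le (by omega) (by omega)
    omega

include hk hn hL hS hSc in
lemma count_validW : ((Finset.range L).filter (fun t => validW S L k n t)).card = k := by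
  have key : ∀ t, (if validW S L k n t then (1 : ℤ) else 0) = nuF S L k (t + 1) - nuF S L k t := by
    intro t
    have h1 := nuF_mono hk hn hL hS hSc t
    have h2 := nuF_succ_le hk hn hL hS hSc t
    have h3 := nuF_jump_iff hk hn hL hS hSc t
    split
    · next h => have := h3.1 h; omega
    · next h => have : ¬ (nuF S L k t + 1 ≤ nuF S L k (t + 1)) := fun hh => h (h3.2 hh); omega
  have h4 : (((Finset.range L).filter (fun t => validW S L k n t)).card : ℤ) = (k : ℤ) := by
    rw [Finset.card_filter]
    push_cast
    calc (∑ t ∈ Finset.range L, if validW S L k n t then (1 : ℤ) else 0)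
        = ∑ t ∈ Finset.range L, (nuF S L k (t + 1) - nuF S L k t) :=
          Finset.sum_congr rfl (fun t _ => key t)
      _ = nuF S L k L - nuF S L k 0 := Finset.sum_range_sub _ _
      _ = (k : ℤ) := by rw [nuF_period0 hk hn hL hS hSc]; ring
  exact_mod_cast h4

end core

/-- rotation of a subset of `[0,L)` -/
def rotS (L j : ℕ) (S : Finset ℕ) : Finset ℕ := S.image (fun x => (x + j) % L)

section rot

variable {S : Finset ℕ} {L k n : ℕ}

lemma rot_g1 (hL : 0 < L) (a b : ℕ) : ((a + b) % L + (L - b % L)) % L = a % L := by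
  rw [Nat.mod_add_mod]
  have h2 : a + b + (L - b % L) = a + (b / L + 1) * L := by
    have e1 := Nat.div_add_mod b L
    have e2 := Nat.mod_lt b hL
    have e3 : (b / L + 1) * L = L * (b / L) + L := by ring
    omega
  rw [h2, Nat.add_mul_mod_self_right]

lemma rot_g2 (hL : 0 < L) (a b : ℕ) : ((a + (L - b % L)) % L + b) % L = a % L := by
  rw [Nat.mod_add_mod]
  have h2 : a + (L - b % L) + b = a + (b / L + 1) * L := by
    have e1 := Nat.div_add_mod b L
    have e2 := Nat.mod_lt b hL
    have e3 : (b / L + 1) * L = L * (b / L) + L := by ring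
    omega
  rw [h2, Nat.add_mul_mod_self_right]

lemma mem_rotS (hL : 0 < L) (hS : S ⊆ Finset.range L) (j y : ℕ) :
    y % L ∈ rotS L j S ↔ (y + (L - j % L)) % L ∈ S := by
  constructor
  · intro h
    obtain ⟨x, hx, he⟩ := Finset.mem_image.1 h
    have hxL : x < L := Finset.mem_range.1 (hS hx)
    have key : (y + (L - j % L)) % L = x := by
      rw [← Nat.mod_add_mod, ← he, rot_g1 hL x j, Nat.mod_eq_of_lt hxL]
    rw [key]; exact hx
  · intro h
    exact Finset.mem_image.2 ⟨_, h, by rw [rot_g2 hL y j]⟩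

lemma rotS_subset (hL : 0 < L) (j : ℕ) : rotS L j S ⊆ Finset.range L := by
  intro z hz
  obtain ⟨x, _, rfl⟩ := Finset.mem_image.1 hz
  exact Finset.mem_range.2 (Nat.mod_lt _ hL)

lemma rotS_card (hL : 0 < L) (hS : S ⊆ Finset.range L) (j : ℕ) :
    (rotS L j S).card = S.card := by
  apply Finset.card_image_of_injOn
  intro x1 h1 x2 h2 he
  have hx1 : x1 < L := Finset.mem_range.1 (hS h1)
  have hx2 : x2 < L := Finset.mem_range.1 (hS h2)
  have k1 := rot_g1 hL x1 j
  have k2 := rot_g1 hL x2 j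
  simp only at he
  rw [he, k2, Nat.mod_eq_of_lt hx2] at k1
  rw [Nat.mod_eq_of_lt hx1] at k1
  exact k1.symm

lemma rotS_rotS_inv (hL : 0 < L) (hS : S ⊆ Finset.range L) (j : ℕ) :
    rotS L (L - j % L) (rotS L j S) = S := by
  unfold rotS
  rw [Finset.image_image]
  have : ∀ x ∈ S, ((x + j) % L + (L - j % L)) % L = x := by
    intro x hx
    have hxL : x < L := Finset.mem_range.1 (hS hx)
    have h1 : (L - j % L) % L ≤ L - j % L := Nat.mod_le _ _
    rw [show ((x + j) % L + (L - j % L)) % L = x % L from rot_g1 hL x j, Nat.mod_eq_of_lt hxL]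
  calc S.image _ = S.image id := Finset.image_congr this
    _ = S := Finset.image_id

lemma rotS_inv_rotS (hL : 0 < L) (hS : S ⊆ Finset.range L) (j : ℕ) :
    rotS L j (rotS L (L - j % L) S) = S := by
  unfold rotS
  rw [Finset.image_image]
  have : ∀ x ∈ S, ((x + (L - j % L)) % L + j) % L = x := by
    intro x hx
    have hxL : x < L := Finset.mem_range.1 (hS hx)
    rw [show ((x + (L - j % L)) % L + j) % L = x % L from rot_g2 hL x j,
      Nat.mod_eq_of_lt hxL]
  calc S.image _ = S.image id := Finset.image_congr this
    _ = S := Finset.image_id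

lemma pred_rot (hL : 0 < L) (a y : ℕ) :
    (y + (L - ((L - a % L) % L) % L)) % L = (y + a) % L := by
  have hw : a % L < L := Nat.mod_lt _ hL
  rcases Nat.eq_zero_or_pos (a % L) with h0 | hpos
  · have e1 : (L - a % L) % L = 0 := by rw [h0, Nat.sub_zero, Nat.mod_self]
    rw [e1, Nat.zero_mod, Nat.sub_zero, Nat.add_mod_right, ← Nat.add_mod_mod y a L, h0,
      Nat.add_zero]
  · have hj : (L - a % L) % L = L - a % L := Nat.mod_eq_of_lt (by omega)
    rw [hj, hj, show L - (L - a % L) = a % L by omega, Nat.add_mod_mod]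

lemma cntIn_rot (hL : 0 < L) (hS : S ⊆ Finset.range L) (a x : ℕ) :
    cntIn (rotS L ((L - a % L) % L) S) L x
      = ((Finset.range x).filter (fun y => (y + a) % L ∈ S)).card := by
  unfold cntIn
  congr 1
  apply Finset.filter_congr
  intro y _
  rw [mem_rotS hL hS, pred_rot hL a y]

lemma cntIn_shift (S : Finset ℕ) (L a x : ℕ) :
    cntIn S L (a + x) = cntIn S L a
      + ((Finset.range x).filter (fun y => (y + a) % L ∈ S)).card := by
  unfold cntIn
  rw [Finset.range_eq_Ico, ← Finset.Ico_union_Ico_eq_Ico (Nat.zero_le a) (Nat.le_add_right a x),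
    Finset.filter_union, Finset.card_union_of_disjoint
      (Finset.disjoint_filter_filter (Finset.Ico_disjoint_Ico_consecutive 0 a (a + x))),
    ← Finset.range_eq_Ico]
  congr 1
  apply Finset.card_bij' (fun y _ => y - a) (fun y _ => y + a)
  · intro y hy
    have h1 := Finset.mem_Ico.1 (Finset.mem_filter.1 hy).1
    have h2 := (Finset.mem_filter.1 hy).2
    refine Finset.mem_filter.2 ⟨Finset.mem_range.2 (by omega), ?_⟩
    rw [show y - a + a = y by omega]
    exact h2
  · intro y hy
    have h1 := Finset.mem_range.1 (Finset.mem_filter.1 hy).1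
    have h2 := (Finset.mem_filter.1 hy).2
    exact Finset.mem_filter.2 ⟨Finset.mem_Ico.2 (by omega), by rwa [Nat.add_comm y a] at h2 ⊢⟩
  · intro y hy
    have h1 := Finset.mem_Ico.1 (Finset.mem_filter.1 hy).1
    omega
  · intro y _
    omega

lemma fS_rotT (hL : 0 < L) (hS : S ⊆ Finset.range L) (t i : ℕ) :
    fS (rotS L ((L - (2 * k * t) % L) % L) S) L k i = fS S L k (t + i) - fS S L k t := by
  unfold fS
  rw [cntIn_rot hL hS]
  have h1 : 2 * k * (t + i) = 2 * k * t + 2 * k * i := by ring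
  have h2 := cntIn_shift S L (2 * k * t) (2 * k * i)
  rw [h1, h2]
  push_cast
  ring

end rot

section master

variable {L k n : ℕ}

lemma master_count (hk : 0 < k) (hn : 0 < n) (hL : L + 1 = 2 * k * n) :
    Nat.choose L (k * n) * k
      = L * ((Finset.powersetCard (k * n) (Finset.range L)).filter
          (fun S => validW S L k n 0)).card := by
  have hL0 : 0 < L := Lpos hk hn hL
  set P := Finset.powersetCard (k * n) (Finset.range L) with hP
  have row : ∀ S ∈ P, ((Finset.range L).filter
      (fun t => validW (rotS L ((L - (2 * k * t) % L) % L) S) L k n 0)).card = k := by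
    intro S hSP
    obtain ⟨hS, hSc⟩ := Finset.mem_powersetCard.1 hSP
    have e : ∀ t ∈ Finset.range L,
        (validW (rotS L ((L - (2 * k * t) % L) % L) S) L k n 0 ↔ validW S L k n t) := by
      intro t _
      have r0 : fS (rotS L ((L - (2 * k * t) % L) % L) S) L k 0 = 0 := by
        rw [fS_rotT hL0 hS]; simp
      constructor
      · intro h i h1 h2
        have h3 := h i h1 h2
        rw [r0, Nat.zero_add, fS_rotT hL0 hS] at h3
        omega
      · intro h i h1 h2
        rw [r0, Nat.zero_add, fS_rotT hL0 hS]
        have h3 := h i h1 h2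
        omega
    rw [Finset.filter_congr e]
    exact count_validW hk hn hL hS hSc
  have col : ∀ t ∈ Finset.range L, (P.filter
      (fun S => validW (rotS L ((L - (2 * k * t) % L) % L) S) L k n 0)).card
      = (P.filter (fun S => validW S L k n 0)).card := by
    intro t _
    set j := (L - (2 * k * t) % L) % L with hj
    apply Finset.card_bij' (fun S _ => rotS L j S) (fun T _ => rotS L (L - j % L) T)
    · intro S hSf
      obtain ⟨hSP, hv⟩ := Finset.mem_filter.1 hSf
      obtain ⟨hS, hSc⟩ := Finset.mem_powersetCard.1 hSP
      exact Finset.mem_filter.2 ⟨Finset.mem_powersetCard.2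
        ⟨rotS_subset hL0 j, by rw [rotS_card hL0 hS]; exact hSc⟩, hv⟩
    · intro T hTf
      obtain ⟨hTP, hv⟩ := Finset.mem_filter.1 hTf
      obtain ⟨hT, hTc⟩ := Finset.mem_powersetCard.1 hTP
      refine Finset.mem_filter.2 ⟨Finset.mem_powersetCard.2
        ⟨rotS_subset hL0 _, by rw [rotS_card hL0 hT]; exact hTc⟩, ?_⟩
      rw [rotS_inv_rotS hL0 hT j]
      exact hv
    · intro S hSf
      obtain ⟨hSP, _⟩ := Finset.mem_filter.1 hSf
      obtain ⟨hS, _⟩ := Finset.mem_powersetCard.1 hSP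
      exact rotS_rotS_inv hL0 hS j
    · intro T hTf
      obtain ⟨hTP, _⟩ := Finset.mem_filter.1 hTf
      obtain ⟨hT, _⟩ := Finset.mem_powersetCard.1 hTP
      exact rotS_inv_rotS hL0 hT j
  have lhs_eq : (∑ S ∈ P, ∑ t ∈ Finset.range L,
      if validW (rotS L ((L - (2 * k * t) % L) % L) S) L k n 0 then 1 else 0)
      = P.card * k := by
    have e : ∀ S ∈ P, (∑ t ∈ Finset.range L,
        if validW (rotS L ((L - (2 * k * t) % L) % L) S) L k n 0 then 1 else 0) = k := by
      intro S hS
      rw [← Finset.card_filter]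
      exact row S hS
    rw [Finset.sum_congr rfl e, Finset.sum_const, smul_eq_mul]
  have rhs_eq : (∑ t ∈ Finset.range L, ∑ S ∈ P,
      if validW (rotS L ((L - (2 * k * t) % L) % L) S) L k n 0 then 1 else 0)
      = L * (P.filter (fun S => validW S L k n 0)).card := by
    have e : ∀ t ∈ Finset.range L, (∑ S ∈ P,
        if validW (rotS L ((L - (2 * k * t) % L) % L) S) L k n 0 then 1 else 0)
        = (P.filter (fun S => validW S L k n 0)).card := by
      intro t ht
      rw [← Finset.card_filter]
      exact col t ht
    rw [Finset.sum_congr rfl e, Finset.sum_const, smul_eq_mul, Finset.card_range]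
  have swap : (∑ S ∈ P, ∑ t ∈ Finset.range L,
      if validW (rotS L ((L - (2 * k * t) % L) % L) S) L k n 0 then 1 else 0)
      = (∑ t ∈ Finset.range L, ∑ S ∈ P,
      if validW (rotS L ((L - (2 * k * t) % L) % L) S) L k n 0 then 1 else 0) :=
    Finset.sum_comm
  calc Nat.choose L (k * n) * k
      = P.card * k := by rw [hP, Finset.card_powersetCard, Finset.card_range]
    _ = _ := by rw [← lhs_eq, swap, rhs_eq]

end master

section bij

variable {S : Finset ℕ} {L k n m : ℕ}

lemma fS_small (hL0 : 0 < L) (hS : S ⊆ Finset.range L) {i : ℕ} (h : 2 * k * i ≤ L) :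
    fS S L k i = ((S.filter (· < 2 * k * i)).card : ℤ) - k * i := by
  have hset : (Finset.range (2 * k * i)).filter (fun y => y % L ∈ S)
      = S.filter (· < 2 * k * i) := by
    ext y
    simp only [Finset.mem_filter, Finset.mem_range]
    constructor
    · rintro ⟨h1, h2⟩
      rw [Nat.mod_eq_of_lt (lt_of_lt_of_le h1 h)] at h2
      exact ⟨h2, h1⟩
    · rintro ⟨h1, h2⟩
      exact ⟨h2, by rw [Nat.mod_eq_of_lt (lt_of_lt_of_le h2 h)]; exact h1⟩
  unfold fS cntIn
  rw [hset]

lemma fS_at_n (hk : 0 < k) (hn : 0 < n) (hL : L + 1 = 2 * k * n)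
    (hS : S ⊆ Finset.range L) (hSc : S.card = k * n) :
    fS S L k n = if 0 ∈ S then 1 else 0 := by
  have hL0 : 0 < L := Lpos hk hn hL
  have h1 : 2 * k * n = 1 + L := by omega
  unfold fS
  rw [h1, cntIn_add_L S L hL0 hS, hSc]
  have h2 : cntIn S L 1 = if 0 ∈ S then 1 else 0 := by
    unfold cntIn
    rw [Finset.range_one, Finset.filter_singleton, Nat.zero_mod]
    split <;> simp
  rw [h2]
  split <;> push_cast <;> ring

lemma validW_zero_mem (hk : 0 < k) (hn : 0 < n) (hL : L + 1 = 2 * k * n)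
    (hS : S ⊆ Finset.range L) (hSc : S.card = k * n)
    (hv : validW S L k n 0) : 0 ∈ S := by
  have h1 := hv n hn (le_refl n)
  rw [Nat.zero_add, fS_at_n hk hn hL hS hSc, fS_zero] at h1
  by_contra hc
  rw [if_neg hc] at h1
  omega

lemma insert_filter_eq (hk : 0 < k) {B : Finset ℕ} (hB : B ⊆ Finset.Icc 1 (2 * m))
    {i : ℕ} (hi : 1 ≤ i) :
    (insert 0 B).filter (· < 2 * k * i) = insert 0 (B.filter (· ≤ 2 * k * i - 1)) := by
  have hki : 0 < 2 * k * i := Nat.mul_pos (Nat.mul_pos (by omega) hk) hi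
  ext y
  simp only [Finset.mem_filter, Finset.mem_insert]
  constructor
  · rintro ⟨h1 | h1, h2⟩
    · exact Or.inl h1
    · have hy1 : 1 ≤ y := (Finset.mem_Icc.1 (hB h1)).1
      exact Or.inr ⟨h1, by omega⟩
  · rintro (h1 | ⟨h1, h2⟩)
    · exact ⟨Or.inl h1, by omega⟩
    · exact ⟨Or.inr h1, by omega⟩

lemma validW_insert_iff (hk : 0 < k) (hn : 0 < n) (hL : L + 1 = 2 * k * n)
    (hm : m + 1 = k * n) {B : Finset ℕ} (hB : B ⊆ Finset.Icc 1 (2 * m)) (hBc : B.card = m) :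
    validW (insert 0 B) L k n 0 ↔
      ∀ i, 1 ≤ i → i < n → k * i ≤ (B.filter (· ≤ 2 * k * i - 1)).card := by
  have hL0 : 0 < L := Lpos hk hn hL
  have hkn2 : 2 * k * n = 2 * (k * n) := by ring
  have hLm : L = 2 * m + 1 := by omega
  have h0B : 0 ∉ B := fun h => by have := (Finset.mem_Icc.1 (hB h)).1; omega
  have hS : insert 0 B ⊆ Finset.range L := by
    intro y hy
    rcases Finset.mem_insert.1 hy with h | h
    · exact Finset.mem_range.2 (by omega)
    · have := (Finset.mem_Icc.1 (hB h)).2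
      exact Finset.mem_range.2 (by omega)
  have hSc : (insert 0 B).card = k * n := by
    rw [Finset.card_insert_of_notMem h0B, hBc]
    exact hm
  have key : ∀ i, 1 ≤ i → i < n →
      fS (insert 0 B) L k i = 1 + ((B.filter (· ≤ 2 * k * i - 1)).card : ℤ) - k * i := by
    intro i h1 h2
    have hle : 2 * k * i ≤ L := by nlinarith
    rw [fS_small hL0 hS hle, insert_filter_eq hk hB h1,
      Finset.card_insert_of_notMem (fun h => h0B (Finset.mem_filter.1 h).1)]
    push_cast
    ring
  constructor
  · intro hv i h1 h2
    have h3 := hv i h1 (by omega)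
    rw [Nat.zero_add, fS_zero, key i h1 h2] at h3
    have : (k : ℤ) * i ≤ ((B.filter (· ≤ 2 * k * i - 1)).card : ℤ) := by omega
    exact_mod_cast this
  · intro hc i h1 h2
    rw [Nat.zero_add, fS_zero]
    rcases Nat.eq_or_lt_of_le h2 with h | h
    · rw [h, fS_at_n hk hn hL hS hSc, if_pos (Finset.mem_insert_self 0 B)]
      omega
    · have h3 := hc i h1 (by omega)
      rw [key i h1 (by omega)]
      have : ((k : ℤ)) * i ≤ ((B.filter (· ≤ 2 * k * i - 1)).card : ℤ) := by exact_mod_cast h3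
      omega

lemma B_count (hk : 0 < k) (hn : 0 < n) (hL : L + 1 = 2 * k * n) (hm : m + 1 = k * n) :
    (((Finset.Icc 1 (2 * m)).powerset).filter
      (fun B => B.card = m ∧ ∀ i, 1 ≤ i → i < n →
        k * i ≤ (B.filter (· ≤ 2 * k * i - 1)).card)).card
    = ((Finset.powersetCard (k * n) (Finset.range L)).filter
        (fun S => validW S L k n 0)).card := by
  have hL0 : 0 < L := Lpos hk hn hL
  have hkn2 : 2 * k * n = 2 * (k * n) := by ring
  have hLm : L = 2 * m + 1 := by omega
  refine Finset.card_bij' (fun B _ => insert 0 B) (fun T _ => T.erase 0) ?_ ?_ ?_ ?_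
  · intro B hBf
    obtain ⟨hBP, hBc, hecp⟩ := Finset.mem_filter.1 hBf
    have hB := Finset.mem_powerset.1 hBP
    have h0B : 0 ∉ B := fun h => by have := (Finset.mem_Icc.1 (hB h)).1; omega
    refine Finset.mem_filter.2 ⟨Finset.mem_powersetCard.2 ⟨?_, ?_⟩, ?_⟩
    · intro y hy
      rcases Finset.mem_insert.1 hy with h | h
      · exact Finset.mem_range.2 (by omega)
      · have := (Finset.mem_Icc.1 (hB h)).2
        exact Finset.mem_range.2 (by omega)
    · rw [Finset.card_insert_of_notMem h0B, hBc]; exact hm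
    · exact (validW_insert_iff hk hn hL hm hB hBc).2 hecp
  · intro T hTf
    obtain ⟨hTP, hv⟩ := Finset.mem_filter.1 hTf
    obtain ⟨hT, hTc⟩ := Finset.mem_powersetCard.1 hTP
    have h0T : 0 ∈ T := validW_zero_mem hk hn hL hT hTc hv
    have hBsub : T.erase 0 ⊆ Finset.Icc 1 (2 * m) := by
      intro y hy
      have h1 := Finset.mem_of_mem_erase hy
      have h2 := Finset.ne_of_mem_erase hy
      have h3 := Finset.mem_range.1 (hT h1)
      exact Finset.mem_Icc.2 ⟨by omega, by omega⟩
    have hBc : (T.erase 0).card = m := by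
      rw [Finset.card_erase_of_mem h0T, hTc]; omega
    refine Finset.mem_filter.2 ⟨Finset.mem_powerset.2 hBsub, hBc, ?_⟩
    have := (validW_insert_iff hk hn hL hm hBsub hBc).1
      (by rw [Finset.insert_erase h0T]; exact hv)
    exact this
  · intro B hBf
    obtain ⟨hBP, _, _⟩ := Finset.mem_filter.1 hBf
    have hB := Finset.mem_powerset.1 hBP
    have h0B : 0 ∉ B := fun h => by have := (Finset.mem_Icc.1 (hB h)).1; omega
    exact Finset.erase_insert h0B
  · intro T hTf
    obtain ⟨hTP, hv⟩ := Finset.mem_filter.1 hTf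
    obtain ⟨hT, hTc⟩ := Finset.mem_powersetCard.1 hTP
    exact Finset.insert_erase (validW_zero_mem hk hn hL hT hTc hv)

end bij

section boundcnt

variable {k n : ℕ}

lemma boundCnt_init (hk : 0 < k) {p : ℕ} (hpk : p ≤ k - 1) : boundCnt k n p = 0 := by
  unfold boundCnt
  rw [Finset.card_eq_zero]
  apply Finset.filter_false_of_mem
  intro q hq
  have h1 := Finset.mem_Icc.1 hq
  rintro (⟨h2, _, _⟩ | h2) <;> omega

lemma boundCnt_le_mid (hk : 0 < k) {p i r : ℕ} (hpw : p = k + (2 * k * i + r))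
    (hr2k : r < 2 * k) (hpK : p ≤ k - 1 + 2 * k * (n - 1)) :
    boundCnt k n p ≤ k * i + min (r + 1) k := by
  have h2k : 0 < 2 * k := by omega
  set w := 2 * k * i + r with hwdef
  have hdm : 2 * k * i + r = w := rfl
  have hieq : w / (2 * k) = i := by
    rw [hwdef, Nat.mul_add_div h2k, Nat.div_eq_of_lt hr2k, Nat.add_zero]
  set T := ((Finset.range i ×ˢ Finset.range k) ∪
    ({i} ×ˢ Finset.range (min (r + 1) k))).image
      (fun pr : ℕ × ℕ => k + 2 * k * pr.1 + pr.2) with hT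
  have hsub : ((Finset.Icc 1 p).filter (fun q =>
      (k - 1 < q ∧ q ≤ k - 1 + 2 * k * (n - 1) ∧ (q - k) % (2 * k) < k) ∨
        k - 1 + 2 * k * (n - 1) < q)) ⊆ T := by
    intro q hq
    obtain ⟨hq1, hq2⟩ := Finset.mem_filter.1 hq
    have hq3 := Finset.mem_Icc.1 hq1
    rcases hq2 with ⟨ha, hb, hc⟩ | hd
    · set v := q - k with hv
      have hqk : q = k + v := by omega
      have hvw : v ≤ w := by omega
      set j := v / (2 * k) with hj
      set s := v % (2 * k) with hs
      have hdmv : 2 * k * j + s = v := Nat.div_add_mod v (2 * k)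
      have hsk : s < k := hc
      have hji : j ≤ i := by
        rw [← hieq]
        exact Nat.div_le_div_right hvw
      apply Finset.mem_image.2
      refine ⟨(j, s), ?_, by simp only; omega⟩
      rcases Nat.eq_or_lt_of_le hji with he | hlt
      · apply Finset.mem_union_right
        rw [Finset.mem_product]
        refine ⟨Finset.mem_singleton.2 he, Finset.mem_range.2 ?_⟩
        have : s ≤ r := by
          rw [he] at hdmv
          omega
        omega
      · apply Finset.mem_union_left
        rw [Finset.mem_product]
        exact ⟨Finset.mem_range.2 hlt, Finset.mem_range.2 hsk⟩
    · omega
  calc boundCnt k n p ≤ T.card := Finset.card_le_card hsub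
    _ ≤ ((Finset.range i ×ˢ Finset.range k) ∪
        ({i} ×ˢ Finset.range (min (r + 1) k))).card := Finset.card_image_le
    _ ≤ (Finset.range i ×ˢ Finset.range k).card
        + ({i} ×ˢ Finset.range (min (r + 1) k)).card := Finset.card_union_le _ _
    _ ≤ k * i + min (r + 1) k := by
      rw [Finset.card_product, Finset.card_product]
      simp [Nat.mul_comm]

lemma boundCnt_le_tail (hk : 0 < k) {p : ℕ} :
    boundCnt k n p ≤ (n - 1) * k + (p - (k - 1 + 2 * k * (n - 1))) := by
  have h2k : 0 < 2 * k := by omega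
  set K := k - 1 + 2 * k * (n - 1) with hK
  set T := ((Finset.range (n - 1) ×ˢ Finset.range k).image
      (fun pr : ℕ × ℕ => k + 2 * k * pr.1 + pr.2)) ∪ Finset.Ioc K p with hT
  have hsub : ((Finset.Icc 1 p).filter (fun q =>
      (k - 1 < q ∧ q ≤ K ∧ (q - k) % (2 * k) < k) ∨ K < q)) ⊆ T := by
    intro q hq
    obtain ⟨hq1, hq2⟩ := Finset.mem_filter.1 hq
    have hq3 := Finset.mem_Icc.1 hq1
    rcases hq2 with ⟨ha, hb, hc⟩ | hd
    · apply Finset.mem_union_left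
      set v := q - k with hv
      have hqk : q = k + v := by omega
      set j := v / (2 * k) with hj
      set s := v % (2 * k) with hs
      have hdmv : 2 * k * j + s = v := Nat.div_add_mod v (2 * k)
      have hvK : v < 2 * k * (n - 1) := by omega
      have hjn : j < n - 1 := by
        rw [hj, Nat.div_lt_iff_lt_mul h2k]
        have e : (n - 1) * (2 * k) = 2 * k * (n - 1) := Nat.mul_comm _ _
        omega
      apply Finset.mem_image.2
      exact ⟨(j, s), Finset.mem_product.2 ⟨Finset.mem_range.2 hjn, Finset.mem_range.2 hc⟩,
        by simp only; omega⟩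
    · exact Finset.mem_union_right _ (Finset.mem_Ioc.2 ⟨hd, hq3.2⟩)
  calc boundCnt k n p ≤ T.card := Finset.card_le_card hsub
    _ ≤ ((Finset.range (n - 1) ×ˢ Finset.range k).image
        (fun pr : ℕ × ℕ => k + 2 * k * pr.1 + pr.2)).card + (Finset.Ioc K p).card :=
      Finset.card_union_le _ _
    _ ≤ (n - 1) * k + (p - K) := by
      have h1 := Finset.card_image_le (s := Finset.range (n - 1) ×ˢ Finset.range k)
        (f := fun pr : ℕ × ℕ => k + 2 * k * pr.1 + pr.2)
      rw [Finset.card_product, Finset.card_range, Finset.card_range] at h1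
      rw [Nat.card_Ioc]
      omega

lemma boundCnt_ge_checkpoint (hk : 0 < k) {i : ℕ} (h1 : 1 ≤ i) (h2 : i < n) :
    k * i ≤ boundCnt k n (2 * k * i - 1) := by
  have h2k : 0 < 2 * k := by omega
  have hki : 2 * k ≤ 2 * k * i := Nat.le_mul_of_pos_right _ h1
  have hin : 2 * k * i ≤ 2 * k * (n - 1) := Nat.mul_le_mul_left _ (by omega)
  have himg : ((Finset.range i ×ˢ Finset.range k).image
      (fun pr : ℕ × ℕ => k + 2 * k * pr.1 + pr.2)) ⊆
      ((Finset.Icc 1 (2 * k * i - 1)).filter (fun q =>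
        (k - 1 < q ∧ q ≤ k - 1 + 2 * k * (n - 1) ∧ (q - k) % (2 * k) < k) ∨
          k - 1 + 2 * k * (n - 1) < q)) := by
    intro q hq
    obtain ⟨⟨j, s⟩, hjs, rfl⟩ := Finset.mem_image.1 hq
    obtain ⟨hj, hs⟩ := Finset.mem_product.1 hjs
    have hj' := Finset.mem_range.1 hj
    have hs' := Finset.mem_range.1 hs
    have hjle : 2 * k * (j + 1) ≤ 2 * k * i := Nat.mul_le_mul_left _ (by omega)
    have hexp : 2 * k * (j + 1) = 2 * k * j + 2 * k := by ring
    show k + 2 * k * j + s ∈ _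
    refine Finset.mem_filter.2 ⟨Finset.mem_Icc.2 ⟨by omega, by omega⟩, Or.inl ⟨by omega, by omega, ?_⟩⟩
    rw [show k + 2 * k * j + s - k = 2 * k * j + s by omega, Nat.mul_add_mod,
      Nat.mod_eq_of_lt (by omega)]
    omega
  have hinj : Set.InjOn (fun pr : ℕ × ℕ => k + 2 * k * pr.1 + pr.2)
      ↑(Finset.range i ×ˢ Finset.range k) := by
    rintro ⟨j1, s1⟩ hm1 ⟨j2, s2⟩ hm2 he
    obtain ⟨hj1, hs1⟩ := Finset.mem_product.1 (by exact_mod_cast hm1)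
    obtain ⟨hj2, hs2⟩ := Finset.mem_product.1 (by exact_mod_cast hm2)
    have hs1' := Finset.mem_range.1 hs1
    have hs2' := Finset.mem_range.1 hs2
    simp only at he
    rcases lt_trichotomy j1 j2 with h | h | h
    · have e1 : 2 * k * (j1 + 1) ≤ 2 * k * j2 := Nat.mul_le_mul_left _ (by omega)
      have e2 : 2 * k * (j1 + 1) = 2 * k * j1 + 2 * k := by ring
      omega
    · have : s1 = s2 := by
        subst h
        omega
      simp [h, this]
    · have e1 : 2 * k * (j2 + 1) ≤ 2 * k * j1 := Nat.mul_le_mul_left _ (by omega)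
      have e2 : 2 * k * (j2 + 1) = 2 * k * j2 + 2 * k := by ring
      omega
  calc k * i = ((Finset.range i ×ˢ Finset.range k).image
      (fun pr : ℕ × ℕ => k + 2 * k * pr.1 + pr.2)).card := by
        rw [Finset.card_image_of_injOn hinj, Finset.card_product, Finset.card_range,
          Finset.card_range, Nat.mul_comm]
    _ ≤ boundCnt k n (2 * k * i - 1) := Finset.card_le_card himg

end boundcnt

section cond

variable {k n m : ℕ}

lemma cnt_mono {B : Finset ℕ} {p q : ℕ} (h : p ≤ q) :
    (B.filter (· ≤ p)).card ≤ (B.filter (· ≤ q)).card :=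
  Finset.card_le_card (fun x hx => Finset.mem_filter.2
    ⟨(Finset.mem_filter.1 hx).1, le_trans (Finset.mem_filter.1 hx).2 h⟩)

lemma cnt_lip {B : Finset ℕ} {p q : ℕ} (h : p ≤ q) :
    (B.filter (· ≤ q)).card ≤ (B.filter (· ≤ p)).card + (q - p) := by
  have hsub : B.filter (· ≤ q) ⊆ B.filter (· ≤ p) ∪ Finset.Ioc p q := by
    intro x hx
    obtain ⟨h1, h2⟩ := Finset.mem_filter.1 hx
    rcases le_or_gt x p with h3 | h3
    · exact Finset.mem_union_left _ (Finset.mem_filter.2 ⟨h1, h3⟩)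
    · exact Finset.mem_union_right _ (Finset.mem_Ioc.2 ⟨h3, h2⟩)
  calc (B.filter (· ≤ q)).card ≤ (B.filter (· ≤ p) ∪ Finset.Ioc p q).card :=
      Finset.card_le_card hsub
    _ ≤ (B.filter (· ≤ p)).card + (Finset.Ioc p q).card := Finset.card_union_le _ _
    _ = (B.filter (· ≤ p)).card + (q - p) := by rw [Nat.card_Ioc]

lemma cond_iff (hk : 0 < k) (hn : 0 < n) (hm : m + 1 = k * n) {B : Finset ℕ}
    (hB : B ⊆ Finset.Icc 1 (2 * m)) (hBc : B.card = m) :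
    (∀ p ≤ 2 * m, boundCnt k n p ≤ (B.filter (· ≤ p)).card)
    ↔ (∀ i, 1 ≤ i → i < n → k * i ≤ (B.filter (· ≤ 2 * k * i - 1)).card) := by
  have htot : (B.filter (· ≤ 2 * m)).card = m := by
    rw [Finset.filter_true_of_mem, hBc]
    intro x hx; exact (Finset.mem_Icc.1 (hB hx)).2
  constructor
  · intro h i h1 h2
    have e1 : 2 * k * i ≤ 2 * k * (n - 1) := Nat.mul_le_mul_left _ (by omega)
    have e2 : 2 * k * (n - 1) + 2 * k = 2 * k * n := by rw [← Nat.mul_succ]; congr 1; omega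
    have e3 : 2 * (k * n) = 2 * k * n := by ring
    exact le_trans (boundCnt_ge_checkpoint hk h1 h2) (h (2 * k * i - 1) (by omega))
  · intro hcp p hp
    rcases le_or_gt p (k - 1) with hc1 | hc1
    · rw [boundCnt_init hk hc1]
      exact Nat.zero_le _
    rcases le_or_gt p (k - 1 + 2 * k * (n - 1)) with hc2 | hc2
    · -- middle region
      have hpk : k ≤ p := by omega
      have h2k : 0 < 2 * k := by omega
      obtain ⟨i, r, hr2k, hpw⟩ : ∃ i r, r < 2 * k ∧ p = k + (2 * k * i + r) :=
        ⟨(p - k) / (2 * k), (p - k) % (2 * k), Nat.mod_lt _ h2k, by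
          have := Nat.div_add_mod (p - k) (2 * k)
          omega⟩
      have hin : i + 1 < n := by
        have hb : 2 * k * i < 2 * k * (n - 1) := by omega
        have h3 : i < n - 1 := Nat.lt_of_mul_lt_mul_left hb
        omega
      have hbound := boundCnt_le_mid (n := n) hk hpw hr2k hc2
      have hche := hcp (i + 1) (by omega) hin
      have hexp : 2 * k * (i + 1) = 2 * k * i + 2 * k := by ring
      have hkexp : k * (i + 1) = k * i + k := by ring
      rcases Nat.lt_or_ge r k with hrk | hrk
      · have hcle : p ≤ 2 * k * (i + 1) - 1 := by omega
        have hl := cnt_lip (B := B) hcle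
        have hmin : min (r + 1) k = r + 1 := by omega
        rw [hmin] at hbound
        omega
      · have hcle : 2 * k * (i + 1) - 1 ≤ p := by omega
        have hmo := cnt_mono (B := B) hcle
        have hmin : min (r + 1) k = k := by omega
        rw [hmin] at hbound
        omega
    · -- tail region
      have hbound := boundCnt_le_tail (n := n) (p := p) hk
      have hl := cnt_lip (B := B) hp
      have e1 : (n - 1) * k + k = n * k := by rw [← Nat.succ_mul]; congr 1; omega
      have e2 : 2 * k * (n - 1) + 2 * k = 2 * k * n := by rw [← Nat.mul_succ]; congr 1; omega
      have e3 : 2 * (k * n) = 2 * k * n := by ring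
      have e4 : n * k = k * n := Nat.mul_comm n k
      omega

end cond

/-- **The β-invariant path count (Theorem `thm:betaud`).**  For positive integers
`k` and `n`, the number of paths from `(0,0)` to `(2(nk-1), 0)` using steps
`U = (1,1)` and `D = (1,-1)` (encoded by the set `B ⊆ [1, 2(nk-1)]` of positions of
Up steps, with `|B| = nk - 1`) that never go below the bounding path
`D^{k-1} (U^k D^k)^{n-1} U^{k-1}` (i.e. every prefix of the path contains at least
as many Up steps as the corresponding prefix of the bounding path) equals
`k * C_{nk-1}`; multiplying through by `nk`, the count times `nk` equals
`k * (2(nk-1) choose nk-1)`. -/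
theorem stmt19 (k n : ℕ) (hk : 0 < k) (hn : 0 < n) :
    Nat.card {B : Finset ℕ // B ⊆ Finset.Icc 1 (2 * (n * k - 1)) ∧ B.card = n * k - 1 ∧
        ∀ p ≤ 2 * (n * k - 1), boundCnt k n p ≤ (B.filter (· ≤ p)).card} * (n * k)
      = k * Nat.choose (2 * (n * k - 1)) (n * k - 1) := by
  set m := n * k - 1 with hmdef
  have hnk0 : 0 < n * k := Nat.mul_pos hn hk
  have hcomm : n * k = k * n := Nat.mul_comm n k
  have hm : m + 1 = k * n := by omega
  set L := 2 * m + 1 with hLdef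
  have hL : L + 1 = 2 * k * n := by
    have e3 : 2 * (k * n) = 2 * k * n := by ring
    omega
  have hsetcard : Nat.card {B : Finset ℕ // B ⊆ Finset.Icc 1 (2 * m) ∧ B.card = m ∧
      ∀ p ≤ 2 * m, boundCnt k n p ≤ (B.filter (· ≤ p)).card}
      = (((Finset.Icc 1 (2 * m)).powerset).filter (fun B => B.card = m ∧
          ∀ p ≤ 2 * m, boundCnt k n p ≤ (B.filter (· ≤ p)).card)).card := by
    rw [Nat.card_congr (Equiv.subtypeEquivRight ?_), Nat.card_eq_finsetCard]
    intro B
    simp only [Finset.mem_filter, Finset.mem_powerset, and_assoc]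
  have hfilter_eq : (((Finset.Icc 1 (2 * m)).powerset).filter (fun B => B.card = m ∧
          ∀ p ≤ 2 * m, boundCnt k n p ≤ (B.filter (· ≤ p)).card)).card
      = (((Finset.Icc 1 (2 * m)).powerset).filter (fun B => B.card = m ∧
          ∀ i, 1 ≤ i → i < n → k * i ≤ (B.filter (· ≤ 2 * k * i - 1)).card)).card := by
    congr 1
    apply Finset.filter_congr
    intro B hBp
    have hB := Finset.mem_powerset.1 hBp
    constructor
    · rintro ⟨h1, h2⟩
      exact ⟨h1, (cond_iff hk hn hm hB h1).1 h2⟩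
    · rintro ⟨h1, h2⟩
      exact ⟨h1, (cond_iff hk hn hm hB h1).2 h2⟩
  have hbc := B_count (L := L) (m := m) hk hn hL hm
  have hmc := master_count (L := L) hk hn hL
  rw [hsetcard, hfilter_eq]
  set A := (((Finset.Icc 1 (2 * m)).powerset).filter (fun B => B.card = m ∧
      ∀ i, 1 ≤ i → i < n → k * i ≤ (B.filter (· ≤ 2 * k * i - 1)).card)).card with hA
  rw [← hbc] at hmc
  -- hmc : Nat.choose L (k * n) * k = L * A
  have key := Nat.add_one_mul_choose_eq (2 * m) m
  -- key : (2*m+1) * choose (2*m) m = choose (2*m+1) (m+1) * (m+1)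
  have hL0 : 0 < L := by omega
  apply Nat.eq_of_mul_eq_mul_left hL0
  calc L * (A * (n * k)) = (L * A) * (n * k) := by ring
    _ = (Nat.choose L (k * n) * k) * (n * k) := by rw [hmc]
    _ = k * (Nat.choose L (m + 1) * (m + 1)) := by
        have hnkm : n * k = m + 1 := by omega
        rw [← hm, hnkm]
        ring
    _ = k * (L * Nat.choose (2 * m) m) := by
        rw [hLdef]
        rw [show (2 * m + 1) = (2 * m).succ from rfl, show m + 1 = m.succ from rfl, key]
    _ = L * (k * Nat.choose (2 * m) m) := by ring
end
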